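/- arXiv:2405.15816 — 6 statements merged into one kernel-verified Lean document; each statement's English description precedes it below -/
import Mathlib

section
/- For every x ∈ E and every λ ≥ 2 l_{f,1}/μ_g, the value function L*_λ is differentiable at x and its gradient equals ∇ L*_λ(x) = ∇_x f(x, y*_λ(x)) + λ ( ∇_x g(x, y*_λ(x)) − ∇_x g(x, y*(x)) ); in particular ∇ L*_λ(x) is computable from first-order derivatives of f and g only. -/
open Function Set Asymptotics ContinuousLinearMap

section aux

/-- Sharp descent lemma: Lipschitz derivative gives quadratic Taylor bound. -/
lemma taylor_quad {F : Type*} [NormedAddCommGroup F] [NormedSpace ℝ F]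
    {φ : F → ℝ} {L : ℝ} (hφ : Differentiable ℝ φ)
    (hlip : ∀ p q, ‖fderiv ℝ φ p - fderiv ℝ φ q‖ ≤ L * ‖p - q‖)
    (p q : F) :
    |φ q - φ p - fderiv ℝ φ p (q - p)| ≤ L / 2 * ‖q - p‖ ^ 2 := by
  set u := q - p with hu
  set A : ℝ := fderiv ℝ φ p u with hA
  set c : ℝ := L / 2 * ‖u‖ ^ 2 with hc
  have key : ∀ σ : ℝ, |σ| = 1 → σ * (φ q - φ p - A) ≤ c := by
    intro σ hσ
    set w : ℝ → ℝ := fun s => σ * (φ (p + s • u) - φ p - s * A) - c * s ^ 2 with hw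
    have hderiv : ∀ s : ℝ, HasDerivAt w
        (σ * (fderiv ℝ φ (p + s • u) u - A) - c * (2 * s)) s := by
      intro s
      have hcin : HasDerivAt (fun s : ℝ => p + s • u) u s := by
        simpa using ((hasDerivAt_id s).smul_const u).const_add p
      have h1 : HasDerivAt (fun s : ℝ => φ (p + s • u)) (fderiv ℝ φ (p + s • u) u) s :=
        (hφ (p + s • u)).hasFDerivAt.comp_hasDerivAt s hcin
      have h2 : HasDerivAt (fun s : ℝ => φ (p + s • u) - φ p - s * A)
          (fderiv ℝ φ (p + s • u) u - A) s := by
        have := (h1.sub_const (φ p)).sub ((hasDerivAt_id' s).mul_const A)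
        rwa [one_mul] at this
      have h3 : HasDerivAt (fun s : ℝ => c * s ^ 2) (c * (2 * s)) s := by
        simpa using (hasDerivAt_pow 2 s).const_mul c
      exact (h2.const_mul σ).sub h3
    have hdiff : Differentiable ℝ w := fun s => (hderiv s).differentiableAt
    have hanti : AntitoneOn w (Icc (0:ℝ) 1) := by
      apply antitoneOn_of_deriv_nonpos (convex_Icc (0:ℝ) 1)
        (hdiff.continuous.continuousOn) (hdiff.differentiableOn)
      intro s hs
      rw [interior_Icc] at hs
      rw [(hderiv s).deriv]
      have hspos : 0 < s := hs.1
      have hb : |σ * (fderiv ℝ φ (p + s • u) u - A)| ≤ L * s * ‖u‖ ^ 2 := by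
        rw [abs_mul, hσ, one_mul]
        have hle : |(fderiv ℝ φ (p + s • u) - fderiv ℝ φ p) u| ≤
            ‖fderiv ℝ φ (p + s • u) - fderiv ℝ φ p‖ * ‖u‖ :=
          (fderiv ℝ φ (p + s • u) - fderiv ℝ φ p).le_opNorm u
        have h2 : ‖fderiv ℝ φ (p + s • u) - fderiv ℝ φ p‖ ≤ L * (s * ‖u‖) := by
          have := hlip (p + s • u) p
          simpa [norm_smul, abs_of_pos hspos] using this
        calc |fderiv ℝ φ (p + s • u) u - A|
            = |(fderiv ℝ φ (p + s • u) - fderiv ℝ φ p) u| := by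
              simp [hA, ContinuousLinearMap.sub_apply]
          _ ≤ ‖fderiv ℝ φ (p + s • u) - fderiv ℝ φ p‖ * ‖u‖ := hle
          _ ≤ L * (s * ‖u‖) * ‖u‖ := by
              apply mul_le_mul_of_nonneg_right h2 (norm_nonneg u)
          _ = L * s * ‖u‖ ^ 2 := by ring
      have := (abs_le.1 hb).2
      have hcb : c * (2 * s) = L * s * ‖u‖ ^ 2 := by rw [hc]; ring
      nlinarith [abs_nonneg (σ * (fderiv ℝ φ (p + s • u) u - A))]
    have h01 : w 1 ≤ w 0 :=
      hanti (by constructor <;> norm_num) (by constructor <;> norm_num) zero_le_one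
    have hq : p + u = q := by rw [hu]; abel
    have hw1 : w 1 = σ * (φ q - φ p - A) - c := by simp [hw, hq]
    have hw0 : w 0 = 0 := by simp [hw]
    linarith [h01, hw1.symm.le]
  have h1 := key 1 (by norm_num)
  have h2 := key (-1) (by norm_num)
  rw [one_mul] at h1
  rw [neg_one_mul] at h2
  exact abs_le.2 ⟨by linarith, h1⟩

variable {E H : Type*} [NormedAddCommGroup E] [NormedSpace ℝ E]
  [NormedAddCommGroup H] [NormedSpace ℝ H]

lemma hasFDerivAt_partial_x {f : E → H → ℝ} (hf : Differentiable ℝ (uncurry f)) (x : E) (y : H) :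
    HasFDerivAt (fun x' => f x' y)
      ((fderiv ℝ (uncurry f) (x, y)).comp (inl ℝ E H)) x :=
  (hf (x, y)).hasFDerivAt.comp (f := fun e : E => (e, y)) x (hasFDerivAt_prodMk_left x y)

lemma hasFDerivAt_partial_y {f : E → H → ℝ} (hf : Differentiable ℝ (uncurry f)) (x : E) (y : H) :
    HasFDerivAt (f x) ((fderiv ℝ (uncurry f) (x, y)).comp (inr ℝ E H)) y :=
  (hf (x, y)).hasFDerivAt.comp (f := fun e : H => (x, e)) y (hasFDerivAt_prodMk_right x y)

/-- Lipschitz bound for the partial-in-y derivative. -/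
lemma partial_y_lip {f : E → H → ℝ} {L : ℝ} (hf : Differentiable ℝ (uncurry f))
    (hlip : ∀ p q : E × H, ‖fderiv ℝ (uncurry f) p - fderiv ℝ (uncurry f) q‖ ≤ L * ‖p - q‖)
    (x : E) (y y' : H) :
    ‖fderiv ℝ (f x) y - fderiv ℝ (f x) y'‖ ≤ L * ‖y - y'‖ := by
  rw [(hasFDerivAt_partial_y hf x y).fderiv, (hasFDerivAt_partial_y hf x y').fderiv]
  rw [← ContinuousLinearMap.sub_comp]
  calc ‖(fderiv ℝ (uncurry f) (x, y) - fderiv ℝ (uncurry f) (x, y')).comp (inr ℝ E H)‖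
      ≤ ‖fderiv ℝ (uncurry f) (x, y) - fderiv ℝ (uncurry f) (x, y')‖ * ‖inr ℝ E H‖ :=
        ContinuousLinearMap.opNorm_comp_le _ _
    _ ≤ ‖fderiv ℝ (uncurry f) (x, y) - fderiv ℝ (uncurry f) (x, y')‖ * 1 := by
        have hinr : ‖inr ℝ E H‖ ≤ 1 :=
          ContinuousLinearMap.opNorm_le_bound _ zero_le_one
            (fun v => by simp [Prod.norm_def])
        exact mul_le_mul_of_nonneg_left hinr (norm_nonneg _)
    _ ≤ L * ‖y - y'‖ := by
        rw [mul_one]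
        have := hlip (x, y) (x, y')
        simpa [Prod.norm_def] using this

/-- Midpoint inequality + minimizer ⇒ quadratic growth. -/
lemma growth_of_midpoint {φ : H → ℝ} {c : ℝ}
    (hmid : ∀ a b : H, φ ((1/2 : ℝ) • a + (1/2 : ℝ) • b) ≤ (φ a + φ b) / 2 - c * ‖a - b‖ ^ 2)
    {y' : H} (hmin : IsMinOn φ Set.univ y') (a : H) :
    φ y' + 2 * c * ‖a - y'‖ ^ 2 ≤ φ a := by
  have h1 := hmid a y'
  have h2 : φ y' ≤ φ ((1/2 : ℝ) • a + (1/2 : ℝ) • y') := (isMinOn_univ_iff.1 hmin) _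
  linarith

/-- Midpoint semiconvexity for a function with Lipschitz derivative. -/
lemma midpoint_semiconvex {φ : H → ℝ} {L : ℝ} (hφ : Differentiable ℝ φ)
    (hlip : ∀ p q, ‖fderiv ℝ φ p - fderiv ℝ φ q‖ ≤ L * ‖p - q‖) (a b : H) :
    φ ((1/2 : ℝ) • a + (1/2 : ℝ) • b) ≤ (φ a + φ b) / 2 + L / 8 * ‖a - b‖ ^ 2 := by
  obtain ⟨c, hc⟩ : ∃ c, c = (1/2 : ℝ) • a + (1/2 : ℝ) • b := ⟨_, rfl⟩
  rw [← hc]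
  have t1 := taylor_quad hφ hlip c a
  have t2 := taylor_quad hφ hlip c b
  have hsum : (a - c) + (b - c) = 0 := by rw [hc]; module
  have hD : fderiv ℝ φ c (a - c) + fderiv ℝ φ c (b - c) = 0 := by
    rw [← map_add, hsum, map_zero]
  have hna : ‖a - c‖ ^ 2 = 1/4 * ‖a - b‖ ^ 2 := by
    have e : a - c = (1/2 : ℝ) • (a - b) := by rw [hc]; module
    rw [e, norm_smul, mul_pow, Real.norm_eq_abs, sq_abs]
    norm_num
  have hnb : ‖b - c‖ ^ 2 = 1/4 * ‖a - b‖ ^ 2 := by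
    have e : b - c = (-(1/2) : ℝ) • (a - b) := by rw [hc]; module
    rw [e, norm_smul, mul_pow, Real.norm_eq_abs, sq_abs]
    norm_num
  have k1 := (abs_le.1 t1).1
  have k2 := (abs_le.1 t2).1
  rw [hna] at k1
  rw [hnb] at k2
  linarith [k1, k2, hD]

/-- Pure arithmetic core of the Danskin sandwich estimate. -/
lemma danskin_est (L μ a r s D K C₂ m m' w u v : ℝ)
    (hμ : 0 < μ) (hL : 0 ≤ L) (ha0 : 0 ≤ a)
    (hr0 : 0 ≤ r) (hr1 : r ≤ 1) (hs0 : 0 ≤ s) (hss : s * s = r) (hD0 : 0 ≤ D)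
    (T1 : |w - m - v| ≤ L / 2 * r ^ 2)
    (T2 : |m' - u - v| ≤ L / 2 * r ^ 2 + L * D * r)
    (G1 : m + μ * D ^ 2 ≤ u)
    (G2 : m' + μ * D ^ 2 ≤ w)
    (hmin1 : m' ≤ w) (hmin2 : m ≤ u)
    (hAop : |v| ≤ a * r)
    (hK : K = (a + L) / μ + 1)
    (hC₂ : C₂ = L / 2 + L * K) :
    |m' - m - v| ≤ C₂ * s * r := by
  have hK1 : 1 ≤ K := by
    have h0 : 0 ≤ (a + L) / μ := by positivity
    rw [hK]; linarith
  have hs1 : s ≤ 1 := by nlinarith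
  have hrs : r ≤ s := by
    calc r = s * s := hss.symm
      _ ≤ 1 * s := mul_le_mul_of_nonneg_right hs1 hs0
      _ = s := one_mul s
  have hr2 : 0 ≤ r - r ^ 2 := by nlinarith [mul_nonneg hr0 (by linarith : (0:ℝ) ≤ 1 - r)]
  have hLr2 : L * r ^ 2 ≤ L * r := by nlinarith [mul_nonneg hL hr2]
  have hkey : 2 * (μ * D ^ 2) ≤ 2 * (a * r) + L * r + L * D * r := by
    have k1 := (abs_le.1 T1).2
    have k2 := (abs_le.1 T2).1
    have k3 := abs_le.1 hAop
    linarith [G1, G2, k1, k2, k3.1, k3.2, hLr2]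
  have hDK : D ≤ K * s := by
    rcases le_or_gt D s with hc | hc
    · exact hc.trans (le_mul_of_one_le_left hs0 hK1)
    · have hDpos : 0 < D := lt_of_le_of_lt hs0 hc
      have hrsD : r ≤ s * D := by
        calc r = s * s := hss.symm
          _ ≤ s * D := mul_le_mul_of_nonneg_left hc.le hs0
      have hKmul : μ * (K - 1) = a + L := by rw [hK]; field_simp; ring
      have hstep : (μ * D) * D ≤ (μ * D) * ((K - 1) * s) := by
        have expand : (μ * D) * ((K - 1) * s) = (μ * (K - 1)) * (s * D) := by ring
        rw [expand, hKmul]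
        have e1 : (2 * a + L) * r ≤ (2 * a + L) * (s * D) :=
          mul_le_mul_of_nonneg_left hrsD (by positivity)
        have e2 : (L * D) * r ≤ (L * D) * s :=
          mul_le_mul_of_nonneg_left hrs (by positivity)
        linarith [hkey, e1, e2]
      have hμD : 0 < μ * D := mul_pos hμ hDpos
      have hfin := le_of_mul_le_mul_left hstep hμD
      have hl : (K - 1) * s ≤ K * s := by
        have e : K * s - (K - 1) * s = s := by ring
        linarith [hs0, e]
      linarith [hfin, hl]
  have hLDr : 0 ≤ L * D * r := by positivity
  have hup : m' - m - v ≤ L / 2 * r ^ 2 + L * D * r := by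
    have k1 := (abs_le.1 T1).2
    linarith [hmin1, k1, hLDr]
  have hlo : -(L / 2 * r ^ 2 + L * D * r) ≤ m' - m - v := by
    have k2 := (abs_le.1 T2).1
    linarith [hmin2, k2]
  have hfin : L / 2 * r ^ 2 + L * D * r ≤ C₂ * s * r := by
    have h1 : L * r ^ 2 ≤ L * (s * r) := by nlinarith
    have h2 : (L * r) * D ≤ (L * r) * (K * s) :=
      mul_le_mul_of_nonneg_left hDK (by positivity)
    rw [hC₂]; linarith [h1, h2]
  exact abs_le.2 ⟨by linarith, by linarith⟩

/-- Danskin-type theorem: derivative of the value function of a parametric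
strongly-convex minimization problem. -/
lemma danskin (h : E → H → ℝ) (L μ : ℝ) (hμ : 0 < μ) (hL : 0 ≤ L)
    (hdiff : Differentiable ℝ (uncurry h))
    (hlip : ∀ p q : E × H, ‖fderiv ℝ (uncurry h) p - fderiv ℝ (uncurry h) q‖ ≤ L * ‖p - q‖)
    (Y : E → H) (hY : ∀ x', IsMinOn (h x') Set.univ (Y x'))
    (growth : ∀ x' a, h x' (Y x') + μ * ‖a - Y x'‖ ^ 2 ≤ h x' a)
    (x : E) (ψ : E →L[ℝ] ℝ) (hψ : HasFDerivAt (fun x' => h x' (Y x)) ψ x) :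
    HasFDerivAt (fun x' => h x' (Y x')) ψ x := by
  have htay : ∀ p q : E × H,
      |uncurry h q - uncurry h p - fderiv ℝ (uncurry h) p (q - p)| ≤ L / 2 * ‖q - p‖ ^ 2 :=
    taylor_quad hdiff hlip
  obtain ⟨y₀, hy₀⟩ : ∃ y, y = Y x := ⟨_, rfl⟩
  obtain ⟨A, hA⟩ : ∃ a, a = fderiv ℝ (uncurry h) (x, y₀) := ⟨_, rfl⟩
  have hψeq : ψ = A.comp (inl ℝ E H) := by
    rw [hA, hy₀]
    exact hψ.unique (hasFDerivAt_partial_x hdiff x (Y x))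
  obtain ⟨K, hK⟩ : ∃ c : ℝ, c = (‖A‖ + L) / μ + 1 := ⟨_, rfl⟩
  obtain ⟨C₂, hC₂⟩ : ∃ c : ℝ, c = L / 2 + L * K := ⟨_, rfl⟩
  have hK1 : 1 ≤ K := by
    have h0 : 0 ≤ (‖A‖ + L) / μ := by positivity
    rw [hK]; linarith
  have hC₂0 : 0 ≤ C₂ := by
    rw [hC₂]
    have : 0 ≤ L * K := mul_nonneg hL (by linarith)
    linarith
  -- main quantitative estimate
  have main : ∀ x' : E, ‖x' - x‖ ≤ 1 →
      |h x' (Y x') - h x y₀ - A (x' - x, 0)| ≤ C₂ * Real.sqrt ‖x' - x‖ * ‖x' - x‖ := by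
    intro x' hr1
    obtain ⟨r, hr⟩ : ∃ c : ℝ, c = ‖x' - x‖ := ⟨_, rfl⟩
    rw [← hr] at hr1 ⊢
    have hr0 : 0 ≤ r := hr ▸ norm_nonneg _
    obtain ⟨s, hs⟩ : ∃ c : ℝ, c = Real.sqrt r := ⟨_, rfl⟩
    rw [← hs]
    have hs0 : 0 ≤ s := hs ▸ Real.sqrt_nonneg _
    have hss : s * s = r := by rw [hs]; exact Real.mul_self_sqrt hr0
    obtain ⟨y', hy'⟩ : ∃ y, y = Y x' := ⟨_, rfl⟩
    rw [← hy']
    obtain ⟨D, hD⟩ : ∃ c : ℝ, c = ‖y' - y₀‖ := ⟨_, rfl⟩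
    have hD0 : 0 ≤ D := hD ▸ norm_nonneg _
    have hsub1 : ((x', y₀) : E × H) - (x, y₀) = (x' - x, 0) := by simp [Prod.sub_def]
    have hsub2 : ((x', y') : E × H) - (x, y') = (x' - x, 0) := by simp [Prod.sub_def]
    have hnv : ‖((x' - x, 0) : E × H)‖ = r := by simp [Prod.norm_def, hr]
    have hn3 : ‖((x, y') : E × H) - (x, y₀)‖ = D := by
      simp [Prod.norm_def, Prod.sub_def, hD]
    have T1 : |h x' y₀ - h x y₀ - A (x' - x, 0)| ≤ L / 2 * r ^ 2 := by
      have := htay (x, y₀) (x', y₀)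
      rw [hsub1, hnv, ← hA] at this
      exact this
    have hcmp : ‖fderiv ℝ (uncurry h) (x, y') - A‖ ≤ L * D := by
      have := hlip (x, y') (x, y₀)
      rw [hn3, ← hA] at this
      exact this
    have T2 : |h x' y' - h x y' - A (x' - x, 0)| ≤ L / 2 * r ^ 2 + L * D * r := by
      have h1 : |h x' y' - h x y' - fderiv ℝ (uncurry h) (x, y') (x' - x, 0)|
          ≤ L / 2 * r ^ 2 := by
        have := htay (x, y') (x', y')
        rw [hsub2, hnv] at this
        exact this
      have h2 : |fderiv ℝ (uncurry h) (x, y') (x' - x, 0) - A (x' - x, 0)| ≤ L * D * r := by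
        have e1 : fderiv ℝ (uncurry h) (x, y') (x' - x, 0) - A (x' - x, 0)
            = (fderiv ℝ (uncurry h) (x, y') - A) (x' - x, 0) := by
          simp [ContinuousLinearMap.sub_apply]
        rw [e1]
        calc |(fderiv ℝ (uncurry h) (x, y') - A) (x' - x, 0)|
            ≤ ‖fderiv ℝ (uncurry h) (x, y') - A‖ * ‖((x' - x, 0) : E × H)‖ :=
              (fderiv ℝ (uncurry h) (x, y') - A).le_opNorm _
          _ ≤ L * D * r := by
              rw [hnv]; exact mul_le_mul_of_nonneg_right hcmp hr0
      calc |h x' y' - h x y' - A (x' - x, 0)|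
          = |(h x' y' - h x y' - fderiv ℝ (uncurry h) (x, y') (x' - x, 0))
              + (fderiv ℝ (uncurry h) (x, y') (x' - x, 0) - A (x' - x, 0))| := by ring_nf
        _ ≤ _ := abs_add_le _ _
        _ ≤ L / 2 * r ^ 2 + L * D * r := add_le_add h1 h2
    have G1 : h x y₀ + μ * D ^ 2 ≤ h x y' := by
      have := growth x y'
      rw [← hy₀, ← hD] at this
      exact this
    have G2 : h x' y' + μ * D ^ 2 ≤ h x' y₀ := by
      have := growth x' y₀
      rw [← hy'] at this
      have hrev : ‖y₀ - y'‖ = D := by rw [hD]; exact norm_sub_rev _ _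
      rw [hrev] at this
      exact this
    have hAop : |A (x' - x, 0)| ≤ ‖A‖ * r := by
      calc |A (x' - x, 0)| ≤ ‖A‖ * ‖((x' - x, 0) : E × H)‖ := A.le_opNorm _
        _ = ‖A‖ * r := by rw [hnv]
    have hmin1 : h x' y' ≤ h x' y₀ := by
      rw [hy']; exact (isMinOn_univ_iff.1 (hY x')) y₀
    have hmin2 : h x y₀ ≤ h x y' := by
      rw [hy₀]; exact (isMinOn_univ_iff.1 (hY x)) y'
    exact danskin_est L μ ‖A‖ r s D K C₂ (h x y₀) (h x' y') (h x' y₀) (h x y')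
      (A (x' - x, 0)) hμ hL (norm_nonneg A) hr0 hr1 hs0 hss hD0 T1 T2 G1 G2 hmin1 hmin2
      hAop hK hC₂
  -- conclude via little-o
  rw [hψeq, hasFDerivAt_iff_isLittleO_nhds_zero, Asymptotics.isLittleO_iff]
  intro c hc
  have hδpos : 0 < min 1 ((c / (C₂ + 1)) ^ 2) := by positivity
  filter_upwards [Metric.ball_mem_nhds (0 : E) hδpos] with v hv
  rw [Metric.mem_ball, dist_zero_right] at hv
  have hr1 : ‖v‖ ≤ 1 := le_of_lt (lt_of_lt_of_le hv (min_le_left _ _))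
  have hv2 : ‖v‖ < (c / (C₂ + 1)) ^ 2 := lt_of_lt_of_le hv (min_le_right _ _)
  have hx' : (x + v) - x = v := by abel
  have hmain := main (x + v) (by rw [hx']; exact hr1)
  rw [hx'] at hmain
  have hsq : Real.sqrt ‖v‖ ≤ c / (C₂ + 1) := by
    have h0 : 0 ≤ c / (C₂ + 1) := by positivity
    calc Real.sqrt ‖v‖ ≤ Real.sqrt ((c / (C₂ + 1)) ^ 2) := Real.sqrt_le_sqrt (le_of_lt hv2)
      _ = c / (C₂ + 1) := Real.sqrt_sq h0
  have hbound : C₂ * Real.sqrt ‖v‖ * ‖v‖ ≤ c * ‖v‖ := by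
    have hC21 : 0 < C₂ + 1 := by linarith
    have h0 : 0 ≤ c / (C₂ + 1) := by positivity
    have hcs : C₂ * Real.sqrt ‖v‖ ≤ c := by
      calc C₂ * Real.sqrt ‖v‖ ≤ C₂ * (c / (C₂ + 1)) :=
            mul_le_mul_of_nonneg_left hsq hC₂0
        _ ≤ (C₂ + 1) * (c / (C₂ + 1)) :=
            mul_le_mul_of_nonneg_right (by linarith) h0
        _ = c := by field_simp
    exact mul_le_mul_of_nonneg_right hcs (norm_nonneg v)
  have happ : (A.comp (inl ℝ E H)) v = A (v, 0) := rfl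
  calc ‖h (x + v) (Y (x + v)) - h x (Y x) - (A.comp (inl ℝ E H)) v‖
      = |h (x + v) (Y (x + v)) - h x y₀ - A (v, 0)| := by rw [happ, Real.norm_eq_abs, hy₀]
    _ ≤ C₂ * Real.sqrt ‖v‖ * ‖v‖ := hmain
    _ ≤ c * ‖v‖ := hbound

end aux

/-- For every x ∈ E and every λ ≥ 2 l_{f,1}/μ_g, the value function
L*_λ(x) = L_λ(x, y*_λ(x)) is differentiable at x with gradient
∇L*_λ(x) = ∇_x f(x, y*_λ(x)) + λ (∇_x g(x, y*_λ(x)) − ∇_x g(x, y*(x))). -/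
theorem value_function_gradient
    {E H : Type*}
    [NormedAddCommGroup E] [InnerProductSpace ℝ E] [FiniteDimensional ℝ E]
    [NormedAddCommGroup H] [InnerProductSpace ℝ H] [FiniteDimensional ℝ H]
    (f g : E → H → ℝ) (lf0 lf1 lg1 lg2 μg : ℝ)
    -- (i) f is C¹ and its full gradient is l_{f,1}-Lipschitz
    (hf1 : ContDiff ℝ 1 (Function.uncurry f))
    (hf_lip : ∀ p q : E × H,
      ‖fderiv ℝ (Function.uncurry f) p - fderiv ℝ (Function.uncurry f) q‖ ≤ lf1 * ‖p - q‖)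
    -- (ii) ‖∇_y f(x,y)‖ ≤ l_{f,0}
    (hf0 : ∀ x y, ‖gradient (f x) y‖ ≤ lf0)
    -- (iii) g is C², full gradient l_{g,1}-Lipschitz, Hessian l_{g,2}-Lipschitz
    (hg2 : ContDiff ℝ 2 (Function.uncurry g))
    (hg_lip : ∀ p q : E × H,
      ‖fderiv ℝ (Function.uncurry g) p - fderiv ℝ (Function.uncurry g) q‖ ≤ lg1 * ‖p - q‖)
    (hg_hess : ∀ p q : E × H,
      @norm _ (ContinuousLinearMap.hasOpNorm (E := E × H) (F := E × H →L[ℝ] ℝ) (σ₁₂ := RingHom.id ℝ))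
        (fderiv ℝ (fderiv ℝ (Function.uncurry g)) p
        - fderiv ℝ (fderiv ℝ (Function.uncurry g)) q) ≤ lg2 * ‖p - q‖)
    -- (iv) strong convexity of g(x,·) with unique minimizer y*(x)
    (hμg : 0 < μg)
    (hgsc : ∀ x, StrongConvexOn Set.univ μg (g x))
    (ystar : E → H)
    (hystar : ∀ x, IsMinOn (g x) Set.univ (ystar x))
    (hystar_uniq : ∀ x y, IsMinOn (g x) Set.univ y → y = ystar x)
    -- y*_λ(x) : unique minimizer of the Lagrangian L_λ(x,·)
    (ylam : ℝ → E → H)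
    (hylam : ∀ lam x, 2 * lf1 / μg ≤ lam →
      IsMinOn (fun y => f x y + lam * (g x y - g x (ystar x))) Set.univ (ylam lam x))
    (hylam_uniq : ∀ lam x y, 2 * lf1 / μg ≤ lam →
      IsMinOn (fun y => f x y + lam * (g x y - g x (ystar x))) Set.univ y → y = ylam lam x)
    (lam : ℝ) (hlam : 2 * lf1 / μg ≤ lam) (x : E) :
    HasGradientAt
      (fun x' => f x' (ylam lam x') + lam * (g x' (ylam lam x') - g x' (ystar x')))
      (gradient (fun x' => f x' (ylam lam x)) x
        + lam • (gradient (fun x' => g x' (ylam lam x)) x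
            - gradient (fun x' => g x' (ystar x)) x)) x := by
  have hfd : Differentiable ℝ (Function.uncurry f) := hf1.differentiable (by norm_num)
  have hgd : Differentiable ℝ (Function.uncurry g) := hg2.differentiable (by norm_num)
  rcases subsingleton_or_nontrivial E with hE | hE
  · -- trivial case: E is a subsingleton
    have hfc : (fun x' => f x' (ylam lam x') + lam * (g x' (ylam lam x') - g x' (ystar x')))
        = fun _ => f x (ylam lam x) + lam * (g x (ylam lam x) - g x (ystar x)) := by
      funext x'
      rw [Subsingleton.elim x' x]
    rw [hasGradientAt_iff_hasFDerivAt, hfc,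
      Subsingleton.elim (gradient (fun x' => f x' (ylam lam x)) x
        + lam • (gradient (fun x' => g x' (ylam lam x)) x
            - gradient (fun x' => g x' (ystar x)) x)) (0 : E), map_zero]
    exact hasFDerivAt_const _ _
  -- lf1, lg1 are nonnegative
  obtain ⟨e₁, e₂, he⟩ := exists_pair_ne E
  have hpq : (0:ℝ) < ‖((e₁, (0:H)) : E × H) - (e₂, 0)‖ := by
    rw [norm_pos_iff]
    simp [Prod.ext_iff, sub_eq_zero, he]
  have hlf1 : 0 ≤ lf1 := by
    have h0 := (norm_nonneg (E := E × H →L[ℝ] ℝ) _).trans (hf_lip (e₁, (0:H)) (e₂, 0))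
    by_contra hneg
    push_neg at hneg
    nlinarith
  have hlg1 : 0 ≤ lg1 := by
    have h0 := (norm_nonneg (E := E × H →L[ℝ] ℝ) _).trans (hg_lip (e₁, (0:H)) (e₂, 0))
    by_contra hneg
    push_neg at hneg
    nlinarith
  have hlam0 : 0 ≤ lam :=
    le_trans (div_nonneg (by linarith) hμg.le) hlam
  have h2lf1 : 2 * lf1 ≤ lam * μg := by
    have := (div_le_iff₀ hμg).1 hlam
    linarith
  have hμ'0 : 0 ≤ lam * μg - lf1 := by linarith
  rcases eq_or_lt_of_le hμ'0 with hμ'eq | hμ'pos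
  · -- degenerate case : lam * μg = lf1, which forces lf1 = 0 and lam = 0
    have hlf10 : lf1 = 0 := by
      have hnn := mul_nonneg hlam0 hμg.le
      linarith only [hμ'eq, h2lf1, hnn]
    have hlam00 : lam = 0 := by
      have : lam * μg = 0 := by linarith
      rcases mul_eq_zero.1 this with h | h
      · exact h
      · exact absurd h (ne_of_gt hμg)
    subst hlam00
    subst hlf10
    -- fderiv of uncurry f is constant
    have hfeq : ∀ p q : E × H, fderiv ℝ (Function.uncurry f) p = fderiv ℝ (Function.uncurry f) q := by
      intro p q
      have := hf_lip p q
      rw [zero_mul] at this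
      exact sub_eq_zero.1 (norm_le_zero_iff.1 this)
    -- f x is constant in y for every x
    have hmin0 : IsMinOn (f x) Set.univ (ylam 0 x) := by
      have h0 := hylam 0 x (by simp)
      have e : (fun y => f x y + 0 * (g x y - g x (ystar x))) = f x := by
        funext y; ring
      rwa [e] at h0
    have hlocal : IsLocalMin (f x) (ylam 0 x) :=
      Filter.Eventually.of_forall fun y => isMinOn_univ_iff.1 hmin0 y
    have hz : fderiv ℝ (f x) (ylam 0 x) = 0 :=
      hlocal.fderiv_eq_zero
    have hallz : ∀ (x' : E) (y : H), fderiv ℝ (f x') y = 0 := by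
      intro x' y
      rw [(hasFDerivAt_partial_y hfd x' y).fderiv,
        hfeq (x', y) (x, ylam 0 x),
        ← (hasFDerivAt_partial_y hfd x (ylam 0 x)).fderiv, hz]
    have hconst : ∀ (x' : E) (y y' : H), f x' y = f x' y' := by
      intro x' y y'
      exact is_const_of_fderiv_eq_zero
        (fun z => (hasFDerivAt_partial_y hfd x' z).differentiableAt) (hallz x') y y'
    have hfe : (fun x' => f x' (ylam 0 x') + 0 * (g x' (ylam 0 x') - g x' (ystar x')))
        = fun x' => f x' (ylam 0 x) := by
      funext x'
      rw [zero_mul, add_zero]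
      exact hconst x' (ylam 0 x') (ylam 0 x)
    rw [hfe]
    have hgoal : gradient (fun x' => f x' (ylam 0 x)) x
        + (0:ℝ) • (gradient (fun x' => g x' (ylam 0 x)) x - gradient (fun x' => g x' (ystar x)) x)
        = gradient (fun x' => f x' (ylam 0 x)) x := by
      rw [zero_smul, add_zero]
    rw [hgoal]
    exact ((hasFDerivAt_partial_x hfd x (ylam 0 x)).differentiableAt).hasGradientAt
  · -- main case : lam * μg - lf1 > 0
    -- differentiability of the combined objective
    have hdiff1 : Differentiable ℝ (Function.uncurry fun x y => f x y + lam * g x y) := by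
      have : Function.uncurry (fun x y => f x y + lam * g x y)
          = fun p => Function.uncurry f p + lam * Function.uncurry g p := rfl
      rw [this]
      exact hfd.add (hgd.const_mul lam)
    -- Lipschitz bound for the combined objective
    have hlip1 : ∀ p q : E × H,
        ‖fderiv ℝ (Function.uncurry fun x y => f x y + lam * g x y) p
          - fderiv ℝ (Function.uncurry fun x y => f x y + lam * g x y) q‖
        ≤ (lf1 + lam * lg1) * ‖p - q‖ := by
      have hder : ∀ p : E × H, fderiv ℝ (Function.uncurry fun x y => f x y + lam * g x y) p
          = fderiv ℝ (Function.uncurry f) p + lam • fderiv ℝ (Function.uncurry g) p := by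
        intro p
        have h1 : HasFDerivAt (Function.uncurry fun x y => f x y + lam * g x y)
            (fderiv ℝ (Function.uncurry f) p + lam • fderiv ℝ (Function.uncurry g) p) p :=
          (hfd p).hasFDerivAt.add ((hgd p).hasFDerivAt.const_mul lam)
        exact h1.fderiv
      intro p q
      rw [hder p, hder q]
      calc ‖(fderiv ℝ (Function.uncurry f) p + lam • fderiv ℝ (Function.uncurry g) p)
            - (fderiv ℝ (Function.uncurry f) q + lam • fderiv ℝ (Function.uncurry g) q)‖
          = ‖(fderiv ℝ (Function.uncurry f) p - fderiv ℝ (Function.uncurry f) q)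
            + lam • (fderiv ℝ (Function.uncurry g) p - fderiv ℝ (Function.uncurry g) q)‖ := by
            rw [smul_sub]; abel_nf
        _ ≤ ‖fderiv ℝ (Function.uncurry f) p - fderiv ℝ (Function.uncurry f) q‖
            + ‖lam • (fderiv ℝ (Function.uncurry g) p - fderiv ℝ (Function.uncurry g) q)‖ :=
            norm_add_le (E := E × H →L[ℝ] ℝ) _ _
        _ = ‖fderiv ℝ (Function.uncurry f) p - fderiv ℝ (Function.uncurry f) q‖
            + lam * ‖fderiv ℝ (Function.uncurry g) p - fderiv ℝ (Function.uncurry g) q‖ := by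
            have := NormedSpace.toNormSMulClass (𝕜 := ℝ) (E := E × H →L[ℝ] ℝ)
            rw [norm_smul, Real.norm_eq_abs, abs_of_nonneg hlam0]
        _ ≤ lf1 * ‖p - q‖ + lam * (lg1 * ‖p - q‖) :=
            add_le_add (hf_lip p q) (mul_le_mul_of_nonneg_left (hg_lip p q) hlam0)
        _ = (lf1 + lam * lg1) * ‖p - q‖ := by ring
    -- minimizers of the combined objective
    have hYl : ∀ x', IsMinOn (fun y => f x' y + lam * g x' y) Set.univ (ylam lam x') := by
      intro x'
      have h0 := isMinOn_univ_iff.1 (hylam lam x' hlam)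
      rw [isMinOn_univ_iff]
      intro y
      have h1 := h0 y
      linarith only [h1]
    -- midpoint inequality for the combined objective
    have hmid1 : ∀ x' a b, (fun y => f x' y + lam * g x' y) ((1/2 : ℝ) • a + (1/2 : ℝ) • b)
        ≤ ((fun y => f x' y + lam * g x' y) a + (fun y => f x' y + lam * g x' y) b) / 2
          - ((lam * μg - lf1) / 8) * ‖a - b‖ ^ 2 := by
      intro x' a b
      have hfdy : Differentiable ℝ (f x') :=
        fun z => (hasFDerivAt_partial_y hfd x' z).differentiableAt
      have hf_mid := midpoint_semiconvex hfdy (partial_y_lip hfd hf_lip x') a b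
      have hg_mid := (hgsc x').2 (Set.mem_univ a) (Set.mem_univ b)
        (by norm_num : (0:ℝ) ≤ 1/2) (by norm_num : (0:ℝ) ≤ 1/2) (by norm_num)
      simp only [smul_eq_mul] at hg_mid
      have hgm := mul_le_mul_of_nonneg_left hg_mid hlam0
      simp only []
      linarith only [hf_mid, hgm]
    have growth1 : ∀ x' a, (f x' (ylam lam x') + lam * g x' (ylam lam x'))
        + 2 * ((lam * μg - lf1) / 8) * ‖a - ylam lam x'‖ ^ 2 ≤ f x' a + lam * g x' a := by
      intro x' a
      exact growth_of_midpoint (hmid1 x') (hYl x') a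
    -- midpoint/growth for g
    have hmidg : ∀ x' a b, g x' ((1/2 : ℝ) • a + (1/2 : ℝ) • b)
        ≤ (g x' a + g x' b) / 2 - (μg / 8) * ‖a - b‖ ^ 2 := by
      intro x' a b
      have hg_mid := (hgsc x').2 (Set.mem_univ a) (Set.mem_univ b)
        (by norm_num : (0:ℝ) ≤ 1/2) (by norm_num : (0:ℝ) ≤ 1/2) (by norm_num)
      simp only [smul_eq_mul] at hg_mid
      linarith only [hg_mid]
    have growthg : ∀ x' a, g x' (ystar x') + 2 * (μg / 8) * ‖a - ystar x'‖ ^ 2 ≤ g x' a := by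
      intro x' a
      exact growth_of_midpoint (hmidg x') (hystar x') a
    -- gradients of the partial maps
    have hvf : HasFDerivAt (fun x' => f x' (ylam lam x))
        ((InnerProductSpace.toDual ℝ E) (gradient (fun x' => f x' (ylam lam x)) x)) x :=
      ((hasFDerivAt_partial_x hfd x (ylam lam x)).differentiableAt).hasGradientAt.hasFDerivAt
    have hvg1 : HasFDerivAt (fun x' => g x' (ylam lam x))
        ((InnerProductSpace.toDual ℝ E) (gradient (fun x' => g x' (ylam lam x)) x)) x :=
      ((hasFDerivAt_partial_x hgd x (ylam lam x)).differentiableAt).hasGradientAt.hasFDerivAt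
    have hvg2 : HasFDerivAt (fun x' => g x' (ystar x))
        ((InnerProductSpace.toDual ℝ E) (gradient (fun x' => g x' (ystar x)) x)) x :=
      ((hasFDerivAt_partial_x hgd x (ystar x)).differentiableAt).hasGradientAt.hasFDerivAt
    -- Danskin for the combined objective
    have D1 : HasFDerivAt (fun x' => f x' (ylam lam x') + lam * g x' (ylam lam x'))
        ((InnerProductSpace.toDual ℝ E) (gradient (fun x' => f x' (ylam lam x)) x)
          + lam • (InnerProductSpace.toDual ℝ E) (gradient (fun x' => g x' (ylam lam x)) x)) x := by
      have hψ1 : HasFDerivAt (fun x' => f x' (ylam lam x) + lam * g x' (ylam lam x))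
          ((InnerProductSpace.toDual ℝ E) (gradient (fun x' => f x' (ylam lam x)) x)
            + lam • (InnerProductSpace.toDual ℝ E) (gradient (fun x' => g x' (ylam lam x)) x)) x :=
        hvf.add (hvg1.const_mul lam)
      exact danskin (fun x y => f x y + lam * g x y) (lf1 + lam * lg1)
        (2 * ((lam * μg - lf1) / 8)) (by linarith)
        (by positivity) hdiff1 hlip1 (ylam lam) hYl growth1 x _ hψ1
    -- Danskin for g
    have D2 : HasFDerivAt (fun x' => g x' (ystar x'))
        ((InnerProductSpace.toDual ℝ E) (gradient (fun x' => g x' (ystar x)) x)) x :=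
      danskin g lg1 (2 * (μg / 8)) (by linarith) hlg1 hgd hg_lip ystar hystar growthg x _ hvg2
    -- combine
    have Dcomb := D1.sub (D2.const_mul lam)
    have hfe : (fun x' => f x' (ylam lam x') + lam * (g x' (ylam lam x') - g x' (ystar x')))
        = fun x' => (f x' (ylam lam x') + lam * g x' (ylam lam x')) - lam * g x' (ystar x') := by
      funext x'
      ring
    rw [hasGradientAt_iff_hasFDerivAt, hfe]
    have hdual : (InnerProductSpace.toDual ℝ E)
        (gradient (fun x' => f x' (ylam lam x)) x
          + lam • (gradient (fun x' => g x' (ylam lam x)) x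
              - gradient (fun x' => g x' (ystar x)) x))
        = ((InnerProductSpace.toDual ℝ E) (gradient (fun x' => f x' (ylam lam x)) x)
            + lam • (InnerProductSpace.toDual ℝ E) (gradient (fun x' => g x' (ylam lam x)) x))
          - lam • (InnerProductSpace.toDual ℝ E) (gradient (fun x' => g x' (ystar x)) x) := by
      rw [map_add, map_smulₛₗ, map_sub]
      simp only [RingHom.id_apply, starRingEnd_apply, star_trivial]
      rw [smul_sub]
      abel
    rw [hdual]
    exact Dcomb
end

section
/- If in addition f is twice continuously differentiable with l_{f,2}-Lipschitz Hessian, then for every λ > 2 l_{f,1}/μ_g the map x ↦ y*_λ(x) is differentiable with Lipschitz derivative: for all x₁, x₂ ∈ E, ‖ D y*_λ(x₁) − D y*_λ(x₂) ‖ ≤ l_{λ,1} ‖ x₁ − x₂ ‖ where l_{λ,1} ≤ 32 ( l_{g,2} + l_{f,2}/λ ) l_{g,1}² / μ_g³. -/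
set_option maxSynthPendingDepth 3
set_option synthInstance.maxHeartbeats 400000

open Filter Topology Set ContinuousLinearMap

section Aux
variable {F : Type*} [NormedAddCommGroup F] [NormedSpace ℝ F]

/-- First-order condition for uniformly (strongly) convex functions. -/
lemma strong_first_order {h : F → ℝ} {μ : ℝ}
    (hh : UniformConvexOn Set.univ (fun r => μ / 2 * r ^ 2) h)
    {w : F} {h' : F →L[ℝ] ℝ} (hd : HasFDerivAt h h' w) (z : F) :
    h' (z - w) + μ / 2 * ‖z - w‖ ^ 2 ≤ h z - h w := by
  have hline : HasDerivAt (fun t : ℝ => w + t • (z - w)) (z - w) 0 := by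
    simpa using ((hasDerivAt_id (0 : ℝ)).smul_const (z - w)).const_add w
  have hψ : HasDerivAt (fun t : ℝ => h (w + t • (z - w))) (h' (z - w)) 0 := by
    have := HasFDerivAt.comp_hasDerivAt (0 : ℝ) (by simpa using hd) hline
    exact this
  set ψ := fun t : ℝ => h (w + t • (z - w)) with hψdef
  have key : ∀ t ∈ Ioo (0 : ℝ) 1,
      slope ψ 0 t ≤ (h z - h w) - (1 - t) * (μ / 2 * ‖z - w‖ ^ 2) := by
    intro t ht
    have hcv := hh.2 (mem_univ z) (mem_univ w) (le_of_lt ht.1)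
      (by linarith [ht.2] : (0:ℝ) ≤ 1 - t) (by ring)
    have hpt : t • z + (1 - t) • w = w + t • (z - w) := by module
    rw [hpt] at hcv
    have hzw : ‖z - w‖ = ‖z - w‖ := rfl
    rw [slope_def_field]
    have hψt : ψ t = h (w + t • (z - w)) := rfl
    have hψ0 : ψ 0 = h w := by simp [hψdef]
    rw [hψt, hψ0, sub_zero, div_le_iff₀ ht.1]
    simp only [smul_eq_mul] at hcv
    nlinarith [ht.1, ht.2]
  have hne : (𝓝[Ioo (0:ℝ) 1] 0).NeBot := by
    rw [← mem_closure_iff_nhdsWithin_neBot, closure_Ioo (by norm_num : (0:ℝ) ≠ 1)]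
    constructor <;> norm_num
  have h1 : Tendsto (slope ψ 0) (𝓝[Ioo (0:ℝ) 1] 0) (𝓝 (h' (z - w))) :=
    (hasDerivAt_iff_tendsto_slope.1 hψ).mono_left
      (nhdsWithin_mono 0 (fun t ht => ht.1.ne'))
  have h2 : Tendsto (fun t : ℝ => (h z - h w) - (1 - t) * (μ / 2 * ‖z - w‖ ^ 2))
      (𝓝[Ioo (0:ℝ) 1] 0) (𝓝 ((h z - h w) - μ / 2 * ‖z - w‖ ^ 2)) := by
    have hc : Continuous fun t : ℝ => (h z - h w) - (1 - t) * (μ / 2 * ‖z - w‖ ^ 2) := by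
      continuity
    have := (hc.tendsto 0).mono_left (nhdsWithin_le_nhds (s := Ioo (0:ℝ) 1))
    simpa using this
  have := le_of_tendsto_of_tendsto h1 h2 (eventually_nhdsWithin_of_forall key)
  linarith

/-- Coercivity of the derivative of a strongly monotone map into the dual. -/
lemma coercive_of_monotone {H : Type*} [NormedAddCommGroup H] [NormedSpace ℝ H]
    {φ : H → (H →L[ℝ] ℝ)} {A : H →L[ℝ] (H →L[ℝ] ℝ)} {y : H} {m : ℝ}
    (hd : HasFDerivAt φ A y)
    (hmono : ∀ z, m * ‖z - y‖ ^ 2 ≤ (φ z - φ y) (z - y)) (v : H) :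
    m * ‖v‖ ^ 2 ≤ A v v := by
  have hline : HasDerivAt (fun t : ℝ => y + t • v) v 0 := by
    simpa using ((hasDerivAt_id (0 : ℝ)).smul_const v).const_add y
  have hφc : HasDerivAt (fun t : ℝ => φ (y + t • v)) (A v) 0 := by
    have := HasFDerivAt.comp_hasDerivAt (0 : ℝ) (by simpa using hd) hline
    exact this
  have hψ : HasDerivAt (fun t : ℝ => φ (y + t • v) v) (A v v) 0 := by
    have := (ContinuousLinearMap.apply ℝ ℝ v).hasFDerivAt.comp_hasDerivAt (0 : ℝ) hφc
    exact this
  set ψ := fun t : ℝ => φ (y + t • v) v with hψdef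
  have key : ∀ t ∈ Ioi (0:ℝ), m * ‖v‖ ^ 2 ≤ slope ψ 0 t := by
    intro t ht
    have h1 := hmono (y + t • v)
    have e1 : y + t • v - y = t • v := by abel
    rw [e1] at h1
    have e2 : (φ (y + t • v) - φ y) (t • v) = t * ((φ (y + t • v) - φ y) v) := by
      rw [map_smul]; simp
    rw [e2, norm_smul] at h1
    simp only [Real.norm_eq_abs, abs_of_pos (show (0:ℝ) < t from ht)] at h1
    rw [slope_def_field]
    have hψt : ψ t - ψ 0 = (φ (y + t • v) - φ y) v := by
      simp [hψdef, ContinuousLinearMap.sub_apply]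
    rw [hψt, sub_zero, le_div_iff₀ ht]
    have ht0 : (0:ℝ) < t := ht
    apply le_of_mul_le_mul_right _ ht0
    nlinarith [h1]
  have h1 : Tendsto (slope ψ 0) (𝓝[>] 0) (𝓝 (A v v)) :=
    (hasDerivAt_iff_tendsto_slope.1 hψ).mono_left
      (nhdsWithin_mono 0 (fun t ht => ne_of_gt ht))
  exact ge_of_tendsto h1 (eventually_nhdsWithin_of_forall key)

end Aux

section IFT

open Filter Topology Set ContinuousLinearMap Module

variable {E H : Type*} [NormedAddCommGroup E] [NormedSpace ℝ E] [FiniteDimensional ℝ E]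
  [NormedAddCommGroup H] [NormedSpace ℝ H] [FiniteDimensional ℝ H]

set_option maxHeartbeats 1000000 in
/-- Quantitative implicit function theorem step. -/
lemma implicit_hasFDerivAt {Φ : E × H → (H →L[ℝ] ℝ)} (hΦc : ContDiff ℝ 1 Φ)
    {S : E × H → ((E × H) →L[ℝ] (H →L[ℝ] ℝ))} (hS : ∀ p, HasFDerivAt Φ (S p) p)
    {w : E → H} {m : ℝ} (hm : 0 < m)
    (hmono : ∀ (x : E) (y1 y2 : H), m * ‖y1 - y2‖ ^ 2 ≤ (Φ (x, y1) - Φ (x, y2)) (y1 - y2))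
    (h0 : ∀ x, Φ (x, w x) = 0) (x₀ : E) :
    ∃ D : E →L[ℝ] H, HasFDerivAt w D x₀ ∧
      ∀ u : E, S (x₀, w x₀) (((0 : E), D u)) = -(S (x₀, w x₀) ((u, (0 : H)))) := by
  classical
  have huniq : ∀ (x : E) (a : H), Φ (x, a) = 0 → a = w x := by
    intro x a ha
    have h := hmono x a (w x)
    rw [ha, h0 x] at h
    simp only [sub_zero, ContinuousLinearMap.zero_apply] at h
    have h2 : ‖a - w x‖ ^ 2 ≤ 0 := by
      have := (mul_le_mul_iff_right₀ hm).mpr (le_refl (‖a - w x‖ ^ 2))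
      nlinarith [sq_nonneg ‖a - w x‖]
    have h3 : ‖a - w x‖ ^ 2 = 0 := le_antisymm h2 (sq_nonneg _)
    have h4 : ‖a - w x‖ = 0 := by
      nlinarith [norm_nonneg (a - w x)]
    rw [norm_eq_zero, sub_eq_zero] at h4
    exact h4
  -- coercivity of the partial derivative in `y`
  have hΦyd : ∀ (x : E) (y : H), HasFDerivAt (fun y' : H => Φ (x, y'))
      ((S (x, y)).comp (ContinuousLinearMap.inr ℝ E H)) y :=
    fun x y => (hS (x, y)).comp y (hasFDerivAt_prodMk_right x y)
  have hcoer : ∀ v : H, m * ‖v‖ ^ 2 ≤ (S (x₀, w x₀) (((0:E), v))) v := by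
    intro v
    have h := coercive_of_monotone (hΦyd x₀ (w x₀)) (fun z => hmono x₀ z (w x₀)) v
    simpa only [ContinuousLinearMap.coe_comp', Function.comp_apply,
      ContinuousLinearMap.inr_apply] using h
  have hinj : Function.Injective fun v : H => S (x₀, w x₀) (((0:E), v)) := by
    intro v1 v2 h12
    have h12' : S (x₀, w x₀) (((0:E), v1)) = S (x₀, w x₀) (((0:E), v2)) := h12
    have hz : S (x₀, w x₀) (((0:E), v1 - v2)) = 0 := by
      have e : (((0:E), v1 - v2) : E × H) = ((0:E), v1) - ((0:E), v2) := by
        simp [Prod.mk_sub_mk]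
      rw [e, map_sub, h12', sub_self]
    have h := hcoer (v1 - v2)
    rw [hz] at h
    simp only [ContinuousLinearMap.zero_apply] at h
    have h2 : ‖v1 - v2‖ ^ 2 ≤ 0 := by nlinarith
    have h4 : ‖v1 - v2‖ = 0 := by
      nlinarith [norm_nonneg (v1 - v2), sq_nonneg ‖v1 - v2‖]
    rw [norm_eq_zero, sub_eq_zero] at h4
    exact h4
  -- build the continuous linear equivalence `Aeq : H ≃L (H →L[ℝ] ℝ)`
  have hinj' : Function.Injective ((S (x₀, w x₀)).comp (ContinuousLinearMap.inr ℝ E H)) := by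
    intro v1 v2 h12
    apply hinj
    simpa only [ContinuousLinearMap.coe_comp', Function.comp_apply,
      ContinuousLinearMap.inr_apply] using h12
  have hfinrank : finrank ℝ (H →L[ℝ] ℝ) = finrank ℝ H := by
    rw [← LinearEquiv.finrank_eq
      (LinearMap.toContinuousLinearMap : (H →ₗ[ℝ] ℝ) ≃ₗ[ℝ] (H →L[ℝ] ℝ))]
    rw [Module.finrank_linearMap, Module.finrank_self, mul_one]
  have hsurj : Function.Surjective ((S (x₀, w x₀)).comp (ContinuousLinearMap.inr ℝ E H)) := by
    have h := (LinearMap.injective_iff_surjective_of_finrank_eq_finrank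
      (f := (((S (x₀, w x₀)).comp (ContinuousLinearMap.inr ℝ E H) : H →L[ℝ] (H →L[ℝ] ℝ)) :
        H →ₗ[ℝ] (H →L[ℝ] ℝ))) hfinrank.symm)
    exact h.mp hinj'
  let Aeq : H ≃L[ℝ] (H →L[ℝ] ℝ) :=
    (LinearEquiv.ofBijective
      (((S (x₀, w x₀)).comp (ContinuousLinearMap.inr ℝ E H) : H →L[ℝ] (H →L[ℝ] ℝ)) :
        H →ₗ[ℝ] (H →L[ℝ] ℝ)) ⟨hinj', hsurj⟩).toContinuousLinearEquiv
  have hAeq : ∀ v : H, Aeq v = S (x₀, w x₀) (((0:E), v)) := fun v => rfl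
  -- the full derivative of `(x, y) ↦ (x, Φ (x, y))` as an equivalence
  have key : ∀ (u : E) (z : H →L[ℝ] ℝ),
      S (x₀, w x₀) ((u, Aeq.symm (z - S (x₀, w x₀) ((u, (0:H)))))) = z := by
    intro u z
    have hdec : ((u, (0:H)) : E × H) + ((0:E), Aeq.symm (z - S (x₀, w x₀) ((u, (0:H)))))
        = (u, Aeq.symm (z - S (x₀, w x₀) ((u, (0:H))))) := by
      simp [Prod.mk_add_mk]
    rw [← hdec, map_add, ← hAeq, ContinuousLinearEquiv.apply_symm_apply]
    abel
  let Fwd : (E × H) →L[ℝ] (E × (H →L[ℝ] ℝ)) :=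
    (ContinuousLinearMap.fst ℝ E H).prod (S (x₀, w x₀))
  let Bwd : (E × (H →L[ℝ] ℝ)) →L[ℝ] (E × H) :=
    (ContinuousLinearMap.fst ℝ E (H →L[ℝ] ℝ)).prod
      ((Aeq.symm : (H →L[ℝ] ℝ) →L[ℝ] H).comp
        ((ContinuousLinearMap.snd ℝ E (H →L[ℝ] ℝ)) -
          (S (x₀, w x₀)).comp ((ContinuousLinearMap.inl ℝ E H).comp
            (ContinuousLinearMap.fst ℝ E (H →L[ℝ] ℝ)))))
  have hleft : Function.LeftInverse Bwd Fwd := by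
    intro q
    show (q.1, Aeq.symm (S (x₀, w x₀) q - S (x₀, w x₀) ((q.1, (0:H))))) = q
    have hdec : ((q.1, (0:H)) : E × H) + ((0:E), q.2) = q := by
      simp [Prod.mk_add_mk]
    have hsum : S (x₀, w x₀) ((q.1, (0:H))) + S (x₀, w x₀) (((0:E), q.2))
        = S (x₀, w x₀) q := by
      rw [← map_add, hdec]
    have e : S (x₀, w x₀) q - S (x₀, w x₀) ((q.1, (0:H))) = S (x₀, w x₀) (((0:E), q.2)) := by
      rw [← hsum]; abel
    rw [e, ← hAeq, ContinuousLinearEquiv.symm_apply_apply]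
  have hright : Function.RightInverse Bwd Fwd := by
    intro q
    show (q.1, S (x₀, w x₀) ((q.1, Aeq.symm (q.2 - S (x₀, w x₀) ((q.1, (0:H))))))) = q
    rw [key]
  let M : (E × H) ≃L[ℝ] (E × (H →L[ℝ] ℝ)) :=
    ContinuousLinearEquiv.equivOfInverse Fwd Bwd hleft hright
  set Gm := fun p : E × H => (p.1, Φ p) with hGmdef
  have hGs : HasStrictFDerivAt Gm (M : (E × H) →L[ℝ] (E × (H →L[ℝ] ℝ))) (x₀, w x₀) := by
    have hGmc : ContDiff ℝ 1 Gm := by rw [hGmdef]; exact contDiff_fst.prodMk hΦc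
    have h1 := hGmc.contDiffAt.hasStrictFDerivAt one_ne_zero (x := ((x₀, w x₀) : E × H))
    have h2 : HasFDerivAt Gm Fwd (x₀, w x₀) := by
      rw [hGmdef]; exact hasFDerivAt_fst.prodMk (hS (x₀, w x₀))
    have h3 : (M : (E × H) →L[ℝ] (E × (H →L[ℝ] ℝ))) = Fwd := rfl
    rw [h3, ← h2.fderiv]
    exact h1
  set ginv := hGs.localInverse Gm M (x₀, w x₀) with hginvdef
  have hGp0 : Gm (x₀, w x₀) = (x₀, (0 : H →L[ℝ] ℝ)) := by
    show ((x₀, w x₀).1, Φ (x₀, w x₀)) = _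
    rw [h0 x₀]
  have hright' := hGs.eventually_right_inverse
  rw [hGp0] at hright'
  have htend : Tendsto (fun x : E => ((x, (0 : H →L[ℝ] ℝ)) : E × (H →L[ℝ] ℝ)))
      (𝓝 x₀) (𝓝 ((x₀, (0 : H →L[ℝ] ℝ)) : E × (H →L[ℝ] ℝ))) :=
    (continuous_id.prodMk continuous_const).tendsto x₀
  have hev : w =ᶠ[𝓝 x₀] fun x => (ginv ((x, (0 : H →L[ℝ] ℝ)))).2 := by
    filter_upwards [htend.eventually hright'] with x hx
    have h1 : (ginv ((x, (0 : H →L[ℝ] ℝ)))).1 = x := congrArg Prod.fst hx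
    have h2 : Φ (ginv ((x, (0 : H →L[ℝ] ℝ)))) = 0 := congrArg Prod.snd hx
    have h3 : Φ ((x, (ginv ((x, (0 : H →L[ℝ] ℝ)))).2)) = 0 := by
      have e : ((x, (ginv ((x, (0 : H →L[ℝ] ℝ)))).2) : E × H)
          = ginv ((x, (0 : H →L[ℝ] ℝ))) := Prod.ext h1.symm rfl
      rw [e]
      exact h2
    exact (huniq x _ h3).symm
  have hinvd : HasStrictFDerivAt ginv
      ((M.symm : (E × (H →L[ℝ] ℝ)) →L[ℝ] (E × H))) ((x₀, (0 : H →L[ℝ] ℝ))) := by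
    have h := hGs.to_localInverse
    rwa [hGp0] at h
  have hj : HasFDerivAt (fun x : E => ((x, (0 : H →L[ℝ] ℝ)) : E × (H →L[ℝ] ℝ)))
      ((ContinuousLinearMap.id ℝ E).prod 0) x₀ :=
    (hasFDerivAt_id x₀).prodMk (hasFDerivAt_const 0 x₀)
  have hcomp : HasFDerivAt (fun x : E => (ginv ((x, (0 : H →L[ℝ] ℝ)))).2)
      ((ContinuousLinearMap.snd ℝ E H).comp
        (((M.symm : (E × (H →L[ℝ] ℝ)) →L[ℝ] (E × H))).comp
          ((ContinuousLinearMap.id ℝ E).prod 0))) x₀ :=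
    (ContinuousLinearMap.snd ℝ E H).hasFDerivAt.comp x₀
      ((hinvd.hasFDerivAt.comp x₀ hj))
  refine ⟨_, hcomp.congr_of_eventuallyEq hev, ?_⟩
  intro u
  have hMs : M.symm ((u, (0 : H →L[ℝ] ℝ))) =
      (u, Aeq.symm ((0 : H →L[ℝ] ℝ) - S (x₀, w x₀) ((u, (0:H))))) := by
    rw [ContinuousLinearEquiv.symm_apply_eq]
    show ((u, (0 : H →L[ℝ] ℝ)) : E × (H →L[ℝ] ℝ)) =
      (u, S (x₀, w x₀) ((u, Aeq.symm ((0 : H →L[ℝ] ℝ) - S (x₀, w x₀) ((u, (0:H)))))))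
    rw [key]
  have hDu : ((ContinuousLinearMap.snd ℝ E H).comp
        (((M.symm : (E × (H →L[ℝ] ℝ)) →L[ℝ] (E × H))).comp
          ((ContinuousLinearMap.id ℝ E).prod 0))) u
      = Aeq.symm ((0 : H →L[ℝ] ℝ) - S (x₀, w x₀) ((u, (0:H)))) := by
    show (M.symm ((u, (0 : H →L[ℝ] ℝ)))).2 = _
    rw [hMs]
  rw [hDu, ← hAeq, ContinuousLinearEquiv.apply_symm_apply, zero_sub]

end IFT

section Arith

/-- The final numerical inequality. -/
lemma final_arith {lf1 lf2 lg1 lg2 μg lam : ℝ}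
    (hlf1 : 0 ≤ lf1) (hlf2 : 0 ≤ lf2) (hlg1 : 0 ≤ lg1) (hlg2 : 0 ≤ lg2)
    (hμg : 0 < μg) (hlam : 0 < lam) (hμlg : μg ≤ lg1) (hmain : 2 * lf1 < lam * μg) :
    (lf2 + lam * lg2) * ((lf1 + lam * lg1) / (lam * μg - lf1)) *
        (1 + (lf1 + lam * lg1) / (lam * μg - lf1)) / (lam * μg - lf1)
      ≤ 32 * (lg2 + lf2 / lam) * lg1 ^ 2 / μg ^ 3 := by
  obtain ⟨m, hmdef⟩ : ∃ m : ℝ, m = lam * μg - lf1 := ⟨_, rfl⟩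
  obtain ⟨K, hKdef⟩ : ∃ K : ℝ, K = lf2 + lam * lg2 := ⟨_, rfl⟩
  obtain ⟨N, hNdef⟩ : ∃ N : ℝ, N = lf1 + lam * lg1 := ⟨_, rfl⟩
  rw [← hmdef, ← hKdef, ← hNdef]
  have hm_pos : 0 < m := by rw [hmdef]; nlinarith
  have hm_half : lam * μg / 2 ≤ m := by rw [hmdef]; nlinarith
  have hK0 : 0 ≤ K := by rw [hKdef]; positivity
  have hN0 : 0 ≤ N := by rw [hNdef]; positivity
  have hm0 : m ≠ 0 := ne_of_gt hm_pos
  have hmcube : (m:ℝ) ^ 3 ≠ 0 := pow_ne_zero 3 hm0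
  have e1 : K * (N / m) * (1 + N / m) / m = K * N * (m + N) / m ^ 3 := by
    rw [div_eq_div_iff hm0 hmcube]
    field_simp
  rw [e1]
  have e2 : 32 * (lg2 + lf2 / lam) * lg1 ^ 2 / μg ^ 3
      = 32 * K * lg1 ^ 2 / (lam * μg ^ 3) := by
    rw [hKdef, div_eq_div_iff (by positivity : (0:ℝ) < μg ^ 3).ne'
      (by positivity : (0:ℝ) < lam * μg ^ 3).ne']
    field_simp
    ring
  rw [e2, div_le_div_iff₀ (by positivity) (by positivity)]
  -- goal : K * N * (m + N) * (lam * μg ^ 3) ≤ 32 * K * lg1 ^ 2 * m ^ 3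
  have hN32 : N ≤ 3 / 2 * (lam * lg1) := by
    rw [hNdef]
    nlinarith [mul_le_mul_of_nonneg_left hμlg hlam.le]
  have hmN : m + N ≤ 2 * (lam * lg1) := by
    rw [hmdef, hNdef]
    nlinarith [mul_le_mul_of_nonneg_left hμlg hlam.le]
  have hm3 : (lam * μg / 2) ^ 3 ≤ m ^ 3 := by
    apply pow_le_pow_left₀ (by positivity) hm_half
  have hmN0 : 0 ≤ m + N := by positivity
  have e3 : K * N * (m + N) ≤ K * (3 / 2 * (lam * lg1)) * (2 * (lam * lg1)) := by
    apply mul_le_mul (mul_le_mul_of_nonneg_left hN32 hK0) hmN hmN0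
    positivity
  have e4 : K * (3 / 2 * (lam * lg1)) * (2 * (lam * lg1)) * (lam * μg ^ 3)
      ≤ 32 * K * lg1 ^ 2 * m ^ 3 := by
    have h8 : 32 * K * lg1 ^ 2 * ((lam * μg / 2) ^ 3) ≤ 32 * K * lg1 ^ 2 * m ^ 3 := by
      apply mul_le_mul_of_nonneg_left hm3
      positivity
    refine le_trans ?_ h8
    have hX : 0 ≤ K * lg1 ^ 2 * lam ^ 3 * μg ^ 3 := by positivity
    have hdiff : 32 * K * lg1 ^ 2 * (lam * μg / 2) ^ 3
        - K * (3 / 2 * (lam * lg1)) * (2 * (lam * lg1)) * (lam * μg ^ 3)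
        = K * lg1 ^ 2 * lam ^ 3 * μg ^ 3 := by ring
    linarith [hX, hdiff]
  calc K * N * (m + N) * (lam * μg ^ 3)
      ≤ K * (3 / 2 * (lam * lg1)) * (2 * (lam * lg1)) * (lam * μg ^ 3) := by
        apply mul_le_mul_of_nonneg_right e3 (by positivity)
    _ ≤ 32 * K * lg1 ^ 2 * m ^ 3 := e4

end Arith

section Main

open Filter Topology Set ContinuousLinearMap Module

set_option maxHeartbeats 8000000 in
/-- if moreover f is C² with l_{f,2}-Lipschitz Hessian, then for every
λ > 2 l_{f,1}/μ_g, x ↦ y*_λ(x) is differentiable with Lipschitz derivative, with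
Lipschitz constant at most 32 (l_{g,2} + l_{f,2}/λ) l_{g,1}²/μ_g³. -/
theorem lagrangian_minimizer_smooth
    {E H : Type*}
    [NormedAddCommGroup E] [InnerProductSpace ℝ E] [FiniteDimensional ℝ E]
    [NormedAddCommGroup H] [InnerProductSpace ℝ H] [FiniteDimensional ℝ H]
    (f g : E → H → ℝ) (lf0 lf1 lg1 lg2 μg : ℝ)
    -- (i) f is C¹ and its full gradient is l_{f,1}-Lipschitz
    (hf1 : ContDiff ℝ 1 (Function.uncurry f))
    (hf_lip : ∀ p q : E × H,
      ‖fderiv ℝ (Function.uncurry f) p - fderiv ℝ (Function.uncurry f) q‖ ≤ lf1 * ‖p - q‖)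
    -- (ii) ‖∇_y f(x,y)‖ ≤ l_{f,0}
    (hf0 : ∀ x y, ‖gradient (f x) y‖ ≤ lf0)
    -- (iii) g is C², full gradient l_{g,1}-Lipschitz, Hessian l_{g,2}-Lipschitz
    (hg2 : ContDiff ℝ 2 (Function.uncurry g))
    (hg_lip : ∀ p q : E × H,
      ‖fderiv ℝ (Function.uncurry g) p - fderiv ℝ (Function.uncurry g) q‖ ≤ lg1 * ‖p - q‖)
    (hg_hess : ∀ p q : E × H,
      @Norm.norm (E × H →L[ℝ] E × H →L[ℝ] ℝ)
        (@ContinuousLinearMap.hasOpNorm ℝ ℝ (E × H) (E × H →L[ℝ] ℝ) _ _ _ _ _ _ _)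
        (fderiv ℝ (fderiv ℝ (Function.uncurry g)) p
        - fderiv ℝ (fderiv ℝ (Function.uncurry g)) q) ≤ lg2 * ‖p - q‖)
    -- (iv) strong convexity of g(x,·) with unique minimizer y*(x)
    (hμg : 0 < μg)
    (hgsc : ∀ x, StrongConvexOn Set.univ μg (g x))
    (ystar : E → H)
    (hystar : ∀ x, IsMinOn (g x) Set.univ (ystar x))
    (hystar_uniq : ∀ x y, IsMinOn (g x) Set.univ y → y = ystar x)
    -- y*_λ(x) : unique minimizer of the Lagrangian L_λ(x,·)
    (ylam : ℝ → E → H)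
    (hylam : ∀ lam x, 2 * lf1 / μg ≤ lam →
      IsMinOn (fun y => f x y + lam * (g x y - g x (ystar x))) Set.univ (ylam lam x))
    (hylam_uniq : ∀ lam x y, 2 * lf1 / μg ≤ lam →
      IsMinOn (fun y => f x y + lam * (g x y - g x (ystar x))) Set.univ y → y = ylam lam x)
    (lf2 : ℝ)
    (hf2 : ContDiff ℝ 2 (Function.uncurry f))
    (hf_hess : ∀ p q : E × H,
      @Norm.norm (E × H →L[ℝ] E × H →L[ℝ] ℝ)
        (@ContinuousLinearMap.hasOpNorm ℝ ℝ (E × H) (E × H →L[ℝ] ℝ) _ _ _ _ _ _ _)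
        (fderiv ℝ (fderiv ℝ (Function.uncurry f)) p
        - fderiv ℝ (fderiv ℝ (Function.uncurry f)) q) ≤ lf2 * ‖p - q‖)
    (lam : ℝ) (hlam : 2 * lf1 / μg < lam) :
    Differentiable ℝ (ylam lam) ∧
      ∀ x1 x2 : E,
        ‖fderiv ℝ (ylam lam) x1 - fderiv ℝ (ylam lam) x2‖
          ≤ 32 * (lg2 + lf2 / lam) * lg1 ^ 2 / μg ^ 3 * ‖x1 - x2‖ := by
  classical
  -- Degenerate case: E trivial
  by_cases hEss : Subsingleton E
  · refine ⟨fun x => ?_, fun x1 x2 => ?_⟩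
    · have h : ylam lam = fun _ => ylam lam x := funext fun z => by rw [Subsingleton.elim z x]
      rw [h]; exact differentiableAt_const _
    · have h12 : x1 = x2 := Subsingleton.elim _ _
      subst h12; simp
  haveI : Nontrivial E := not_subsingleton_iff_nontrivial.mp hEss
  obtain ⟨xa, xb, hxab⟩ := exists_pair_ne E
  have hpq : (0:ℝ) < ‖((xa, (0:H)) : E × H) - ((xb, (0:H)) : E × H)‖ := by
    rw [norm_pos_iff, sub_ne_zero]
    simp [Prod.ext_iff, hxab]
  have hlf1 : 0 ≤ lf1 := by
    nlinarith [hf_lip ((xa,(0:H))) ((xb,(0:H))),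
      norm_nonneg (fderiv ℝ (Function.uncurry f) (xa,(0:H)) -
        fderiv ℝ (Function.uncurry f) (xb,(0:H)))]
  have hlg1 : 0 ≤ lg1 := by
    nlinarith [hg_lip ((xa,(0:H))) ((xb,(0:H))),
      norm_nonneg (fderiv ℝ (Function.uncurry g) (xa,(0:H)) -
        fderiv ℝ (Function.uncurry g) (xb,(0:H)))]
  have hlf2 : 0 ≤ lf2 := by
    nlinarith [hf_hess ((xa,(0:H))) ((xb,(0:H))),
      norm_nonneg (fderiv ℝ (fderiv ℝ (Function.uncurry f)) (xa,(0:H)) -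
        fderiv ℝ (fderiv ℝ (Function.uncurry f)) (xb,(0:H)))]
  have hlg2 : 0 ≤ lg2 := by
    nlinarith [hg_hess ((xa,(0:H))) ((xb,(0:H))),
      norm_nonneg (fderiv ℝ (fderiv ℝ (Function.uncurry g)) (xa,(0:H)) -
        fderiv ℝ (fderiv ℝ (Function.uncurry g)) (xb,(0:H)))]
  have hlam0 : 0 < lam := lt_of_le_of_lt (by positivity) hlam
  have hmain : 2 * lf1 < lam * μg := by
    rw [div_lt_iff₀ hμg] at hlam; linarith
  obtain ⟨m, hmdef⟩ : ∃ m : ℝ, m = lam * μg - lf1 := ⟨_, rfl⟩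
  have hlamμg : 0 < lam * μg := mul_pos hlam0 hμg
  have hm_pos : 0 < m := by rw [hmdef]; linarith
  have hm_half : lam * μg / 2 ≤ m := by rw [hmdef]; linarith
  -- Degenerate case: H trivial
  by_cases hHss : Subsingleton H
  · have hconst : ylam lam = fun _ => (0 : H) := funext fun z => Subsingleton.elim _ _
    refine ⟨by rw [hconst]; exact differentiable_const _, fun x1 x2 => ?_⟩
    rw [hconst]
    have h1 : 0 ≤ lg2 + lf2 / lam := add_nonneg hlg2 (div_nonneg hlf2 hlam0.le)
    have h2 : 0 ≤ 32 * (lg2 + lf2 / lam) * lg1 ^ 2 / μg ^ 3 * ‖x1 - x2‖ :=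
      mul_nonneg (div_nonneg (mul_nonneg (by linarith) (sq_nonneg lg1))
        (pow_nonneg hμg.le 3)) (norm_nonneg _)
    simpa using h2
  haveI : Nontrivial H := not_subsingleton_iff_nontrivial.mp hHss
  -- Abbreviations for the derivatives of f and g
  set F1 := fderiv ℝ (Function.uncurry f) with hF1def
  set G1 := fderiv ℝ (Function.uncurry g) with hG1def
  set F2 := fderiv ℝ F1 with hF2def
  set G2 := fderiv ℝ G1 with hG2def
  have hfd : Differentiable ℝ (Function.uncurry f) := hf1.differentiable one_ne_zero
  have hgd : Differentiable ℝ (Function.uncurry g) := hg2.differentiable two_ne_zero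
  have hF1c : ContDiff ℝ 1 F1 := hf2.fderiv_right (by norm_num)
  have hG1c : ContDiff ℝ 1 G1 := hg2.fderiv_right (by norm_num)
  have hF1d : Differentiable ℝ F1 := hF1c.differentiable one_ne_zero
  have hG1d : Differentiable ℝ G1 := hG1c.differentiable one_ne_zero
  have hF2d : ∀ p, HasFDerivAt F1 (F2 p) p := fun p => (hF1d p).hasFDerivAt
  have hG2d : ∀ p, HasFDerivAt G1 (G2 p) p := fun p => (hG1d p).hasFDerivAt
  have hF2n : ∀ p, ‖F2 p‖ ≤ lf1 := by
    intro p
    have hlip : LipschitzWith lf1.toNNReal F1 := by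
      rw [lipschitzWith_iff_norm_sub_le]
      intro p q; rw [Real.coe_toNNReal lf1 hlf1]; exact hf_lip p q
    simpa [Real.coe_toNNReal lf1 hlf1] using (hF2d p).le_of_lipschitz hlip
  have hG2n : ∀ p, ‖G2 p‖ ≤ lg1 := by
    intro p
    have hlip : LipschitzWith lg1.toNNReal G1 := by
      rw [lipschitzWith_iff_norm_sub_le]
      intro p q; rw [Real.coe_toNNReal lg1 hlg1]; exact hg_lip p q
    simpa [Real.coe_toNNReal lg1 hlg1] using (hG2d p).le_of_lipschitz hlip
  -- the projection onto partial-in-y functionals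
  set Pr : ((E × H) →L[ℝ] ℝ) →L[ℝ] (H →L[ℝ] ℝ) :=
    (ContinuousLinearMap.compL ℝ H (E × H) ℝ).flip (ContinuousLinearMap.inr ℝ E H) with hPrdef
  have hPr : ∀ S : (E × H) →L[ℝ] ℝ, Pr S = S.comp (ContinuousLinearMap.inr ℝ E H) :=
    fun _ => rfl
  have hnrm0 : ∀ v : H, ‖(((0:E), v) : E × H)‖ = ‖v‖ := by
    intro v; rw [Prod.norm_def]; simp [max_eq_right (norm_nonneg v)]
  have hnrm0' : ∀ u : E, ‖((u, (0:H)) : E × H)‖ = ‖u‖ := by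
    intro u; rw [Prod.norm_def]; simp [max_eq_left (norm_nonneg u)]
  have hcomp_norm : ∀ S : (E × H) →L[ℝ] ℝ,
      ‖S.comp (ContinuousLinearMap.inr ℝ E H)‖ ≤ ‖S‖ := by
    intro S
    refine ContinuousLinearMap.opNorm_le_bound _ (norm_nonneg S) fun v => ?_
    have h1 : (S.comp (ContinuousLinearMap.inr ℝ E H)) v = S (((0:E), v)) := rfl
    rw [h1]
    calc ‖S (((0:E), v))‖ ≤ ‖S‖ * ‖(((0:E), v) : E × H)‖ := S.le_opNorm _
      _ = ‖S‖ * ‖v‖ := by rw [hnrm0]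
  -- basic facts about Φ
  have hΦc : ContDiff ℝ 1 (fun p : E × H => Pr (F1 p + lam • G1 p)) := by
    have h1 : ContDiff ℝ 1 (fun p : E × H => F1 p + lam • G1 p) :=
      hF1c.add (hG1c.const_smul lam)
    exact (ContinuousLinearMap.contDiff Pr).comp h1
  have hΦd : ∀ p : E × H, HasFDerivAt (fun p : E × H => Pr (F1 p + lam • G1 p))
      (Pr.comp (F2 p + lam • G2 p)) p := by
    intro p
    have h1 : HasFDerivAt (fun p : E × H => F1 p + lam • G1 p) (F2 p + lam • G2 p) p :=
      (hF2d p).add ((hG2d p).const_smul lam)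
    exact (ContinuousLinearMap.hasFDerivAt Pr).comp p h1
  have hΦx : ∀ q : E × H,
      Pr (F1 q + lam • G1 q) = (F1 q).comp (ContinuousLinearMap.inr ℝ E H)
        + lam • (G1 q).comp (ContinuousLinearMap.inr ℝ E H) := by
    intro q
    rw [hPr, ContinuousLinearMap.add_comp, ContinuousLinearMap.smul_comp]
  have hmkr : ∀ (x : E) (y : H),
      HasFDerivAt (fun y' : H => ((x, y') : E × H)) (ContinuousLinearMap.inr ℝ E H) y :=
    fun x y => hasFDerivAt_prodMk_right x y
  have hfy : ∀ (x : E) (y : H),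
      HasFDerivAt (f x) ((F1 (x, y)).comp (ContinuousLinearMap.inr ℝ E H)) y :=
    fun x y => (hfd (x, y)).hasFDerivAt.comp y (hmkr x y)
  have hgy : ∀ (x : E) (y : H),
      HasFDerivAt (g x) ((G1 (x, y)).comp (ContinuousLinearMap.inr ℝ E H)) y :=
    fun x y => (hgd (x, y)).hasFDerivAt.comp y (hmkr x y)
  -- strong monotonicity of the partial gradient of g
  have hgmono : ∀ (x : E) (y1 y2 : H),
      μg * ‖y1 - y2‖ ^ 2 ≤
        ((G1 (x, y1)).comp (ContinuousLinearMap.inr ℝ E H)) (y1 - y2)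
          - ((G1 (x, y2)).comp (ContinuousLinearMap.inr ℝ E H)) (y1 - y2) := by
    intro x y1 y2
    have h1 := strong_first_order (hgsc x) (hgy x y1) y2
    have h2 := strong_first_order (hgsc x) (hgy x y2) y1
    have e1 : ((G1 (x, y1)).comp (ContinuousLinearMap.inr ℝ E H)) (y2 - y1)
        = -(((G1 (x, y1)).comp (ContinuousLinearMap.inr ℝ E H)) (y1 - y2)) := by
      rw [← map_neg, neg_sub]
    rw [e1, norm_sub_rev y2 y1] at h1
    linarith
  -- Lipschitz bound for the f-part of the partial gradient
  have hfbound : ∀ (x : E) (y1 y2 : H),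
      |((F1 (x, y1)).comp (ContinuousLinearMap.inr ℝ E H)) (y1 - y2)
        - ((F1 (x, y2)).comp (ContinuousLinearMap.inr ℝ E H)) (y1 - y2)|
          ≤ lf1 * ‖y1 - y2‖ ^ 2 := by
    intro x y1 y2
    have e : ((F1 (x, y1)).comp (ContinuousLinearMap.inr ℝ E H)) (y1 - y2)
        - ((F1 (x, y2)).comp (ContinuousLinearMap.inr ℝ E H)) (y1 - y2)
        = (F1 (x, y1) - F1 (x, y2)) (((0:E), y1 - y2) : E × H) := by
      simp
    rw [e]
    have h1 := (F1 (x, y1) - F1 (x, y2)).le_opNorm ((((0:E), y1 - y2)) : E × H)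
    rw [hnrm0] at h1
    have h2 := hf_lip (x, y1) (x, y2)
    have e2 : ((x, y1) : E × H) - (x, y2) = ((0:E), y1 - y2) := by
      simp [Prod.mk_sub_mk]
    rw [e2, hnrm0] at h2
    rw [Real.norm_eq_abs] at h1
    nlinarith [norm_nonneg (y1 - y2), norm_nonneg (F1 (x, y1) - F1 (x, y2))]
  -- strong monotonicity of Φ in y
  have hΦmono : ∀ (x : E) (y1 y2 : H),
      m * ‖y1 - y2‖ ^ 2 ≤
        ((Pr (F1 (x, y1) + lam • G1 (x, y1))) - (Pr (F1 (x, y2) + lam • G1 (x, y2))))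
          (y1 - y2) := by
    intro x y1 y2
    rw [hΦx (x, y1), hΦx (x, y2)]
    have hg' := hgmono x y1 y2
    have hf' := (abs_le.mp (hfbound x y1 y2)).1
    have hg'' := mul_le_mul_of_nonneg_left hg' hlam0.le
    simp only [ContinuousLinearMap.sub_apply, ContinuousLinearMap.add_apply,
      ContinuousLinearMap.smul_apply, smul_eq_mul]
    rw [hmdef]
    nlinarith
  -- the first-order condition Φ(x, y_λ(x)) = 0
  have hΦ0 : ∀ x : E, Pr (F1 (x, ylam lam x) + lam • G1 (x, ylam lam x)) = 0 := by
    intro x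
    have hmin := hylam lam x (le_of_lt hlam)
    have hloc : IsLocalMin (fun y => f x y + lam * (g x y - g x (ystar x))) (ylam lam x) :=
      hmin.isLocalMin Filter.univ_mem
    have hLd : HasFDerivAt (fun y => f x y + lam * (g x y - g x (ystar x)))
        ((F1 (x, ylam lam x)).comp (ContinuousLinearMap.inr ℝ E H)
          + lam • (G1 (x, ylam lam x)).comp (ContinuousLinearMap.inr ℝ E H)) (ylam lam x) :=
      (hfy x _).add (((hgy x _).sub_const (g x (ystar x))).const_mul lam)
    have h0 := hloc.hasFDerivAt_eq_zero hLd
    rw [hΦx]; exact h0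
  -- μg ≤ lg1
  have hμlg : μg ≤ lg1 := by
    obtain ⟨v, hv⟩ := exists_ne (0 : H)
    have h1 := hgmono xa v 0
    simp only [sub_zero] at h1
    have e : ((G1 (xa, v)).comp (ContinuousLinearMap.inr ℝ E H)) v
        - ((G1 (xa, (0:H))).comp (ContinuousLinearMap.inr ℝ E H)) v
        = (G1 (xa, v) - G1 (xa, (0:H))) (((0:E), v) : E × H) := by
      simp
    rw [e] at h1
    have h2 : (G1 (xa, v) - G1 (xa, (0:H))) (((0:E), v) : E × H)
        ≤ ‖G1 (xa, v) - G1 (xa, (0:H))‖ * ‖v‖ := by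
      refine le_trans (le_abs_self _) ?_
      rw [← Real.norm_eq_abs]
      calc ‖(G1 (xa, v) - G1 (xa, (0:H))) (((0:E), v) : E × H)‖
          ≤ ‖G1 (xa, v) - G1 (xa, (0:H))‖ * ‖(((0:E), v) : E × H)‖ :=
            ContinuousLinearMap.le_opNorm _ _
        _ = ‖G1 (xa, v) - G1 (xa, (0:H))‖ * ‖v‖ := by rw [hnrm0]
    have h3 := hg_lip (xa, v) (xa, (0:H))
    have e2 : ((xa, v) : E × H) - (xa, (0:H)) = ((0:E), v) := by
      simp [Prod.mk_sub_mk]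
    rw [e2, hnrm0] at h3
    have hv0 : 0 < ‖v‖ := norm_pos_iff.mpr hv
    nlinarith [h1, h2, mul_le_mul_of_nonneg_right h3 (norm_nonneg v), mul_pos hv0 hv0,
      norm_nonneg (G1 (xa, v) - G1 (xa, (0:H)))]
  -- norm bounds for the second derivative blocks
  have hSn : ∀ p : E × H, ‖F2 p + lam • G2 p‖ ≤ lf1 + lam * lg1 := by
    intro p
    calc ‖F2 p + lam • G2 p‖ ≤ ‖F2 p‖ + ‖lam • G2 p‖ := norm_add_le _ _
      _ ≤ lf1 + lam * lg1 := by
          have h2 : ‖lam • G2 p‖ = lam * ‖G2 p‖ := by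
            rw [norm_smul, Real.norm_eq_abs, abs_of_pos hlam0]
          rw [h2]
          exact add_le_add (hF2n p) (mul_le_mul_of_nonneg_left (hG2n p) hlam0.le)
  have hSdiff : ∀ p q : E × H,
      ‖(F2 p + lam • G2 p) - (F2 q + lam • G2 q)‖ ≤ (lf2 + lam * lg2) * ‖p - q‖ := by
    intro p q
    have e : (F2 p + lam • G2 p) - (F2 q + lam • G2 q)
        = (F2 p - F2 q) + lam • (G2 p - G2 q) := by
      rw [smul_sub]; abel
    rw [e]
    calc ‖(F2 p - F2 q) + lam • (G2 p - G2 q)‖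
        ≤ ‖F2 p - F2 q‖ + ‖lam • (G2 p - G2 q)‖ := norm_add_le _ _
      _ ≤ lf2 * ‖p - q‖ + lam * (lg2 * ‖p - q‖) := by
          have h2 : ‖lam • (G2 p - G2 q)‖ = lam * ‖G2 p - G2 q‖ := by
            rw [norm_smul, Real.norm_eq_abs, abs_of_pos hlam0]
          rw [h2]
          exact add_le_add (hf_hess p q) (mul_le_mul_of_nonneg_left (hg_hess p q) hlam0.le)
      _ = (lf2 + lam * lg2) * ‖p - q‖ := by ring
  -- application bounds for Pr.comp
  have happly : ∀ (W : (E × H) →L[ℝ] ((E × H) →L[ℝ] ℝ)) (q : E × H),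
      (Pr.comp W) q = (W q).comp (ContinuousLinearMap.inr ℝ E H) := fun W q => rfl
  have hPrn : ∀ (W : (E × H) →L[ℝ] ((E × H) →L[ℝ] ℝ)) (q : E × H),
      ‖(Pr.comp W) q‖ ≤ ‖W‖ * ‖q‖ := by
    intro W q
    rw [happly]
    exact le_trans (hcomp_norm _) (W.le_opNorm q)
  have hPrdiff : ∀ (W W' : (E × H) →L[ℝ] ((E × H) →L[ℝ] ℝ)) (q : E × H),
      ‖(Pr.comp W) q - (Pr.comp W') q‖ ≤ ‖W - W'‖ * ‖q‖ := by
    intro W W' q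
    have e : (Pr.comp W) q - (Pr.comp W') q
        = ((W - W') q).comp (ContinuousLinearMap.inr ℝ E H) := by
      rw [happly, happly, ContinuousLinearMap.sub_apply, ContinuousLinearMap.sub_comp]
    rw [e]
    exact le_trans (hcomp_norm _) ((W - W').le_opNorm q)
  -- coercivity
  have hcoer : ∀ (x : E) (v : H),
      m * ‖v‖ ^ 2 ≤ ((Pr.comp (F2 (x, ylam lam x) + lam • G2 (x, ylam lam x)))
        (((0:E), v))) v := by
    intro x v
    have hd : HasFDerivAt (fun y : H => Pr (F1 (x, y) + lam • G1 (x, y)))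
        ((Pr.comp (F2 (x, ylam lam x) + lam • G2 (x, ylam lam x))).comp
          (ContinuousLinearMap.inr ℝ E H)) (ylam lam x) :=
      (hΦd (x, ylam lam x)).comp (ylam lam x) (hmkr x (ylam lam x))
    have h := coercive_of_monotone hd (fun z => hΦmono x z (ylam lam x)) v
    simpa only [ContinuousLinearMap.coe_comp', Function.comp_apply,
      ContinuousLinearMap.inr_apply] using h
  have hcoernorm : ∀ (x : E) (v : H),
      m * ‖v‖ ≤ ‖(Pr.comp (F2 (x, ylam lam x) + lam • G2 (x, ylam lam x)))
        (((0:E), v))‖ := by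
    intro x v
    rcases eq_or_ne v 0 with hv | hv
    · subst hv
      have e0 : (((0:E), (0:H)) : E × H) = (0 : E × H) := rfl
      rw [e0]
      simp
    · have h1 := hcoer x v
      have h2 : ((Pr.comp (F2 (x, ylam lam x) + lam • G2 (x, ylam lam x))) (((0:E), v))) v
          ≤ ‖(Pr.comp (F2 (x, ylam lam x) + lam • G2 (x, ylam lam x))) (((0:E), v))‖ * ‖v‖ := by
        refine le_trans (le_abs_self _) ?_
        rw [← Real.norm_eq_abs]
        exact ContinuousLinearMap.le_opNorm _ v
      have hv0 : 0 < ‖v‖ := norm_pos_iff.mpr hv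
      nlinarith
  -- Lipschitz continuity of Φ in x
  have hΦxlip : ∀ (x1 x2 : E) (y : H),
      ‖Pr (F1 (x1, y) + lam • G1 (x1, y)) - Pr (F1 (x2, y) + lam • G1 (x2, y))‖
        ≤ (lf1 + lam * lg1) * ‖x1 - x2‖ := by
    intro x1 x2 y
    have e : Pr (F1 (x1, y) + lam • G1 (x1, y)) - Pr (F1 (x2, y) + lam • G1 (x2, y))
        = ((F1 (x1, y) - F1 (x2, y)) + lam • (G1 (x1, y) - G1 (x2, y))).comp
            (ContinuousLinearMap.inr ℝ E H) := by
      rw [← map_sub, hPr]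
      congr 1
      rw [smul_sub]; abel
    rw [e]
    refine le_trans (hcomp_norm _) ?_
    have e2 : ((x1, y) : E × H) - (x2, y) = ((x1 - x2, (0:H)) : E × H) := by
      simp [Prod.mk_sub_mk]
    calc ‖(F1 (x1, y) - F1 (x2, y)) + lam • (G1 (x1, y) - G1 (x2, y))‖
        ≤ ‖F1 (x1, y) - F1 (x2, y)‖ + ‖lam • (G1 (x1, y) - G1 (x2, y))‖ := norm_add_le _ _
      _ ≤ lf1 * ‖x1 - x2‖ + lam * (lg1 * ‖x1 - x2‖) := by
          have h2 : ‖lam • (G1 (x1, y) - G1 (x2, y))‖ = lam * ‖G1 (x1, y) - G1 (x2, y)‖ := by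
            rw [norm_smul, Real.norm_eq_abs, abs_of_pos hlam0]
          rw [h2]
          have h3 := hf_lip (x1, y) (x2, y)
          have h4 := hg_lip (x1, y) (x2, y)
          rw [e2, hnrm0'] at h3 h4
          exact add_le_add h3 (mul_le_mul_of_nonneg_left h4 hlam0.le)
      _ = (lf1 + lam * lg1) * ‖x1 - x2‖ := by ring
  -- Lipschitz continuity of x ↦ y_λ(x)
  have hylip : ∀ x1 x2 : E,
      ‖ylam lam x1 - ylam lam x2‖ ≤ ((lf1 + lam * lg1) / m) * ‖x1 - x2‖ := by
    intro x1 x2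
    have h1 := hΦmono x1 (ylam lam x1) (ylam lam x2)
    rw [hΦ0 x1, zero_sub, ContinuousLinearMap.neg_apply] at h1
    have h2 : -((Pr (F1 (x1, ylam lam x2) + lam • G1 (x1, ylam lam x2)))
          (ylam lam x1 - ylam lam x2))
        = (Pr (F1 (x2, ylam lam x2) + lam • G1 (x2, ylam lam x2))
            - Pr (F1 (x1, ylam lam x2) + lam • G1 (x1, ylam lam x2)))
          (ylam lam x1 - ylam lam x2) := by
      rw [hΦ0 x2, zero_sub, ContinuousLinearMap.neg_apply]
    rw [h2] at h1
    have h3 : (Pr (F1 (x2, ylam lam x2) + lam • G1 (x2, ylam lam x2))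
            - Pr (F1 (x1, ylam lam x2) + lam • G1 (x1, ylam lam x2)))
          (ylam lam x1 - ylam lam x2)
        ≤ ((lf1 + lam * lg1) * ‖x1 - x2‖) * ‖ylam lam x1 - ylam lam x2‖ := by
      refine le_trans (le_abs_self _) ?_
      rw [← Real.norm_eq_abs]
      refine le_trans (ContinuousLinearMap.le_opNorm _ _) ?_
      refine mul_le_mul_of_nonneg_right ?_ (norm_nonneg _)
      rw [norm_sub_rev x1 x2] at *
      exact hΦxlip x2 x1 (ylam lam x2)
    rcases eq_or_ne (ylam lam x1 - ylam lam x2) 0 with hz | hz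
    · rw [sub_eq_zero] at hz
      rw [hz, sub_self, norm_zero]
      positivity
    · have hz0 : 0 < ‖ylam lam x1 - ylam lam x2‖ := norm_pos_iff.mpr hz
      rw [div_mul_eq_mul_div, le_div_iff₀ hm_pos]
      nlinarith
  -- differentiability and characterization of the derivative at each point
  have hkey : ∀ x : E, ∃ D : E →L[ℝ] H, HasFDerivAt (ylam lam) D x ∧
      ∀ u : E, (Pr.comp (F2 (x, ylam lam x) + lam • G2 (x, ylam lam x))) (((0:E), D u))
        = -((Pr.comp (F2 (x, ylam lam x) + lam • G2 (x, ylam lam x))) ((u, (0:H)))) :=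
    fun x => implicit_hasFDerivAt (w := ylam lam) hΦc hΦd hm_pos hΦmono hΦ0 x
  refine ⟨fun x => ((hkey x).choose_spec.1).differentiableAt, fun x1 x2 => ?_⟩
  obtain ⟨D1, hD1, hC1⟩ := hkey x1
  obtain ⟨D2, hD2, hC2⟩ := hkey x2
  rw [hD1.fderiv, hD2.fderiv]
  -- distance between base points
  have hc1 : (1:ℝ) ≤ (lf1 + lam * lg1) / m := by
    rw [le_div_iff₀ hm_pos, hmdef]
    nlinarith [mul_le_mul_of_nonneg_left hμlg hlam0.le]
  have hc0 : (0:ℝ) ≤ (lf1 + lam * lg1) / m := le_trans zero_le_one hc1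
  have hK0 : (0:ℝ) ≤ lf2 + lam * lg2 := add_nonneg hlf2 (mul_nonneg hlam0.le hlg2)
  have hP : ‖((x1, ylam lam x1) : E × H) - (x2, ylam lam x2)‖
      ≤ ((lf1 + lam * lg1) / m) * ‖x1 - x2‖ := by
    have e : ((x1, ylam lam x1) : E × H) - (x2, ylam lam x2)
        = ((x1 - x2, ylam lam x1 - ylam lam x2) : E × H) := by
      simp [Prod.mk_sub_mk]
    rw [e, Prod.norm_def]
    refine max_le ?_ ?_
    · exact le_mul_of_one_le_left (norm_nonneg _) hc1
    · exact hylip x1 x2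
  -- bound on D2
  have hDn : ∀ u : E, ‖D2 u‖ ≤ ((lf1 + lam * lg1) / m) * ‖u‖ := by
    intro u
    have h1 := hcoernorm x2 (D2 u)
    rw [hC2 u, norm_neg] at h1
    have h2 : ‖(Pr.comp (F2 (x2, ylam lam x2) + lam • G2 (x2, ylam lam x2))) ((u, (0:H)))‖
        ≤ (lf1 + lam * lg1) * ‖u‖ := by
      refine le_trans (hPrn _ _) ?_
      rw [hnrm0']
      exact mul_le_mul_of_nonneg_right (hSn _) (norm_nonneg u)
    rw [div_mul_eq_mul_div, le_div_iff₀ hm_pos]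
    nlinarith
  -- the main pointwise estimate
  have hstep : ∀ u : E, m * ‖D1 u - D2 u‖
      ≤ (lf2 + lam * lg2) * (((lf1 + lam * lg1) / m) * ‖x1 - x2‖) * ‖u‖
        + (lf2 + lam * lg2) * (((lf1 + lam * lg1) / m) * ‖x1 - x2‖)
          * (((lf1 + lam * lg1) / m) * ‖u‖) := by
    intro u
    have h1 := hcoernorm x1 (D1 u - D2 u)
    have e0 : (((0:E), D1 u - D2 u) : E × H) = ((0:E), D1 u) - ((0:E), D2 u) := by
      simp [Prod.mk_sub_mk]
    have e1 : (Pr.comp (F2 (x1, ylam lam x1) + lam • G2 (x1, ylam lam x1)))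
          (((0:E), D1 u - D2 u))
        = ((Pr.comp (F2 (x2, ylam lam x2) + lam • G2 (x2, ylam lam x2))) ((u, (0:H)))
            - (Pr.comp (F2 (x1, ylam lam x1) + lam • G2 (x1, ylam lam x1))) ((u, (0:H))))
          + ((Pr.comp (F2 (x2, ylam lam x2) + lam • G2 (x2, ylam lam x2))) (((0:E), D2 u))
            - (Pr.comp (F2 (x1, ylam lam x1) + lam • G2 (x1, ylam lam x1))) (((0:E), D2 u))) := by
      rw [e0, map_sub, hC1 u, hC2 u]
      abel
    have h2 : ‖(Pr.comp (F2 (x1, ylam lam x1) + lam • G2 (x1, ylam lam x1)))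
          (((0:E), D1 u - D2 u))‖
        ≤ ‖(Pr.comp (F2 (x2, ylam lam x2) + lam • G2 (x2, ylam lam x2))) ((u, (0:H)))
            - (Pr.comp (F2 (x1, ylam lam x1) + lam • G2 (x1, ylam lam x1))) ((u, (0:H)))‖
          + ‖(Pr.comp (F2 (x2, ylam lam x2) + lam • G2 (x2, ylam lam x2))) (((0:E), D2 u))
            - (Pr.comp (F2 (x1, ylam lam x1) + lam • G2 (x1, ylam lam x1))) (((0:E), D2 u))‖ := by
      rw [e1]; exact norm_add_le _ _
    have hW : ‖(F2 (x2, ylam lam x2) + lam • G2 (x2, ylam lam x2))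
          - (F2 (x1, ylam lam x1) + lam • G2 (x1, ylam lam x1))‖
        ≤ (lf2 + lam * lg2) * (((lf1 + lam * lg1) / m) * ‖x1 - x2‖) := by
      refine le_trans (hSdiff _ _) ?_
      rw [norm_sub_rev]
      exact mul_le_mul_of_nonneg_left hP hK0
    have h3 : ‖(Pr.comp (F2 (x2, ylam lam x2) + lam • G2 (x2, ylam lam x2))) ((u, (0:H)))
            - (Pr.comp (F2 (x1, ylam lam x1) + lam • G2 (x1, ylam lam x1))) ((u, (0:H)))‖
        ≤ ((lf2 + lam * lg2) * (((lf1 + lam * lg1) / m) * ‖x1 - x2‖)) * ‖u‖ := by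
      refine le_trans (hPrdiff _ _ _) ?_
      rw [hnrm0']
      exact mul_le_mul_of_nonneg_right hW (norm_nonneg u)
    have h4 : ‖(Pr.comp (F2 (x2, ylam lam x2) + lam • G2 (x2, ylam lam x2))) (((0:E), D2 u))
            - (Pr.comp (F2 (x1, ylam lam x1) + lam • G2 (x1, ylam lam x1))) (((0:E), D2 u))‖
        ≤ ((lf2 + lam * lg2) * (((lf1 + lam * lg1) / m) * ‖x1 - x2‖))
            * (((lf1 + lam * lg1) / m) * ‖u‖) := by
      refine le_trans (hPrdiff _ _ _) ?_
      rw [hnrm0]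
      refine mul_le_mul hW (hDn u) (norm_nonneg _) ?_
      exact mul_nonneg hK0 (mul_nonneg hc0 (norm_nonneg _))
    linarith
  -- operator norm bound
  have hCnn : (0:ℝ) ≤ (lf2 + lam * lg2) * ((lf1 + lam * lg1) / m)
      * (1 + (lf1 + lam * lg1) / m) / m * ‖x1 - x2‖ :=
    mul_nonneg (div_nonneg (mul_nonneg (mul_nonneg hK0 hc0) (by linarith)) hm_pos.le)
      (norm_nonneg _)
  have hop : ‖D1 - D2‖ ≤ (lf2 + lam * lg2) * ((lf1 + lam * lg1) / m)
      * (1 + (lf1 + lam * lg1) / m) / m * ‖x1 - x2‖ := by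
    refine ContinuousLinearMap.opNorm_le_bound _ hCnn fun u => ?_
    rw [ContinuousLinearMap.sub_apply]
    have h1 := hstep u
    have e : (lf2 + lam * lg2) * ((lf1 + lam * lg1) / m)
          * (1 + (lf1 + lam * lg1) / m) / m * ‖x1 - x2‖ * ‖u‖
        = ((lf2 + lam * lg2) * (((lf1 + lam * lg1) / m) * ‖x1 - x2‖) * ‖u‖
            + (lf2 + lam * lg2) * (((lf1 + lam * lg1) / m) * ‖x1 - x2‖)
              * (((lf1 + lam * lg1) / m) * ‖u‖)) / m := by
      field_simp
    rw [e, le_div_iff₀ hm_pos]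
    nlinarith
  refine le_trans hop ?_
  refine mul_le_mul_of_nonneg_right ?_ (norm_nonneg _)
  rw [hmdef]
  exact final_arith hlf1 hlf2 hlg1 hlg2 hμg hlam0 hμlg hmain

end Main
end

section
/- If in addition f is twice continuously differentiable, then for every λ > 2 l_{f,1}/μ_g the map y*_λ is differentiable, the operator (1/λ) ∇²_{yy} f(x, y*_λ(x)) + ∇²_{yy} g(x, y*_λ(x)) : H → H is invertible (it is ⪰ (μ_g/2)·Id), and D y*_λ(x) = − ( (1/λ) ∇²_{yy} f(x, y*_λ(x)) + ∇²_{yy} g(x, y*_λ(x)) )^{-1} ∘ ( (1/λ) ∇²_{xy} f(x, y*_λ(x)) + ∇²_{xy} g(x, y*_λ(x)) ), where ∇²_{xy} denotes the derivative in x of the partial gradient ∇_y, viewed as a linear map E → H. -/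
open scoped RealInnerProductSpace Topology
open Filter Set Function InnerProductSpace ContinuousLinearMap

set_option maxHeartbeats 1000000

section AuxHelpers

variable {H : Type*} [NormedAddCommGroup H] [InnerProductSpace ℝ H]

/-- Strong monotonicity of a map from a coercivity bound on its derivative. -/
lemma aux_strong_mono_of_coercive (φ : H → H) (hφ : Differentiable ℝ φ) (c : ℝ)
    (hc : ∀ y v, c * ‖v‖ ^ 2 ≤ ⟪fderiv ℝ φ y v, v⟫) (y z : H) :
    c * ‖y - z‖ ^ 2 ≤ ⟪φ y - φ z, y - z⟫ := by
  rcases eq_or_ne y z with rfl | hyz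
  · simp
  set w := y - z with hw
  have hd : ∀ t : ℝ, HasDerivAt (fun t : ℝ => ⟪φ (z + t • w), w⟫)
      ⟪fderiv ℝ φ (z + t • w) w, w⟫ t := by
    intro t
    have hc1 : HasDerivAt (fun t : ℝ => z + t • w) w t := by
      simpa using ((hasDerivAt_id t).smul_const w).const_add z
    have h2 : HasDerivAt (fun t : ℝ => φ (z + t • w)) (fderiv ℝ φ (z + t • w) w) t :=
      (hφ _).hasFDerivAt.comp_hasDerivAt t hc1
    simpa using (HasDerivAt.inner ℝ h2 (hasDerivAt_const t w))
  obtain ⟨t, _, ht⟩ := exists_hasDerivAt_eq_slope (fun t : ℝ => ⟪φ (z + t • w), w⟫)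
    (fun t => ⟪fderiv ℝ φ (z + t • w) w, w⟫) one_pos
    (fun t _ => (hd t).continuousAt.continuousWithinAt) (fun t _ => hd t)
  have h01 : z + (1 : ℝ) • w = y := by simp [hw]
  have h00 : z + (0 : ℝ) • w = z := by simp
  rw [h01, h00] at ht
  calc c * ‖y - z‖ ^ 2 ≤ ⟪fderiv ℝ φ (z + t • w) w, w⟫ := by
        simpa [hw] using hc (z + t • w) w
    _ = ⟪φ y - φ z, y - z⟫ := by rw [ht]; rw [inner_sub_left]; ring

/-- Coercivity of the derivative from strong monotonicity. -/
lemma aux_coercive_of_strong_mono (φ : H → H) (y : H) (hφ : DifferentiableAt ℝ φ y) (c : ℝ)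
    (hm : ∀ z w, c * ‖z - w‖ ^ 2 ≤ ⟪φ z - φ w, z - w⟫) (v : H) :
    c * ‖v‖ ^ 2 ≤ ⟪fderiv ℝ φ y v, v⟫ := by
  have hy0 : y + (0:ℝ) • v = y := by simp
  have hd : HasDerivAt (fun t : ℝ => ⟪φ (y + t • v), v⟫) ⟪fderiv ℝ φ y v, v⟫ 0 := by
    have hc1 : HasDerivAt (fun t : ℝ => y + t • v) v 0 := by
      simpa using ((hasDerivAt_id (0 : ℝ)).smul_const v).const_add y
    have h2 : HasDerivAt (fun t : ℝ => φ (y + t • v)) (fderiv ℝ φ y v) 0 :=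
      HasFDerivAt.comp_hasDerivAt (0:ℝ)
        (by rw [hy0]; exact hφ.hasFDerivAt) hc1
    simpa using (HasDerivAt.inner ℝ h2 (hasDerivAt_const (0 : ℝ) v))
  rw [hasDerivAt_iff_tendsto_slope] at hd
  have hd' : Tendsto (slope (fun t : ℝ => ⟪φ (y + t • v), v⟫) 0) (𝓝[>] 0)
      (𝓝 ⟪fderiv ℝ φ y v, v⟫) :=
    hd.mono_left (nhdsWithin_mono 0 (fun t ht => ne_of_gt ht))
  refine ge_of_tendsto hd' ?_
  filter_upwards [self_mem_nhdsWithin] with t (ht : (0:ℝ) < t)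
  have key := hm (y + t • v) y
  have h1 : y + t • v - y = t • v := by abel
  rw [h1, real_inner_smul_right, norm_smul] at key
  have hsl : slope (fun t : ℝ => ⟪φ (y + t • v), v⟫) 0 t
      = (⟪φ (y + t • v), v⟫ - ⟪φ y, v⟫) / t := by
    rw [slope_def_field]; rw [hy0]; ring_nf
  have h2 : ⟪φ (y + t • v), v⟫ - ⟪φ y, v⟫ = ⟪φ (y + t • v) - φ y, v⟫ :=
    (inner_sub_left _ _ _).symm
  rw [hsl, h2, le_div_iff₀ ht]
  rw [Real.norm_eq_abs, abs_of_pos ht] at key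
  nlinarith [key, sq_nonneg t]

variable [CompleteSpace H]

/-- First-order inequality for strongly convex differentiable functions. -/
lemma aux_strongconvex_first_order (g : H → ℝ) (μ : ℝ) (hg : StrongConvexOn univ μ g)
    (hdiff : Differentiable ℝ g) (y z : H) :
    ⟪gradient g y, z - y⟫ + μ / 2 * ‖z - y‖ ^ 2 ≤ g z - g y := by
  have hinner : ⟪gradient g y, z - y⟫ = fderiv ℝ g y (z - y) := toDual_symm_apply
  have hy0 : y + (0:ℝ) • (z - y) = y := by simp
  have hd : HasDerivAt (fun t : ℝ => g (y + t • (z - y))) (fderiv ℝ g y (z - y)) 0 := by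
    have hc1 : HasDerivAt (fun t : ℝ => y + t • (z - y)) (z - y) 0 := by
      simpa using ((hasDerivAt_id (0 : ℝ)).smul_const (z - y)).const_add y
    exact HasFDerivAt.comp_hasDerivAt (0:ℝ) (by rw [hy0]; exact (hdiff y).hasFDerivAt) hc1
  rw [hasDerivAt_iff_tendsto_slope] at hd
  have hd' : Tendsto (slope (fun t : ℝ => g (y + t • (z - y))) 0) (𝓝[>] 0)
      (𝓝 (fderiv ℝ g y (z - y))) :=
    hd.mono_left (nhdsWithin_mono 0 (fun t ht => ne_of_gt ht))
  have hrhs : Tendsto (fun t : ℝ => g z - g y - (1 - t) * (μ / 2 * ‖z - y‖ ^ 2)) (𝓝[>] 0)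
      (𝓝 (g z - g y - μ / 2 * ‖z - y‖ ^ 2)) := by
    have hcont : Continuous (fun t : ℝ => g z - g y - (1 - t) * (μ / 2 * ‖z - y‖ ^ 2)) := by
      fun_prop
    have h2t : Tendsto (fun t : ℝ => g z - g y - (1 - t) * (μ / 2 * ‖z - y‖ ^ 2)) (𝓝 0)
        (𝓝 (g z - g y - μ / 2 * ‖z - y‖ ^ 2)) := by
      have := hcont.tendsto (0:ℝ)
      simpa using this
    exact h2t.mono_left nhdsWithin_le_nhds
  have hineq : ∀ᶠ t in 𝓝[>] (0:ℝ),
      slope (fun t : ℝ => g (y + t • (z - y))) 0 t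
        ≤ g z - g y - (1 - t) * (μ / 2 * ‖z - y‖ ^ 2) := by
    filter_upwards [Ioo_mem_nhdsGT_of_mem (Set.mem_Ico.mpr ⟨le_refl (0:ℝ), one_pos⟩)]
      with t ht
    obtain ⟨ht0, ht1⟩ := ht
    have hcvx := hg.2 (mem_univ z) (mem_univ y) (show (0:ℝ) ≤ t from ht0.le)
      (show (0:ℝ) ≤ 1 - t by linarith) (show t + (1 - t) = 1 by ring)
    have hpt : t • z + (1 - t) • y = y + t • (z - y) := by module
    rw [hpt] at hcvx
    have hslope : slope (fun t : ℝ => g (y + t • (z - y))) 0 t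
        = (g (y + t • (z - y)) - g y) / t := by
      rw [slope_def_field, hy0]; ring_nf
    rw [hslope, div_le_iff₀ ht0]
    have hnorm : ‖z - y‖ = ‖y - z‖ := norm_sub_rev _ _
    simp only [smul_eq_mul] at hcvx
    nlinarith [hcvx]
  have := le_of_tendsto_of_tendsto hd' hrhs hineq
  rw [hinner]; linarith

/-- Strong monotonicity of the gradient of a strongly convex function. -/
lemma aux_strongconvex_grad_mono (g : H → ℝ) (μ : ℝ) (hg : StrongConvexOn univ μ g)
    (hdiff : Differentiable ℝ g) (y z : H) :
    μ * ‖y - z‖ ^ 2 ≤ ⟪gradient g y - gradient g z, y - z⟫ := by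
  have h1 := aux_strongconvex_first_order g μ hg hdiff y z
  have h2 := aux_strongconvex_first_order g μ hg hdiff z y
  have e1 : ⟪gradient g z, y - z⟫ = -⟪gradient g z, z - y⟫ := by
    rw [← inner_neg_right]; congr 1; abel
  have e2 : ⟪gradient g y, z - y⟫ = -⟪gradient g y, y - z⟫ := by
    rw [← inner_neg_right]; congr 1; abel
  rw [inner_sub_left, e1]
  have hnorm : ‖z - y‖ = ‖y - z‖ := norm_sub_rev _ _
  rw [hnorm, e2] at h1
  linarith [h1, h2]

end AuxHelpers

/-- An injective continuous endomorphism of a finite-dimensional space is an equivalence. -/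
lemma aux_inj_equiv {V : Type*} [NormedAddCommGroup V] [NormedSpace ℝ V]
    [FiniteDimensional ℝ V] (T : V →L[ℝ] V) (h : ∀ v, T v = 0 → v = 0) :
    ∃ e : V ≃L[ℝ] V, (e : V →L[ℝ] V) = T := by
  have hinj : Function.Injective T := by
    intro a b hab
    have h0 : T (a - b) = 0 := by rw [map_sub, hab, sub_self]
    exact sub_eq_zero.mp (h _ h0)
  have hinj' : Function.Injective (T : V →ₗ[ℝ] V) := hinj
  have hsurj : Function.Surjective (T : V →ₗ[ℝ] V) :=
    LinearMap.injective_iff_surjective.mp hinj'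
  refine ⟨(LinearEquiv.ofBijective (T : V →ₗ[ℝ] V) ⟨hinj', hsurj⟩).toContinuousLinearEquiv, ?_⟩
  exact ContinuousLinearMap.ext fun v => rfl

/-- if f is C², then for every λ > 2 l_{f,1}/μ_g the map y*_λ is
differentiable, the operator (1/λ)∇²_{yy} f + ∇²_{yy} g at (x, y*_λ(x)) is invertible
(it is ⪰ (μ_g/2)·Id), and
D y*_λ(x) = −((1/λ)∇²_{yy} f + ∇²_{yy} g)⁻¹ ∘ ((1/λ)∇²_{xy} f + ∇²_{xy} g). -/
theorem lagrangian_minimizer_derivative_formula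
    {E H : Type*}
    [NormedAddCommGroup E] [InnerProductSpace ℝ E] [FiniteDimensional ℝ E]
    [NormedAddCommGroup H] [InnerProductSpace ℝ H] [FiniteDimensional ℝ H]
    (f g : E → H → ℝ) (lf1 lg1 μg : ℝ)
    (hf2 : ContDiff ℝ 2 (Function.uncurry f))
    (hf_lip : ∀ p q : E × H,
      ‖fderiv ℝ (Function.uncurry f) p - fderiv ℝ (Function.uncurry f) q‖ ≤ lf1 * ‖p - q‖)
    (hg2 : ContDiff ℝ 2 (Function.uncurry g))
    (hg_lip : ∀ p q : E × H,
      ‖fderiv ℝ (Function.uncurry g) p - fderiv ℝ (Function.uncurry g) q‖ ≤ lg1 * ‖p - q‖)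
    (hμg : 0 < μg)
    (hgsc : ∀ x, StrongConvexOn Set.univ μg (g x))
    (ystar : E → H)
    (hystar : ∀ x, IsMinOn (g x) Set.univ (ystar x))
    (hystar_uniq : ∀ x y, IsMinOn (g x) Set.univ y → y = ystar x)
    (ylam : ℝ → E → H)
    (hylam : ∀ lam x, 2 * lf1 / μg ≤ lam →
      IsMinOn (fun y => f x y + lam * (g x y - g x (ystar x))) Set.univ (ylam lam x))
    (hylam_uniq : ∀ lam x y, 2 * lf1 / μg ≤ lam →
      IsMinOn (fun y => f x y + lam * (g x y - g x (ystar x))) Set.univ y → y = ylam lam x)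
    (lam : ℝ) (hlam : 2 * lf1 / μg < lam) :
    Differentiable ℝ (ylam lam) ∧
      ∀ x : E, ∃ e : H ≃L[ℝ] H,
        (e : H →L[ℝ] H)
            = (1 / lam) • fderiv ℝ (gradient (f x)) (ylam lam x)
                + fderiv ℝ (gradient (g x)) (ylam lam x) ∧
        (∀ v : H,
          μg / 2 * ‖v‖ ^ 2
            ≤ ⟪((1 / lam) • fderiv ℝ (gradient (f x)) (ylam lam x)
                  + fderiv ℝ (gradient (g x)) (ylam lam x)) v, v⟫) ∧
        fderiv ℝ (ylam lam) x
          = -((e.symm : H →L[ℝ] H).comp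
              ((1 / lam) • fderiv ℝ (fun x' => gradient (f x') (ylam lam x)) x
                + fderiv ℝ (fun x' => gradient (g x') (ylam lam x)) x)) := by
  rcases subsingleton_or_nontrivial H with hH | hH
  · -- trivial case: H is a subsingleton
    haveI : Subsingleton (H →L[ℝ] H) :=
      ⟨fun a b => ContinuousLinearMap.ext fun v => Subsingleton.elim _ _⟩
    haveI : Subsingleton (E →L[ℝ] H) :=
      ⟨fun a b => ContinuousLinearMap.ext fun v => Subsingleton.elim _ _⟩
    constructor
    · have hconst : ylam lam = fun _ : E => (0 : H) := funext fun x => Subsingleton.elim _ _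
      rw [hconst]; exact differentiable_const 0
    · intro x
      refine ⟨ContinuousLinearEquiv.refl ℝ H, Subsingleton.elim _ _, ?_, Subsingleton.elim _ _⟩
      intro v
      have hv : v = 0 := Subsingleton.elim _ _
      simp [hv]
  -- main case
  have hlf1 : 0 ≤ lf1 := by
    obtain ⟨v₀, hv₀⟩ := exists_ne (0 : H)
    have h := hf_lip ((0 : E), v₀) 0
    have hn : (0:ℝ) < ‖((0 : E), v₀)‖ := by
      rw [norm_pos_iff]
      simp [Prod.ext_iff, hv₀]
    have h0 : (0:ℝ) ≤ lf1 * ‖((0 : E), v₀) - 0‖ := le_trans (ContinuousLinearMap.opNorm_nonneg _) h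
    rw [sub_zero] at h0
    nlinarith [h0, hn]
  have hlam0 : 0 < lam := lt_of_le_of_lt (by positivity) hlam
  have hlamkey : 2 * lf1 < lam * μg := by
    have := (div_lt_iff₀ hμg).mp hlam
    linarith [this]
  have hlf1lam : lf1 / lam ≤ μg / 2 := by
    rw [div_le_div_iff₀ hlam0 two_pos]; nlinarith
  set F := Function.uncurry f with hFdef
  set G := Function.uncurry g with hGdef
  have hFd : Differentiable ℝ F := hf2.differentiable (by norm_num)
  have hGd : Differentiable ℝ G := hg2.differentiable (by norm_num)
  have hfpart : ∀ x y, HasFDerivAt (f x) ((fderiv ℝ F (x, y)).comp (inr ℝ E H)) y :=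
    fun x y => (hFd (x, y)).hasFDerivAt.comp y (hasFDerivAt_prodMk_right x y)
  have hgpart : ∀ x y, HasFDerivAt (g x) ((fderiv ℝ G (x, y)).comp (inr ℝ E H)) y :=
    fun x y => (hGd (x, y)).hasFDerivAt.comp y (hasFDerivAt_prodMk_right x y)
  set Gf : E × H → H := fun p => (toDual ℝ H).symm ((fderiv ℝ F p).comp (inr ℝ E H)) with hGfdef
  set Gg : E × H → H := fun p => (toDual ℝ H).symm ((fderiv ℝ G p).comp (inr ℝ E H)) with hGgdef
  have hGf_eq : ∀ x y, Gf (x, y) = gradient (f x) y := by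
    intro x y
    have h1 : gradient (f x) y = (toDual ℝ H).symm (fderiv ℝ (f x) y) := rfl
    rw [h1, (hfpart x y).fderiv]
  have hGg_eq : ∀ x y, Gg (x, y) = gradient (g x) y := by
    intro x y
    have h1 : gradient (g x) y = (toDual ℝ H).symm (fderiv ℝ (g x) y) := rfl
    rw [h1, (hgpart x y).fderiv]
  -- smoothness of the gradient maps
  have hprecomp : ContDiff ℝ 1 (fun A : (E × H) →L[ℝ] ℝ => A.comp (inr ℝ E H)) :=
    ((compL ℝ H (E × H) ℝ).flip (inr ℝ E H)).contDiff
  have hGfc : ContDiff ℝ 1 Gf := by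
    have h1 : ContDiff ℝ 1 (fderiv ℝ F) := hf2.fderiv_right (by norm_num)
    exact ((toDual ℝ H).symm.toContinuousLinearEquiv.contDiff).comp (hprecomp.comp h1)
  have hGgc : ContDiff ℝ 1 Gg := by
    have h1 : ContDiff ℝ 1 (fderiv ℝ G) := hg2.fderiv_right (by norm_num)
    exact ((toDual ℝ H).symm.toContinuousLinearEquiv.contDiff).comp (hprecomp.comp h1)
  have hGfd : Differentiable ℝ Gf := hGfc.differentiable one_ne_zero
  have hGgd : Differentiable ℝ Gg := hGgc.differentiable one_ne_zero
  set Φ : E × H → H := fun p => (1 / lam) • Gf p + Gg p with hΦdef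
  have hΦc : ContDiff ℝ 1 Φ := (contDiff_const.smul hGfc).add hGgc
  have hΦd : Differentiable ℝ Φ := hΦc.differentiable one_ne_zero
  have hDΦ : ∀ p, fderiv ℝ Φ p = (1 / lam) • fderiv ℝ Gf p + fderiv ℝ Gg p := fun p =>
    (((hGfd p).hasFDerivAt.const_smul (1 / lam)).add (hGgd p).hasFDerivAt).fderiv
  -- partial derivatives of the gradient maps
  have hGf_part : ∀ x y, HasFDerivAt (fun y' => Gf (x, y'))
      ((fderiv ℝ Gf (x, y)).comp (inr ℝ E H)) y :=
    fun x y => (hGfd (x, y)).hasFDerivAt.comp y (hasFDerivAt_prodMk_right x y)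
  have hGg_part : ∀ x y, HasFDerivAt (fun y' => Gg (x, y'))
      ((fderiv ℝ Gg (x, y)).comp (inr ℝ E H)) y :=
    fun x y => (hGgd (x, y)).hasFDerivAt.comp y (hasFDerivAt_prodMk_right x y)
  have hgradf_eq : ∀ x, gradient (f x) = fun y => Gf (x, y) :=
    fun x => funext fun y => (hGf_eq x y).symm
  have hgradg_eq : ∀ x, gradient (g x) = fun y => Gg (x, y) :=
    fun x => funext fun y => (hGg_eq x y).symm
  have hHf : ∀ x y, fderiv ℝ (gradient (f x)) y = (fderiv ℝ Gf (x, y)).comp (inr ℝ E H) := by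
    intro x y; rw [hgradf_eq x]; exact (hGf_part x y).fderiv
  have hHg : ∀ x y, fderiv ℝ (gradient (g x)) y = (fderiv ℝ Gg (x, y)).comp (inr ℝ E H) := by
    intro x y; rw [hgradg_eq x]; exact (hGg_part x y).fderiv
  have hGf_partx : ∀ x y, HasFDerivAt (fun x' => Gf (x', y))
      ((fderiv ℝ Gf (x, y)).comp (inl ℝ E H)) x :=
    fun x y => (hGfd (x, y)).hasFDerivAt.comp (f := fun x' : E => (x', y)) x (hasFDerivAt_prodMk_left (𝕜 := ℝ) x y)
  have hGg_partx : ∀ x y, HasFDerivAt (fun x' => Gg (x', y))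
      ((fderiv ℝ Gg (x, y)).comp (inl ℝ E H)) x :=
    fun x y => (hGgd (x, y)).hasFDerivAt.comp (f := fun x' : E => (x', y)) x (hasFDerivAt_prodMk_left (𝕜 := ℝ) x y)
  have hBf : ∀ x y, fderiv ℝ (fun x' => gradient (f x') y) x
      = (fderiv ℝ Gf (x, y)).comp (inl ℝ E H) := by
    intro x y
    have h1 : (fun x' => gradient (f x') y) = fun x' => Gf (x', y) :=
      funext fun x' => (hGf_eq x' y).symm
    rw [h1]; exact (hGf_partx x y).fderiv
  have hBg : ∀ x y, fderiv ℝ (fun x' => gradient (g x') y) x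
      = (fderiv ℝ Gg (x, y)).comp (inl ℝ E H) := by
    intro x y
    have h1 : (fun x' => gradient (g x') y) = fun x' => Gg (x', y) :=
      funext fun x' => (hGg_eq x' y).symm
    rw [h1]; exact (hGg_partx x y).fderiv
  have hA_eq : ∀ x y, (fderiv ℝ Φ (x, y)).comp (inr ℝ E H)
      = (1 / lam) • fderiv ℝ (gradient (f x)) y + fderiv ℝ (gradient (g x)) y := by
    intro x y
    rw [hDΦ, ContinuousLinearMap.add_comp, ContinuousLinearMap.smul_comp, hHf, hHg]
  have hB_eq : ∀ x y, (fderiv ℝ Φ (x, y)).comp (inl ℝ E H)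
      = (1 / lam) • fderiv ℝ (fun x' => gradient (f x') y) x
        + fderiv ℝ (fun x' => gradient (g x') y) x := by
    intro x y
    rw [hDΦ, ContinuousLinearMap.add_comp, ContinuousLinearMap.smul_comp, hBf, hBg]
  -- bound on the Hessian of f
  have hHf_norm : ∀ x y, ‖fderiv ℝ (gradient (f x)) y‖ ≤ lf1 := by
    intro x y
    refine norm_fderiv_le_of_lip' ℝ hlf1 ?_
    refine Filter.Eventually.of_forall fun y' => ?_
    have e1 : gradient (f x) y' = (toDual ℝ H).symm (fderiv ℝ (f x) y') := rfl
    have e2 : gradient (f x) y = (toDual ℝ H).symm (fderiv ℝ (f x) y) := rfl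
    rw [e1, e2, ← map_sub, LinearIsometryEquiv.norm_map,
      (hfpart x y').fderiv, (hfpart x y).fderiv, ← ContinuousLinearMap.sub_comp]
    have hb : ∀ v : H, ‖((fderiv ℝ F (x, y') - fderiv ℝ F (x, y)).comp (inr ℝ E H)) v‖
        ≤ (lf1 * ‖y' - y‖) * ‖v‖ := by
      intro v
      have hval : ((fderiv ℝ F (x, y') - fderiv ℝ F (x, y)).comp (inr ℝ E H)) v
          = (fderiv ℝ F (x, y') - fderiv ℝ F (x, y)) (((0 : E), v)) := rfl
      rw [hval]
      have h3 : ‖(((0 : E), v) : E × H)‖ = ‖v‖ := by simp [Prod.norm_def]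
      calc ‖(fderiv ℝ F (x, y') - fderiv ℝ F (x, y)) (((0 : E), v))‖
          ≤ ‖fderiv ℝ F (x, y') - fderiv ℝ F (x, y)‖ * ‖(((0 : E), v) : E × H)‖ :=
            le_opNorm _ _
        _ ≤ (lf1 * ‖((x, y') - (x, y) : E × H)‖) * ‖(((0 : E), v) : E × H)‖ :=
            mul_le_mul_of_nonneg_right (hf_lip _ _) (norm_nonneg _)
        _ = (lf1 * ‖y' - y‖) * ‖v‖ := by
            have h1 : ((x, y') - (x, y) : E × H) = ((0 : E), y' - y) := by
              simp [Prod.ext_iff]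
            have h2 : ‖(((0 : E), y' - y) : E × H)‖ = ‖y' - y‖ := by simp [Prod.norm_def]
            rw [h1, h2, h3]
    exact ContinuousLinearMap.opNorm_le_bound _ (by positivity) hb
  -- coercivity of the Hessian of g
  have hgxdiff : ∀ x, Differentiable ℝ (g x) := fun x y => (hgpart x y).differentiableAt
  have hgradg_diff : ∀ x, Differentiable ℝ (gradient (g x)) := by
    intro x
    rw [hgradg_eq x]
    exact fun y => (hGg_part x y).differentiableAt
  have hHg_coer : ∀ x y (v : H), μg * ‖v‖ ^ 2 ≤ ⟪fderiv ℝ (gradient (g x)) y v, v⟫ := by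
    intro x y v
    refine aux_coercive_of_strong_mono (gradient (g x)) y (hgradg_diff x y) μg ?_ v
    intro z w
    exact aux_strongconvex_grad_mono (g x) μg (hgsc x) (hgxdiff x) z w
  -- coercivity of the operator
  have hcoer : ∀ x y (v : H), μg / 2 * ‖v‖ ^ 2
      ≤ ⟪((1 / lam) • fderiv ℝ (gradient (f x)) y + fderiv ℝ (gradient (g x)) y) v, v⟫ := by
    intro x y v
    have h1 : |⟪fderiv ℝ (gradient (f x)) y v, v⟫| ≤ lf1 * ‖v‖ ^ 2 := by
      calc |⟪fderiv ℝ (gradient (f x)) y v, v⟫|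
          ≤ ‖fderiv ℝ (gradient (f x)) y v‖ * ‖v‖ := abs_real_inner_le_norm _ _
        _ ≤ (lf1 * ‖v‖) * ‖v‖ := by
            refine mul_le_mul_of_nonneg_right ?_ (norm_nonneg _)
            exact le_trans ((fderiv ℝ (gradient (f x)) y).le_opNorm v)
              (mul_le_mul_of_nonneg_right (hHf_norm x y) (norm_nonneg v))
        _ = lf1 * ‖v‖ ^ 2 := by ring
    have h2 := hHg_coer x y v
    have happ : ((1 / lam) • fderiv ℝ (gradient (f x)) y + fderiv ℝ (gradient (g x)) y) v
        = (1 / lam) • (fderiv ℝ (gradient (f x)) y v) + fderiv ℝ (gradient (g x)) y v := rfl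
    rw [happ, inner_add_left, real_inner_smul_left]
    have habs := abs_le.mp h1
    have hv2 : (0:ℝ) ≤ ‖v‖ ^ 2 := sq_nonneg _
    have hpos : (0:ℝ) < 1 / lam := by positivity
    have hstep : -(lf1 / lam) * ‖v‖ ^ 2 ≤ (1 / lam) * ⟪fderiv ℝ (gradient (f x)) y v, v⟫ := by
      have := habs.1
      rw [neg_mul, neg_le]
      calc -((1 / lam) * ⟪fderiv ℝ (gradient (f x)) y v, v⟫)
          = (1 / lam) * (-⟪fderiv ℝ (gradient (f x)) y v, v⟫) := by ring
        _ ≤ (1 / lam) * (lf1 * ‖v‖ ^ 2) := by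
            refine mul_le_mul_of_nonneg_left ?_ hpos.le
            linarith [habs.1]
        _ = lf1 / lam * ‖v‖ ^ 2 := by ring
    nlinarith [h2, hstep, mul_le_mul_of_nonneg_right hlf1lam hv2]
  -- the zero identity
  have hΦ0 : ∀ x, Φ (x, ylam lam x) = 0 := by
    intro x
    have hmin := hylam lam x hlam.le
    have hloc : IsLocalMin (fun y => f x y + lam * (g x y - g x (ystar x))) (ylam lam x) :=
      hmin.isLocalMin Filter.univ_mem
    have hzero := hloc.fderiv_eq_zero
    set y := ylam lam x with hy
    have h1 : HasFDerivAt (fun y' => f x y' + lam * (g x y' - g x (ystar x)))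
        (((fderiv ℝ F (x, y)).comp (inr ℝ E H))
          + lam • ((fderiv ℝ G (x, y)).comp (inr ℝ E H))) y :=
      (hfpart x y).add (((hgpart x y).sub_const _).const_mul lam)
    have h2 : ((fderiv ℝ F (x, y)).comp (inr ℝ E H))
        + lam • ((fderiv ℝ G (x, y)).comp (inr ℝ E H)) = 0 := by
      rw [← h1.fderiv]; exact hzero
    have h5 : (1 / lam) • (((fderiv ℝ F (x, y)).comp (inr ℝ E H))
          + lam • ((fderiv ℝ G (x, y)).comp (inr ℝ E H)))
        = (1 / lam) • ((fderiv ℝ F (x, y)).comp (inr ℝ E H))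
          + ((fderiv ℝ G (x, y)).comp (inr ℝ E H)) := by
      rw [smul_add, smul_smul, one_div_mul_cancel (ne_of_gt hlam0), one_smul]
    have h6 : (1 / lam) • ((fderiv ℝ F (x, y)).comp (inr ℝ E H))
          + ((fderiv ℝ G (x, y)).comp (inr ℝ E H)) = 0 := by
      rw [← h5, h2, smul_zero]
    show (1 / lam) • Gf (x, y) + Gg (x, y) = 0
    have hv : ∀ w : H, ⟪(1 / lam) • Gf (x, y) + Gg (x, y), w⟫ = 0 := by
      intro w
      rw [inner_add_left, real_inner_smul_left]
      have e8 : ⟪Gf (x, y), w⟫ = ((fderiv ℝ F (x, y)).comp (inr ℝ E H)) w := toDual_symm_apply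
      have e9 : ⟪Gg (x, y), w⟫ = ((fderiv ℝ G (x, y)).comp (inr ℝ E H)) w := toDual_symm_apply
      rw [e8, e9]
      have h10 := ContinuousLinearMap.ext_iff.mp h6 w
      simpa using h10
    exact inner_self_eq_zero.mp (hv _)
  -- strong monotonicity in y and uniqueness of zeros
  have hΦpart : ∀ x y, HasFDerivAt (fun y' => Φ (x, y'))
      ((fderiv ℝ Φ (x, y)).comp (inr ℝ E H)) y :=
    fun x y => (hΦd (x, y)).hasFDerivAt.comp y (hasFDerivAt_prodMk_right x y)
  have hmono : ∀ x y z, μg / 2 * ‖y - z‖ ^ 2 ≤ ⟪Φ (x, y) - Φ (x, z), y - z⟫ := by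
    intro x y z
    refine aux_strong_mono_of_coercive (fun y' => Φ (x, y'))
      (fun y' => (hΦpart x y').differentiableAt) (μg / 2) ?_ y z
    intro y' v
    rw [(hΦpart x y').fderiv, hA_eq]
    exact hcoer x y' v
  have huniq0 : ∀ x y z, Φ (x, y) = 0 → Φ (x, z) = 0 → y = z := by
    intro x y z hy hz
    have h := hmono x y z
    rw [hy, hz, sub_zero, inner_zero_left] at h
    have h1 : ‖y - z‖ ^ 2 ≤ 0 := by nlinarith
    have h2 : ‖y - z‖ ^ 2 = 0 := le_antisymm h1 (sq_nonneg _)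
    exact sub_eq_zero.mp (norm_eq_zero.mp (pow_eq_zero_iff (by norm_num : (2:ℕ) ≠ 0) |>.mp h2))
  -- the key pointwise construction
  have key : ∀ x₀ : E, DifferentiableAt ℝ (ylam lam) x₀ ∧ ∃ e : H ≃L[ℝ] H,
      (e : H →L[ℝ] H)
          = (1 / lam) • fderiv ℝ (gradient (f x₀)) (ylam lam x₀)
              + fderiv ℝ (gradient (g x₀)) (ylam lam x₀) ∧
      (∀ v : H,
        μg / 2 * ‖v‖ ^ 2
          ≤ ⟪((1 / lam) • fderiv ℝ (gradient (f x₀)) (ylam lam x₀)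
                + fderiv ℝ (gradient (g x₀)) (ylam lam x₀)) v, v⟫) ∧
      fderiv ℝ (ylam lam) x₀
        = -((e.symm : H →L[ℝ] H).comp
            ((1 / lam) • fderiv ℝ (fun x' => gradient (f x') (ylam lam x₀)) x₀
              + fderiv ℝ (fun x' => gradient (g x') (ylam lam x₀)) x₀)) := by
    intro x₀
    have hAzero : ∀ v : H, ((fderiv ℝ Φ (x₀, ylam lam x₀)).comp (inr ℝ E H)) v = 0 → v = 0 := by
      intro v hv
      have h := hcoer x₀ (ylam lam x₀) v
      rw [← hA_eq x₀ (ylam lam x₀)] at h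
      rw [hv, inner_zero_left] at h
      have hb : ‖v‖ ^ 2 ≤ 0 := by nlinarith
      have hb2 : ‖v‖ ^ 2 = 0 := le_antisymm hb (sq_nonneg _)
      exact norm_eq_zero.mp (pow_eq_zero_iff (by norm_num : (2:ℕ) ≠ 0) |>.mp hb2)
    obtain ⟨e, he⟩ := aux_inj_equiv ((fderiv ℝ Φ (x₀, ylam lam x₀)).comp (inr ℝ E H)) hAzero
    -- the local inverse construction
    set T₀ : (E × H) →L[ℝ] (E × H) :=
      (ContinuousLinearMap.fst ℝ E H).prod (fderiv ℝ Φ (x₀, ylam lam x₀)) with hT₀def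
    have hT₀inj : ∀ w : E × H, T₀ w = 0 → w = 0 := by
      intro w hw
      have h1 : w.1 = 0 := congrArg Prod.fst hw
      have h2 : fderiv ℝ Φ (x₀, ylam lam x₀) w = 0 := congrArg Prod.snd hw
      have h3 : w = ((0 : E), w.2) := Prod.ext h1 rfl
      rw [h3] at h2
      have h4 : ((fderiv ℝ Φ (x₀, ylam lam x₀)).comp (inr ℝ E H)) w.2 = 0 := h2
      have h5 : w.2 = 0 := hAzero _ h4
      rw [h3, h5]; rfl
    obtain ⟨T, hT⟩ := aux_inj_equiv T₀ hT₀inj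
    set Ψ : E × H → E × H := fun p => (p.1, Φ p) with hΨdef
    have hΨstrict : HasStrictFDerivAt Ψ (T : (E × H) →L[ℝ] (E × H)) (x₀, ylam lam x₀) := by
      rw [hT]
      exact (hasStrictFDerivAt_fst).prodMk ((hΦc.contDiffAt).hasStrictFDerivAt one_ne_zero)
    have hΨp₀ : Ψ (x₀, ylam lam x₀) = (x₀, (0 : H)) := by
      show ((x₀, ylam lam x₀).1, Φ (x₀, ylam lam x₀)) = (x₀, (0 : H))
      rw [hΦ0 x₀]
    set ψ := hΨstrict.localInverse Ψ T (x₀, ylam lam x₀) with hψdef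
    have hrinv : ∀ᶠ q in 𝓝 (Ψ (x₀, ylam lam x₀)), Ψ (ψ q) = q :=
      hΨstrict.eventually_right_inverse
    have hcont : Tendsto (fun x : E => (x, (0 : H))) (𝓝 x₀) (𝓝 (Ψ (x₀, ylam lam x₀))) := by
      rw [hΨp₀]
      exact (continuous_id.prodMk continuous_const).tendsto x₀
    have hev : ∀ᶠ x in 𝓝 x₀, Ψ (ψ (x, (0 : H))) = (x, (0 : H)) := hcont.eventually hrinv
    have hev2 : ylam lam =ᶠ[𝓝 x₀] fun x => (ψ (x, (0 : H))).2 := by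
      filter_upwards [hev] with x hx
      have h1 : (ψ (x, (0 : H))).1 = x := congrArg Prod.fst hx
      have h2 : Φ (ψ (x, (0 : H))) = 0 := congrArg Prod.snd hx
      have h3 : Φ (x, (ψ (x, (0 : H))).2) = 0 := by
        have h4 : ψ (x, (0 : H)) = (x, (ψ (x, (0 : H))).2) := Prod.ext h1 rfl
        rw [← h4]; exact h2
      exact huniq0 x (ylam lam x) _ (hΦ0 x) h3
    have hψdiff : DifferentiableAt ℝ ψ ((x₀, (0 : H))) := by
      have := hΨstrict.to_localInverse.differentiableAt
      rwa [hΨp₀] at this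
    have hyhat : DifferentiableAt ℝ (fun x => (ψ (x, (0 : H))).2) x₀ := by
      have hj : DifferentiableAt ℝ (fun x : E => (x, (0 : H))) x₀ :=
        differentiableAt_id.prodMk (differentiableAt_const _)
      exact (differentiableAt_snd.comp _ (hψdiff.comp x₀ hj))
    have hylam_diff : DifferentiableAt ℝ (ylam lam) x₀ := hyhat.congr_of_eventuallyEq hev2
    refine ⟨hylam_diff, e, ?_, fun v => hcoer x₀ (ylam lam x₀) v, ?_⟩
    · rw [he, hA_eq]
    · -- the derivative formula
      have hcomp : HasFDerivAt (fun x => Φ (x, ylam lam x))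
          ((fderiv ℝ Φ (x₀, ylam lam x₀)).comp
            ((ContinuousLinearMap.id ℝ E).prod (fderiv ℝ (ylam lam) x₀))) x₀ :=
        (hΦd (x₀, ylam lam x₀)).hasFDerivAt.comp (f := fun x => (id x, ylam lam x)) x₀
          ((hasFDerivAt_id x₀).prodMk hylam_diff.hasFDerivAt)
      have hzero : (fun x => Φ (x, ylam lam x)) = fun _ => (0 : H) :=
        funext fun x => hΦ0 x
      rw [hzero] at hcomp
      have hD0 : ((fderiv ℝ Φ (x₀, ylam lam x₀)).comp
          ((ContinuousLinearMap.id ℝ E).prod (fderiv ℝ (ylam lam) x₀))) = 0 :=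
        hcomp.unique (hasFDerivAt_const 0 x₀)
      rw [← hB_eq x₀ (ylam lam x₀)]
      refine ContinuousLinearMap.ext fun u => ?_
      have h5 : fderiv ℝ Φ (x₀, ylam lam x₀) (u, fderiv ℝ (ylam lam) x₀ u) = 0 := by
        have := ContinuousLinearMap.ext_iff.mp hD0 u
        simpa using this
      have hsplit : ((u, fderiv ℝ (ylam lam) x₀ u) : E × H)
          = ((u, (0 : H)) : E × H) + (((0 : E), fderiv ℝ (ylam lam) x₀ u) : E × H) := by
        simp [Prod.ext_iff]
      have h6 : ((fderiv ℝ Φ (x₀, ylam lam x₀)).comp (inr ℝ E H)) (fderiv ℝ (ylam lam) x₀ u)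
          = -(((fderiv ℝ Φ (x₀, ylam lam x₀)).comp (inl ℝ E H)) u) := by
        have h7 : fderiv ℝ Φ (x₀, ylam lam x₀) ((u, (0 : H)) : E × H)
            + fderiv ℝ Φ (x₀, ylam lam x₀) (((0 : E), fderiv ℝ (ylam lam) x₀ u) : E × H)
            = 0 := by
          rw [← map_add, ← hsplit]; exact h5
        have h8 : ((fderiv ℝ Φ (x₀, ylam lam x₀)).comp (inl ℝ E H)) u
            = fderiv ℝ Φ (x₀, ylam lam x₀) ((u, (0 : H)) : E × H) := rfl
        have h9 : ((fderiv ℝ Φ (x₀, ylam lam x₀)).comp (inr ℝ E H)) (fderiv ℝ (ylam lam) x₀ u)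
            = fderiv ℝ Φ (x₀, ylam lam x₀) (((0 : E), fderiv ℝ (ylam lam) x₀ u) : E × H) := rfl
        rw [h8, h9]
        linear_combination (norm := abel) h7
      have h10 : fderiv ℝ (ylam lam) x₀ u
          = e.symm (((fderiv ℝ Φ (x₀, ylam lam x₀)).comp (inr ℝ E H))
              (fderiv ℝ (ylam lam) x₀ u)) := by
        rw [← he]
        exact (e.symm_apply_apply _).symm
      rw [ContinuousLinearMap.neg_apply, ContinuousLinearMap.comp_apply]
      rw [h10, h6, map_neg]
      rfl
  exact ⟨fun x₀ => (key x₀).1, fun x₀ => (key x₀).2⟩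
end

section
/- For every fixed x ∈ E, the penalized value function converges to the hyper-objective as the multiplier grows: lim_{λ → ∞} L*_λ(x) = F(x). -/
/-- for every fixed x, lim_{λ→∞} L*_λ(x) = F(x). -/
theorem penalized_value_converges
    {E H : Type*}
    [NormedAddCommGroup E] [InnerProductSpace ℝ E] [FiniteDimensional ℝ E]
    [NormedAddCommGroup H] [InnerProductSpace ℝ H] [FiniteDimensional ℝ H]
    (f g : E → H → ℝ) (lf0 lf1 lg1 lg2 μg : ℝ)
    -- (i) f is C¹ and its full gradient is l_{f,1}-Lipschitz
    (hf1 : ContDiff ℝ 1 (Function.uncurry f))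
    (hf_lip : ∀ p q : E × H,
      ‖fderiv ℝ (Function.uncurry f) p - fderiv ℝ (Function.uncurry f) q‖ ≤ lf1 * ‖p - q‖)
    -- (ii) ‖∇_y f(x,y)‖ ≤ l_{f,0}
    (hf0 : ∀ x y, ‖gradient (f x) y‖ ≤ lf0)
    -- (iii) g is C², full gradient l_{g,1}-Lipschitz, Hessian l_{g,2}-Lipschitz
    (hg2 : ContDiff ℝ 2 (Function.uncurry g))
    (hg_lip : ∀ p q : E × H,
      ‖fderiv ℝ (Function.uncurry g) p - fderiv ℝ (Function.uncurry g) q‖ ≤ lg1 * ‖p - q‖)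
    (hg_hess : ∀ p q : E × H,
      @norm _ (@ContinuousLinearMap.hasOpNorm ℝ ℝ (E × H) (E × H →L[ℝ] ℝ) _ _ _ _ _ _ (RingHom.id ℝ))
        (fderiv ℝ (fderiv ℝ (Function.uncurry g)) p
        - fderiv ℝ (fderiv ℝ (Function.uncurry g)) q) ≤ lg2 * ‖p - q‖)
    -- (iv) strong convexity of g(x,·) with unique minimizer y*(x)
    (hμg : 0 < μg)
    (hgsc : ∀ x, StrongConvexOn Set.univ μg (g x))
    (ystar : E → H)
    (hystar : ∀ x, IsMinOn (g x) Set.univ (ystar x))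
    (hystar_uniq : ∀ x y, IsMinOn (g x) Set.univ y → y = ystar x)
    -- y*_λ(x) : unique minimizer of the Lagrangian L_λ(x,·)
    (ylam : ℝ → E → H)
    (hylam : ∀ lam x, 2 * lf1 / μg ≤ lam →
      IsMinOn (fun y => f x y + lam * (g x y - g x (ystar x))) Set.univ (ylam lam x))
    (hylam_uniq : ∀ lam x y, 2 * lf1 / μg ≤ lam →
      IsMinOn (fun y => f x y + lam * (g x y - g x (ystar x))) Set.univ y → y = ylam lam x)
    (x : E) :
    Filter.Tendsto
      (fun lam => f x (ylam lam x) + lam * (g x (ylam lam x) - g x (ystar x)))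
      Filter.atTop (nhds (f x (ystar x))) := by
  set y0 := ystar x with hy0
  have hfx : ContDiff ℝ 1 (f x) := hf1.comp (ContDiff.prodMk (contDiff_const (c := x)) contDiff_id)
  have hlf0 : 0 ≤ lf0 := le_trans (norm_nonneg _) (hf0 x y0)
  have hflip : ∀ a b : H, f x a - f x b ≤ lf0 * ‖a - b‖ := by
    intro a b
    have hderiv : ∀ y ∈ (Set.univ : Set H), ‖fderiv ℝ (f x) y‖ ≤ lf0 := by
      intro y _
      have := hf0 x y
      rwa [gradient, (InnerProductSpace.toDual ℝ H).symm.norm_map] at this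
    have h := (convex_univ (𝕜 := ℝ) (E := H)).norm_image_sub_le_of_norm_fderiv_le
      (fun y _ => (hfx.differentiable one_ne_zero).differentiableAt) hderiv
      (Set.mem_univ b) (Set.mem_univ a)
    calc f x a - f x b ≤ ‖f x a - f x b‖ := le_abs_self _
    _ ≤ lf0 * ‖a - b‖ := h
  have hgrow : ∀ y : H, μg / 4 * ‖y - y0‖ ^ 2 ≤ g x y - g x y0 := by
    intro y
    have huc := (hgsc x).2 (Set.mem_univ y) (Set.mem_univ y0)
      (by norm_num : (0:ℝ) ≤ 1/2) (by norm_num : (0:ℝ) ≤ 1/2) (by norm_num)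
    have hmin := isMinOn_iff.mp (hystar x) ((1/2:ℝ) • y + (1/2:ℝ) • y0) (Set.mem_univ _)
    rw [← hy0] at hmin
    simp only [smul_eq_mul] at huc
    nlinarith [huc, hmin, sq_nonneg ‖y - y0‖]
  refine tendsto_of_tendsto_of_tendsto_of_le_of_le'
    (g := fun lam => f x y0 - 4 * lf0 ^ 2 / μg * lam⁻¹) (h := fun _ => f x y0)
    ?_ tendsto_const_nhds ?_ ?_
  · simpa using tendsto_const_nhds.sub
      ((tendsto_inv_atTop_zero (𝕜 := ℝ)).const_mul (4 * lf0 ^ 2 / μg))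
  · filter_upwards [Filter.eventually_ge_atTop (max 1 (2 * lf1 / μg))] with lam hlam
    have hlam1 : (1:ℝ) ≤ lam := le_trans (le_max_left _ _) hlam
    have hlampos : 0 < lam := lt_of_lt_of_le one_pos hlam1
    set d := ylam lam x with hd
    set n := ‖d - y0‖ with hn
    have hnn : 0 ≤ n := norm_nonneg _
    have hmin := isMinOn_iff.mp (hylam lam x (le_trans (le_max_right _ _) hlam)) y0
      (Set.mem_univ _)
    -- hmin : f x d + lam * (g x d - g x y0) ≤ f x y0 + lam * (g x y0 - g x y0)
    have hA : f x y0 - f x d ≤ lf0 * n := by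
      have := hflip y0 d
      rwa [norm_sub_rev] at this
    have hB : μg / 4 * n ^ 2 ≤ g x d - g x y0 := hgrow d
    have hs : (0:ℝ) < μg * lam := mul_pos hμg hlampos
    have hD : (μg * lam) * (4 * lf0 ^ 2 / (μg * lam)) = 4 * lf0 ^ 2 :=
      mul_div_cancel₀ _ (ne_of_gt hs)
    have hT : 4 * lf0 ^ 2 / μg * lam⁻¹ = 4 * lf0 ^ 2 / (μg * lam) := by
      field_simp
    rw [hT]
    nlinarith [sq_nonneg (μg * lam * n - 2 * lf0), hB, hA, hD, hs, hnn, hlf0,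
      mul_le_mul_of_nonneg_left hB (le_of_lt hlampos), sq_nonneg lf0,
      mul_le_mul_of_nonneg_left (mul_le_mul_of_nonneg_left hB (le_of_lt hlampos)) (le_of_lt hs)]
  · filter_upwards [Filter.eventually_ge_atTop (max 1 (2 * lf1 / μg))] with lam hlam
    have hmin := isMinOn_iff.mp (hylam lam x (le_trans (le_max_right _ _) hlam)) y0
      (Set.mem_univ _)
    rw [← hy0] at hmin
    simpa using hmin
end

section
/- Step-size/multiplier consistency in the RF²SA schedule: let a, c ∈ [0,1] with c ≤ a, let T ≥ 32, k₀ ≥ 1, μ_g > 0, c_α > 0, and c_γ := 1/(μ_g k₀^{1−c}). Define α_k := c_α (k + k₀)^{−a}, γ_k := c_γ (k + k₀)^{−c}, and λ_k := (c_γ/(2 c_α)) (k + k₀)^{a−c} for k ∈ ℕ. Then (1) for every k, λ_{k+1} − λ_k ≤ (T μ_g/16) α_k λ_k²; and consequently (2) if a sequence (μ-multipliers) is defined by Λ₀ := γ₀/(2α₀) and Λ_{k+1} := Λ_k + min( (T μ_g/16) α_k Λ_k², γ_{k+1}/(2 α_{k+1}) − Λ_k ), then Λ_k = γ_k/(2 α_k)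 for all k ∈ ℕ. -/
/-- α_k := c_α (k + k₀)^{−a}. -/
noncomputable def rfAlpha (cα a : ℝ) (k0 k : ℕ) : ℝ := cα * ((k + k0 : ℕ) : ℝ) ^ (-a)

/-- γ_k := c_γ (k + k₀)^{−c} with c_γ := 1/(μ_g k₀^{1−c}). -/
noncomputable def rfGamma (μg c : ℝ) (k0 k : ℕ) : ℝ :=
  (1 / (μg * (k0 : ℝ) ^ (1 - c))) * ((k + k0 : ℕ) : ℝ) ^ (-c)

/-- λ_k := (c_γ/(2c_α)) (k + k₀)^{a−c}. -/
noncomputable def rfLambda (μg cα a c : ℝ) (k0 k : ℕ) : ℝ :=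
  ((1 / (μg * (k0 : ℝ) ^ (1 - c))) / (2 * cα)) * ((k + k0 : ℕ) : ℝ) ^ (a - c)

open Real in
lemma rpow_succ_sub_le {x p : ℝ} (hx : 1 ≤ x) (hp0 : 0 ≤ p) (hp1 : p ≤ 1) :
    (x + 1) ^ p - x ^ p ≤ p * x ^ (p - 1) := by
  have hx0 : (0:ℝ) < x := lt_of_lt_of_le one_pos hx
  have h1 : x + 1 = x * (1 + 1/x) := by field_simp
  have hb : (-1:ℝ) ≤ 1/x := by
    have h : (0:ℝ) ≤ 1/x := by positivity
    linarith
  have h2 : (x + 1) ^ p ≤ x ^ p * (1 + p * (1/x)) := by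
    rw [h1, Real.mul_rpow hx0.le (by positivity)]
    exact mul_le_mul_of_nonneg_left
      (rpow_one_add_le_one_add_mul_self hb hp0 hp1)
      (Real.rpow_pos_of_pos hx0 p).le
  have h3 : x ^ p * (1/x) = x ^ (p - 1) := by
    rw [one_div, ← Real.rpow_neg_one x, ← Real.rpow_add hx0, sub_eq_add_neg]
  nlinarith [Real.rpow_pos_of_pos hx0 p]

/-- step-size/multiplier consistency in the RF²SA schedule:
(1) λ_{k+1} − λ_k ≤ (Tμ_g/16) α_k λ_k², and (2) the multiplier recursion
Λ₀ = γ₀/(2α₀), Λ_{k+1} = Λ_k + min((Tμ_g/16)α_kΛ_k², γ_{k+1}/(2α_{k+1}) − Λ_k)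
satisfies Λ_k = γ_k/(2α_k) for all k. -/
theorem rf2sa_schedule_consistency
    (a c : ℝ) (ha0 : 0 ≤ a) (ha1 : a ≤ 1) (hc0 : 0 ≤ c) (hc1 : c ≤ 1) (hca : c ≤ a)
    (T : ℝ) (hT : 32 ≤ T) (k0 : ℕ) (hk0 : 1 ≤ k0)
    (μg cα : ℝ) (hμg : 0 < μg) (hcα : 0 < cα) :
    (∀ k : ℕ,
      rfLambda μg cα a c k0 (k + 1) - rfLambda μg cα a c k0 k
        ≤ T * μg / 16 * rfAlpha cα a k0 k * (rfLambda μg cα a c k0 k) ^ 2) ∧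
    ∀ Λ : ℕ → ℝ,
      Λ 0 = rfGamma μg c k0 0 / (2 * rfAlpha cα a k0 0) →
      (∀ k : ℕ, Λ (k + 1) = Λ k +
        min (T * μg / 16 * rfAlpha cα a k0 k * (Λ k) ^ 2)
            (rfGamma μg c k0 (k + 1) / (2 * rfAlpha cα a k0 (k + 1)) - Λ k)) →
      ∀ k : ℕ, Λ k = rfGamma μg c k0 k / (2 * rfAlpha cα a k0 k) := by
  have hk0R : (1:ℝ) ≤ (k0:ℝ) := by exact_mod_cast hk0
  have hK0 : (0:ℝ) < (k0:ℝ) ^ (1-c) := Real.rpow_pos_of_pos (by linarith) _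
  have hC : (0:ℝ) < (1 / (μg * (k0 : ℝ) ^ (1 - c))) / (2 * cα) := by positivity
  have hpart1 : ∀ k : ℕ,
      rfLambda μg cα a c k0 (k + 1) - rfLambda μg cα a c k0 k
        ≤ T * μg / 16 * rfAlpha cα a k0 k * (rfLambda μg cα a c k0 k) ^ 2 := by
    intro k
    simp only [rfLambda, rfAlpha]
    have hxx : ((k+1+k0:ℕ):ℝ) = ((k+k0:ℕ):ℝ) + 1 := by push_cast; ring
    rw [hxx]
    set x : ℝ := ((k+k0:ℕ):ℝ) with hxdef
    set C : ℝ := (1 / (μg * (k0 : ℝ) ^ (1 - c))) / (2 * cα) with hCdef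
    have hx1 : (1:ℝ) ≤ x := by
      have h : 1 ≤ k + k0 := le_trans hk0 (Nat.le_add_left k0 k)
      rw [hxdef]; exact_mod_cast h
    have hx0 : (0:ℝ) < x := lt_of_lt_of_le one_pos hx1
    have hk0x : (k0:ℝ) ≤ x := by
      have h : k0 ≤ k + k0 := Nat.le_add_left k0 k
      rw [hxdef]; exact_mod_cast h
    have hxK : (k0:ℝ) ^ (1-c) ≤ x ^ (1-c) :=
      Real.rpow_le_rpow (by linarith) hk0x (by linarith)
    have hX : (0:ℝ) < x ^ (a - c - 1) := Real.rpow_pos_of_pos hx0 _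
    have key : (a - c) * x ^ (a - c - 1)
        ≤ T / (32 * (k0:ℝ) ^ (1-c)) * (x ^ (a - c - 1) * x ^ (1 - c)) := by
      rw [div_mul_eq_mul_div, le_div_iff₀ (by positivity)]
      have h2 : (32:ℝ) * ((k0:ℝ) ^ (1-c)) ≤ T * x ^ (1-c) := by nlinarith
      nlinarith [mul_le_mul_of_nonneg_right h2 hX.le,
        mul_nonneg (mul_nonneg (sub_nonneg.2 (by linarith : a - c ≤ 1)) hX.le) hK0.le]
    have hsplit : x ^ (a - c - 1) * x ^ (1 - c) = x ^ (a - 2*c) := by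
      rw [← Real.rpow_add hx0]; ring_nf
    have hpow : x ^ (-a) * (x ^ (a-c) * x ^ (a-c)) = x ^ (a - 2*c) := by
      rw [← Real.rpow_add hx0, ← Real.rpow_add hx0]; ring_nf
    calc C * (x + 1) ^ (a-c) - C * x ^ (a-c)
        = C * ((x + 1) ^ (a-c) - x ^ (a-c)) := by ring
      _ ≤ C * ((a - c) * x ^ (a - c - 1)) :=
          mul_le_mul_of_nonneg_left
            (rpow_succ_sub_le hx1 (by linarith) (by linarith)) hC.le
      _ ≤ C * (T / (32 * (k0:ℝ) ^ (1-c)) * (x ^ (a - c - 1) * x ^ (1 - c))) :=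
          mul_le_mul_of_nonneg_left key hC.le
      _ = C * (T / (32 * (k0:ℝ) ^ (1-c)) * x ^ (a - 2*c)) := by rw [hsplit]
      _ = T * μg / 16 * (cα * x ^ (-a)) * (C * x ^ (a-c)) ^ 2 := by
          have e : T * μg / 16 * (cα * x ^ (-a)) * (C * x ^ (a-c)) ^ 2
              = (T * μg * cα / 16) * C^2 * (x ^ (-a) * (x ^ (a-c) * x ^ (a-c))) := by
            ring
          rw [e, hpow, hCdef]
          field_simp
          ring
  have heq : ∀ k : ℕ, rfGamma μg c k0 k / (2 * rfAlpha cα a k0 k)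
      = rfLambda μg cα a c k0 k := by
    intro k
    simp only [rfGamma, rfAlpha, rfLambda]
    set x : ℝ := ((k+k0:ℕ):ℝ) with hxdef
    have hx0 : (0:ℝ) < x := by
      have h : 1 ≤ k + k0 := le_trans hk0 (Nat.le_add_left k0 k)
      have h2 : (1:ℝ) ≤ x := by rw [hxdef]; exact_mod_cast h
      linarith
    have hxa : x ^ (-a) ≠ 0 := (Real.rpow_pos_of_pos hx0 _).ne'
    rw [show a - c = -c - -a by ring, Real.rpow_sub hx0]
    field_simp
  refine ⟨hpart1, ?_⟩
  intro Λ h0 hrec k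
  induction k with
  | zero => exact h0
  | succ n ih =>
    rw [hrec n, ih, heq n, heq (n+1)]
    rw [min_eq_right (hpart1 n)]
    ring
end

section
/- One step of the noisy y-update of RF²SA contracts toward the Lagrangian minimizer: fix x ∈ E and λ ≥ 2 l_{f,1}/μ_g, let α > 0, β := λ α, and suppose α l_{f,1} + β l_{g,1} ≤ 1/4. Let y ∈ H, and let ζ_f, ζ_g be independent H-valued random vectors with mean zero and E[‖ζ_f‖²] ≤ σ_f², E[‖ζ_g‖²] ≤ σ_g². Then the update y⁺ := y − α ( ∇_y f(x,y) + ζ_f + λ ( ∇_y g(x,y) + ζ_g ) ) satisfies E[ ‖ y⁺ − y*_λ(x) ‖² ] ≤ (1 − 3 μ_g β / 4) ‖ y − y*_λ(x) ‖² + α² σ_f² + β² σ_g². -/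
open MeasureTheory Set Filter Topology
open scoped InnerProductSpace

section AuxGradient

variable {H : Type*} [NormedAddCommGroup H] [InnerProductSpace ℝ H] [CompleteSpace H]

private lemma aux_inner_grad (c u : H) :
    HasGradientAt (fun v => ⟪c, v⟫_ℝ) c u := by
  have h : HasFDerivAt (fun v : H => ⟪c, v⟫_ℝ) (InnerProductSpace.toDual ℝ H c) u :=
    (InnerProductSpace.toDual ℝ H c).hasFDerivAt
  simpa using h.hasGradientAt

private lemma aux_grad_add {F₁ F₂ : H → ℝ} {g₁ g₂ : H} {u : H}
    (h₁ : HasGradientAt F₁ g₁ u) (h₂ : HasGradientAt F₂ g₂ u) :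
    HasGradientAt (fun v => F₁ v + F₂ v) (g₁ + g₂) u := by
  have h := h₁.hasFDerivAt.add h₂.hasFDerivAt
  rw [← map_add] at h
  exact (by simpa using h.hasGradientAt : HasGradientAt (F₁ + F₂) (g₁ + g₂) u)

private lemma aux_grad_sub {F₁ F₂ : H → ℝ} {g₁ g₂ : H} {u : H}
    (h₁ : HasGradientAt F₁ g₁ u) (h₂ : HasGradientAt F₂ g₂ u) :
    HasGradientAt (fun v => F₁ v - F₂ v) (g₁ - g₂) u := by
  have h := h₁.hasFDerivAt.sub h₂.hasFDerivAt
  rw [← map_sub] at h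
  exact (by simpa using h.hasGradientAt : HasGradientAt (F₁ - F₂) (g₁ - g₂) u)

private lemma aux_grad_const_mul {F : H → ℝ} {g : H} {u : H} (c : ℝ)
    (h : HasGradientAt F g u) : HasGradientAt (fun v => c * F v) (c • g) u := by
  have h' := h.hasFDerivAt.const_mul c
  rw [← _root_.map_smul] at h'
  simpa using h'.hasGradientAt

private lemma aux_grad_normsq (u : H) :
    HasGradientAt (fun v : H => ‖v‖ ^ 2) ((2 : ℝ) • u) u := by
  rw [hasGradientAt_iff_isLittleO]
  have hlittle : (fun v : H => ‖v - u‖ * ‖v - u‖) =o[𝓝 u] fun v => v - u := by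
    have h1 : (fun v : H => ‖v - u‖) =o[𝓝 u] fun _ => (1 : ℝ) := by
      rw [Asymptotics.isLittleO_one_iff]
      have h : Tendsto (fun v : H => v - u) (𝓝 u) (𝓝 (u - u)) :=
        tendsto_id.sub tendsto_const_nhds
      simpa using h.norm
    have h2 : (fun v : H => ‖v - u‖) =O[𝓝 u] fun v : H => ‖v - u‖ :=
      Asymptotics.isBigO_refl _ _
    have h3 := h1.mul_isBigO h2
    have h4 : (fun v : H => ‖v - u‖ * ‖v - u‖) =o[𝓝 u] fun v : H => ‖v - u‖ := by
      simpa using h3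
    exact Asymptotics.isLittleO_norm_right.mp h4
  refine hlittle.congr' (Filter.Eventually.of_forall fun v => ?_) EventuallyEq.rfl
  show ‖v - u‖ * ‖v - u‖ = ‖v‖ ^ 2 - ‖u‖ ^ 2 - ⟪(2:ℝ) • u, v - u⟫_ℝ
  rw [real_inner_smul_left, inner_sub_right, real_inner_self_eq_norm_sq, real_inner_comm]
  have h1 := norm_sub_sq_real v u
  have h2 : ‖v - u‖ * ‖v - u‖ = ‖v - u‖ ^ 2 := (pow_two _).symm
  linarith

private lemma aux_line_deriv {F : H → ℝ} {G : H} {v d : H} {t : ℝ}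
    (h : HasGradientAt F G (v + t • d)) :
    HasDerivAt (fun r : ℝ => F (v + r • d)) ⟪G, d⟫_ℝ t := by
  have hline : HasDerivAt (fun r : ℝ => v + r • d) d t := by
    simpa using ((hasDerivAt_id t).smul_const d).const_add v
  have hcomp := h.hasFDerivAt.comp_hasDerivAt t hline
  simpa [InnerProductSpace.toDual_apply_apply, Function.comp_def] using hcomp

private lemma aux_first_order {F : H → ℝ} {G : H → H}
    (hdiff : ∀ u, HasGradientAt F (G u) u)
    (hmono : ∀ p q : H, 0 ≤ ⟪G p - G q, p - q⟫_ℝ) (v w : H) :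
    F v + ⟪G v, w - v⟫_ℝ ≤ F w := by
  set d := w - v with hd
  have hder : ∀ t : ℝ, HasDerivAt (fun r : ℝ => F (v + r • d) - r * ⟪G v, d⟫_ℝ)
      (⟪G (v + t • d), d⟫_ℝ - ⟪G v, d⟫_ℝ) t := fun t =>
    (aux_line_deriv (hdiff _)).sub (hasDerivAt_mul_const _)
  have hmon : MonotoneOn (fun r : ℝ => F (v + r • d) - r * ⟪G v, d⟫_ℝ) (Icc 0 1) := by
    refine monotoneOn_of_deriv_nonneg (convex_Icc 0 1)
      (fun t _ => ((hder t).continuousAt).continuousWithinAt)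
      (fun t _ => ((hder t).differentiableAt).differentiableWithinAt) ?_
    intro t ht
    rw [interior_Icc] at ht
    rw [(hder t).deriv]
    have h0 := hmono (v + t • d) v
    rw [add_sub_cancel_left, real_inner_smul_right] at h0
    have h1 : 0 ≤ ⟪G (v + t • d) - G v, d⟫_ℝ := (mul_nonneg_iff_of_pos_left ht.1).mp h0
    rw [inner_sub_left] at h1
    linarith
  have h01 := hmon (Set.left_mem_Icc.mpr zero_le_one) (Set.right_mem_Icc.mpr zero_le_one)
    zero_le_one
  simp only [zero_smul, add_zero, zero_mul, sub_zero, one_smul, one_mul] at h01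
  have hw : v + d = w := by rw [hd]; abel
  rw [hw] at h01
  linarith

private lemma aux_descent {F : H → ℝ} {G : H → H} {K : ℝ} (hK : 0 ≤ K)
    (hdiff : ∀ u, HasGradientAt F (G u) u)
    (hlip : ∀ p q : H, ‖G p - G q‖ ≤ K * ‖p - q‖) (v w : H) :
    F w ≤ F v + ⟪G v, w - v⟫_ℝ + K * ‖w - v‖ ^ 2 := by
  set d := w - v with hd
  have hder : ∀ t : ℝ, HasDerivAt
      (fun r : ℝ => r * (⟪G v, d⟫_ℝ + K * ‖d‖ ^ 2) - F (v + r • d))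
      ((⟪G v, d⟫_ℝ + K * ‖d‖ ^ 2) - ⟪G (v + t • d), d⟫_ℝ) t := fun t =>
    (hasDerivAt_mul_const _).sub (aux_line_deriv (hdiff _))
  have hmon : MonotoneOn (fun r : ℝ => r * (⟪G v, d⟫_ℝ + K * ‖d‖ ^ 2) - F (v + r • d))
      (Icc 0 1) := by
    refine monotoneOn_of_deriv_nonneg (convex_Icc 0 1)
      (fun t _ => ((hder t).continuousAt).continuousWithinAt)
      (fun t _ => ((hder t).differentiableAt).differentiableWithinAt) ?_
    intro t ht
    rw [interior_Icc] at ht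
    rw [(hder t).deriv]
    have hb := hlip (v + t • d) v
    rw [add_sub_cancel_left, norm_smul, Real.norm_eq_abs, abs_of_pos ht.1] at hb
    have hi := real_inner_le_norm (G (v + t • d) - G v) d
    rw [inner_sub_left] at hi
    have hdd : ‖d‖ ^ 2 = ‖d‖ * ‖d‖ := pow_two _
    have hnn : 0 ≤ (1 - t) * (K * (‖d‖ * ‖d‖)) :=
      mul_nonneg (by linarith [ht.2]) (mul_nonneg hK (mul_nonneg (norm_nonneg d) (norm_nonneg d)))
    nlinarith [mul_le_mul_of_nonneg_right hb (norm_nonneg d)]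
  have h01 := hmon (Set.left_mem_Icc.mpr zero_le_one) (Set.right_mem_Icc.mpr zero_le_one)
    zero_le_one
  simp only [zero_mul, zero_smul, add_zero, one_mul, one_smul, zero_sub] at h01
  have hw : v + d = w := by rw [hd]; abel
  rw [hw] at h01
  linarith

private lemma aux_coco {F : H → ℝ} {G : H → H} {K : ℝ} (hK : 0 ≤ K)
    (hdiff : ∀ u, HasGradientAt F (G u) u)
    (hmono : ∀ p q : H, 0 ≤ ⟪G p - G q, p - q⟫_ℝ)
    (hlip : ∀ p q : H, ‖G p - G q‖ ≤ K * ‖p - q‖) (v w : H) :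
    ‖G w - G v‖ ^ 2 ≤ 2 * K * ⟪G w - G v, w - v⟫_ℝ := by
  rcases hK.eq_or_lt with hK0 | hKpos
  · have h0 : ‖G w - G v‖ ≤ 0 := by simpa [← hK0] using hlip w v
    have h1 : G w - G v = 0 := norm_le_zero_iff.mp h0
    simp [h1]
  · have hKne : K ≠ 0 := ne_of_gt hKpos
    have key : ∀ a b : H, 1 / (4 * K) * ‖G b - G a‖ ^ 2 ≤ F b - F a - ⟪G a, b - a⟫_ℝ := by
      intro a b
      have hdiff' : ∀ u, HasGradientAt (fun v => F v - ⟪G a, v⟫_ℝ) (G u - G a) u := fun u =>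
        aux_grad_sub (hdiff u) (aux_inner_grad (G a) u)
      have hmono' : ∀ p q : H, 0 ≤ ⟪(G p - G a) - (G q - G a), p - q⟫_ℝ := fun p q => by
        rw [sub_sub_sub_cancel_right]; exact hmono p q
      have hlip' : ∀ p q : H, ‖(G p - G a) - (G q - G a)‖ ≤ K * ‖p - q‖ := fun p q => by
        rw [sub_sub_sub_cancel_right]; exact hlip p q
      have h1 : (F a - ⟪G a, a⟫_ℝ) + ⟪G a - G a, (b - (1 / (2 * K)) • (G b - G a)) - a⟫_ℝ
          ≤ F (b - (1 / (2 * K)) • (G b - G a))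
            - ⟪G a, b - (1 / (2 * K)) • (G b - G a)⟫_ℝ :=
        aux_first_order hdiff' hmono' a (b - (1 / (2 * K)) • (G b - G a))
      have h2 : F (b - (1 / (2 * K)) • (G b - G a))
            - ⟪G a, b - (1 / (2 * K)) • (G b - G a)⟫_ℝ
          ≤ (F b - ⟪G a, b⟫_ℝ)
            + ⟪G b - G a, (b - (1 / (2 * K)) • (G b - G a)) - b⟫_ℝ
            + K * ‖(b - (1 / (2 * K)) • (G b - G a)) - b‖ ^ 2 :=
        aux_descent hK hdiff' hlip' b (b - (1 / (2 * K)) • (G b - G a))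
      have h1' : F a - ⟪G a, a⟫_ℝ ≤ F (b - (1 / (2 * K)) • (G b - G a))
          - ⟪G a, b - (1 / (2 * K)) • (G b - G a)⟫_ℝ := by
        simpa using h1
      have hzb : (b - (1 / (2 * K)) • (G b - G a)) - b = -((1 / (2 * K)) • (G b - G a)) := by
        abel
      rw [hzb] at h2
      rw [inner_neg_right, real_inner_smul_right, real_inner_self_eq_norm_sq] at h2
      rw [norm_neg, norm_smul, mul_pow, Real.norm_eq_abs, sq_abs] at h2
      have hsplit : ⟪G a, b - a⟫_ℝ = ⟪G a, b⟫_ℝ - ⟪G a, a⟫_ℝ := inner_sub_right _ _ _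
      have e2 : K * ((1 / (2 * K)) ^ 2 * ‖G b - G a‖ ^ 2)
          = 1 / (4 * K) * ‖G b - G a‖ ^ 2 := by
        field_simp
        ring
      have e1 : 1 / (2 * K) * ‖G b - G a‖ ^ 2 - 1 / (4 * K) * ‖G b - G a‖ ^ 2
          = 1 / (4 * K) * ‖G b - G a‖ ^ 2 := by
        field_simp
        ring
      linarith [h1', h2, e1, e2, hsplit]
    have k1 := key v w
    have k2 := key w v
    have e4 : ⟪G w, v - w⟫_ℝ = -⟪G w, w - v⟫_ℝ := by
      rw [show v - w = -(w - v) by abel, inner_neg_right]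
    have e5 : ‖G v - G w‖ = ‖G w - G v‖ := norm_sub_rev _ _
    rw [e4, e5] at k2
    have e6 : ⟪G w - G v, w - v⟫_ℝ = ⟪G w, w - v⟫_ℝ - ⟪G v, w - v⟫_ℝ := inner_sub_left _ _ _
    have hsum : 1 / (4 * K) * ‖G w - G v‖ ^ 2 + 1 / (4 * K) * ‖G w - G v‖ ^ 2
        ≤ ⟪G w - G v, w - v⟫_ℝ := by
      rw [e6]; linarith [k1, k2]
    calc ‖G w - G v‖ ^ 2
        = 2 * K * (1 / (4 * K) * ‖G w - G v‖ ^ 2 + 1 / (4 * K) * ‖G w - G v‖ ^ 2) := by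
          field_simp
          ring
      _ ≤ 2 * K * ⟪G w - G v, w - v⟫_ℝ :=
          mul_le_mul_of_nonneg_left hsum (by positivity)

private lemma aux_strong_mono (gg : H → ℝ) (μ : ℝ) (hsc : StrongConvexOn Set.univ μ gg)
    (G : H → H) (hdiff : ∀ u, HasGradientAt gg (G u) u) (p q : H) :
    μ * ‖p - q‖ ^ 2 ≤ ⟪G p - G q, p - q⟫_ℝ := by
  have key : ∀ a b : H, ⟪G a, b - a⟫_ℝ ≤ gg b - gg a - μ / 2 * ‖b - a‖ ^ 2 := by
    intro a b
    have hda : HasDerivAt (fun t : ℝ => gg (a + t • (b - a))) ⟪G a, b - a⟫_ℝ 0 := by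
      have h' : HasGradientAt gg (G a) (a + (0 : ℝ) • (b - a)) := by simpa using hdiff a
      exact aux_line_deriv h'
    have hslope : Tendsto (slope (fun t : ℝ => gg (a + t • (b - a))) 0) (𝓝[>] 0)
        (𝓝 ⟪G a, b - a⟫_ℝ) := by
      have h1 := hasDerivAt_iff_tendsto_slope.mp hda
      exact h1.mono_left (nhdsWithin_mono 0 fun t ht =>
        Set.mem_compl_singleton_iff.mpr (ne_of_gt ht))
    have hRHS : Tendsto (fun t : ℝ => gg b - gg a - (1 - t) * (μ / 2 * ‖b - a‖ ^ 2)) (𝓝[>] 0)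
        (𝓝 (gg b - gg a - μ / 2 * ‖b - a‖ ^ 2)) := by
      have hc : Continuous fun t : ℝ => gg b - gg a - (1 - t) * (μ / 2 * ‖b - a‖ ^ 2) := by
        continuity
      have h := (hc.tendsto 0).mono_left (nhdsWithin_le_nhds : 𝓝[>] (0:ℝ) ≤ 𝓝 0)
      simpa using h
    have hle : ∀ᶠ t in 𝓝[>] (0 : ℝ), slope (fun t : ℝ => gg (a + t • (b - a))) 0 t
        ≤ gg b - gg a - (1 - t) * (μ / 2 * ‖b - a‖ ^ 2) := by
      filter_upwards [Ioo_mem_nhdsGT_of_mem (Set.left_mem_Ico.mpr one_pos)] with t ht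
      have hco := hsc.2 (Set.mem_univ b) (Set.mem_univ a) ht.1.le
        (by linarith [ht.2] : (0:ℝ) ≤ 1 - t) (by ring)
      have hptq : t • b + (1 - t) • a = a + t • (b - a) := by module
      rw [hptq] at hco
      simp only [smul_eq_mul] at hco
      rw [slope_def_field]
      simp only [zero_smul, add_zero, sub_zero]
      rw [div_le_iff₀ ht.1]
      nlinarith [hco]
    exact le_of_tendsto_of_tendsto hslope hRHS hle
  have k1 := key q p
  have k2 := key p q
  have e1 : ⟪G p, q - p⟫_ℝ = -⟪G p, p - q⟫_ℝ := by
    rw [show q - p = -(p - q) by abel, inner_neg_right]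
  have e2 : ‖q - p‖ = ‖p - q‖ := norm_sub_rev _ _
  rw [e1, e2] at k2
  rw [inner_sub_left]
  linarith [k1, k2]

private lemma aux_section {E : Type*} [NormedAddCommGroup E] [InnerProductSpace ℝ E]
    (f : E → H → ℝ) (l : ℝ) (hf : ContDiff ℝ 1 (Function.uncurry f))
    (hlip : ∀ p q : E × H, ‖fderiv ℝ (Function.uncurry f) p
      - fderiv ℝ (Function.uncurry f) q‖ ≤ l * ‖p - q‖)
    (x : E) :
    (∀ u, HasGradientAt (f x) (gradient (f x) u) u) ∧
      ∀ p q : H, ‖gradient (f x) p - gradient (f x) q‖ ≤ l * ‖p - q‖ := by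
  have hdf : Differentiable ℝ (Function.uncurry f) := hf.differentiable one_ne_zero
  have hsec : ∀ u : H, DifferentiableAt ℝ (f x) u := by
    intro u
    have h1 : DifferentiableAt ℝ (Function.uncurry f) (x, u) := hdf _
    have h2 : DifferentiableAt ℝ (fun u : H => ((x : E), u)) u :=
      DifferentiableAt.prodMk (differentiableAt_const x) differentiableAt_id
    exact h1.comp u h2
  have hfder : ∀ u : H, HasFDerivAt (f x)
      ((fderiv ℝ (Function.uncurry f) (x, u)).comp (ContinuousLinearMap.inr ℝ E H)) u := by
    intro u
    have h1 : HasFDerivAt (Function.uncurry f) (fderiv ℝ (Function.uncurry f) (x, u)) (x, u) :=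
      (hdf _).hasFDerivAt
    have h2 : HasFDerivAt (fun u : H => ((x : E), u)) (ContinuousLinearMap.inr ℝ E H) u :=
      HasFDerivAt.prodMk (hasFDerivAt_const x u) (hasFDerivAt_id u)
    exact h1.comp u h2
  refine ⟨fun u => (hsec u).hasGradientAt, fun p q => ?_⟩
  have hgp : gradient (f x) p = (InnerProductSpace.toDual ℝ H).symm
      ((fderiv ℝ (Function.uncurry f) (x, p)).comp (ContinuousLinearMap.inr ℝ E H)) :=
    ((hfder p).hasGradientAt).gradient
  have hgq : gradient (f x) q = (InnerProductSpace.toDual ℝ H).symm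
      ((fderiv ℝ (Function.uncurry f) (x, q)).comp (ContinuousLinearMap.inr ℝ E H)) :=
    ((hfder q).hasGradientAt).gradient
  rw [hgp, hgq, ← map_sub, ← ContinuousLinearMap.sub_comp]
  rw [LinearIsometryEquiv.norm_map]
  have hinr : ‖(ContinuousLinearMap.inr ℝ E H : H →L[ℝ] E × H)‖ ≤ 1 := by
    refine ContinuousLinearMap.opNorm_le_bound _ zero_le_one fun h => ?_
    simp [Prod.norm_def, norm_nonneg]
  have hcomp := ContinuousLinearMap.opNorm_comp_le
    (fderiv ℝ (Function.uncurry f) (x, p) - fderiv ℝ (Function.uncurry f) (x, q))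
    (ContinuousLinearMap.inr ℝ E H)
  have hpq : ‖((x, p) : E × H) - (x, q)‖ = ‖p - q‖ := by
    simp [Prod.norm_def, Prod.mk_sub_mk, norm_nonneg]
  have hl := hlip (x, p) (x, q)
  rw [hpq] at hl
  calc ‖((fderiv ℝ (Function.uncurry f) (x, p)
        - fderiv ℝ (Function.uncurry f) (x, q)).comp (ContinuousLinearMap.inr ℝ E H))‖
      ≤ ‖fderiv ℝ (Function.uncurry f) (x, p) - fderiv ℝ (Function.uncurry f) (x, q)‖
          * ‖(ContinuousLinearMap.inr ℝ E H : H →L[ℝ] E × H)‖ := hcomp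
    _ ≤ ‖fderiv ℝ (Function.uncurry f) (x, p) - fderiv ℝ (Function.uncurry f) (x, q)‖ * 1 :=
        mul_le_mul_of_nonneg_left hinr (by positivity)
    _ ≤ l * ‖p - q‖ := by rw [mul_one]; exact hl

end AuxGradient

set_option maxHeartbeats 1600000 in
/-- one step of the noisy y-update of RF²SA contracts toward the
Lagrangian minimizer: with β = λα and α l_{f,1} + β l_{g,1} ≤ 1/4,
E‖y⁺ − y*_λ(x)‖² ≤ (1 − 3μ_gβ/4)‖y − y*_λ(x)‖² + α²σ_f² + β²σ_g². -/
theorem noisy_y_update_contraction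
    {E H : Type*}
    [NormedAddCommGroup E] [InnerProductSpace ℝ E] [FiniteDimensional ℝ E]
    [NormedAddCommGroup H] [InnerProductSpace ℝ H] [FiniteDimensional ℝ H]
    [MeasurableSpace H] [BorelSpace H]
    {Ω : Type*} [MeasurableSpace Ω] (P : Measure Ω) [IsProbabilityMeasure P]
    (f g : E → H → ℝ) (lf1 lg1 μg : ℝ)
    (hf1 : ContDiff ℝ 1 (Function.uncurry f))
    (hf_lip : ∀ p q : E × H,
      ‖fderiv ℝ (Function.uncurry f) p - fderiv ℝ (Function.uncurry f) q‖ ≤ lf1 * ‖p - q‖)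
    (hg2 : ContDiff ℝ 2 (Function.uncurry g))
    (hg_lip : ∀ p q : E × H,
      ‖fderiv ℝ (Function.uncurry g) p - fderiv ℝ (Function.uncurry g) q‖ ≤ lg1 * ‖p - q‖)
    (hμg : 0 < μg)
    (hgsc : ∀ x, StrongConvexOn Set.univ μg (g x))
    (ystar : E → H)
    (hystar : ∀ x, IsMinOn (g x) Set.univ (ystar x))
    (hystar_uniq : ∀ x y, IsMinOn (g x) Set.univ y → y = ystar x)
    (ylam : ℝ → E → H)
    (hylam : ∀ lam x, 2 * lf1 / μg ≤ lam →
      IsMinOn (fun y => f x y + lam * (g x y - g x (ystar x))) Set.univ (ylam lam x))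
    (hylam_uniq : ∀ lam x y, 2 * lf1 / μg ≤ lam →
      IsMinOn (fun y => f x y + lam * (g x y - g x (ystar x))) Set.univ y → y = ylam lam x)
    (x : E) (lam : ℝ) (hlam : 2 * lf1 / μg ≤ lam)
    (α : ℝ) (hα : 0 < α) (hstep : α * lf1 + lam * α * lg1 ≤ 1 / 4)
    (y : H) (ζf ζg : Ω → H) (σf σg : ℝ)
    (hindep : ProbabilityTheory.IndepFun ζf ζg P)
    (hζf_int : Integrable ζf P) (hζf_mean : ∫ ω, ζf ω ∂P = 0)
    (hζf_sq_int : Integrable (fun ω => ‖ζf ω‖ ^ 2) P)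
    (hζf_var : ∫ ω, ‖ζf ω‖ ^ 2 ∂P ≤ σf ^ 2)
    (hζg_int : Integrable ζg P) (hζg_mean : ∫ ω, ζg ω ∂P = 0)
    (hζg_sq_int : Integrable (fun ω => ‖ζg ω‖ ^ 2) P)
    (hζg_var : ∫ ω, ‖ζg ω‖ ^ 2 ∂P ≤ σg ^ 2) :
    ∫ ω, ‖y - α • (gradient (f x) y + ζf ω + lam • (gradient (g x) y + ζg ω))
            - ylam lam x‖ ^ 2 ∂P
      ≤ (1 - 3 * μg * (lam * α) / 4) * ‖y - ylam lam x‖ ^ 2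
          + α ^ 2 * σf ^ 2 + (lam * α) ^ 2 * σg ^ 2 := by
  rcases subsingleton_or_nontrivial H with hsub | hnt
  · -- degenerate case: H is trivial
    have hy0 : y - ylam lam x = 0 := Subsingleton.elim _ _
    have h1 : ∀ ω, y - α • (gradient (f x) y + ζf ω + lam • (gradient (g x) y + ζg ω))
        - ylam lam x = 0 := fun ω => Subsingleton.elim _ _
    have hσf : (0:ℝ) ≤ σf ^ 2 := le_trans (integral_nonneg fun ω => sq_nonneg _) hζf_var
    have hσg : (0:ℝ) ≤ σg ^ 2 := le_trans (integral_nonneg fun ω => sq_nonneg _) hζg_var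
    have hz : ∫ ω, ‖y - α • (gradient (f x) y + ζf ω + lam • (gradient (g x) y + ζg ω))
        - ylam lam x‖ ^ 2 ∂P = 0 := by
      rw [show (fun ω => ‖y - α • (gradient (f x) y + ζf ω + lam • (gradient (g x) y + ζg ω))
          - ylam lam x‖ ^ 2) = fun _ => (0:ℝ) from funext fun ω => by rw [h1 ω]; simp]
      simp
    rw [hz, hy0, norm_zero]
    have b1 := mul_nonneg (sq_nonneg α) hσf
    have b2 := mul_nonneg (sq_nonneg (lam * α)) hσg
    nlinarith
  -- main case
  obtain ⟨hGfgrad, hGf_lip⟩ := aux_section f lf1 hf1 hf_lip x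
  obtain ⟨hGggrad, hGg_lip⟩ := aux_section g lg1 (hg2.of_le (by norm_num)) hg_lip x
  have hGgmono : ∀ p q : H,
      μg * ‖p - q‖ ^ 2 ≤ ⟪gradient (g x) p - gradient (g x) q, p - q⟫_ℝ :=
    aux_strong_mono (g x) μg (hgsc x) _ hGggrad
  -- basic scalar facts
  obtain ⟨h₀, h₀ne⟩ := exists_ne (0 : H)
  have h₀pos : (0:ℝ) < ‖h₀‖ := norm_pos_iff.mpr h₀ne
  have hlf0 : 0 ≤ lf1 := by
    have h1 := hGf_lip h₀ 0
    have h2 : (0:ℝ) ≤ ‖gradient (f x) h₀ - gradient (f x) 0‖ := norm_nonneg _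
    rw [sub_zero] at h1
    nlinarith
  have hμlg : μg ≤ lg1 := by
    have h1 := hGgmono h₀ 0
    have h2 := real_inner_le_norm (gradient (g x) h₀ - gradient (g x) 0) (h₀ - 0)
    have h3 := hGg_lip h₀ 0
    rw [sub_zero] at h1 h2 h3
    rw [pow_two] at h1
    nlinarith [mul_le_mul_of_nonneg_right h3 (norm_nonneg h₀), mul_pos h₀pos h₀pos]
  have hlg0 : 0 ≤ lg1 := le_trans hμg.le hμlg
  have hlam0 : 0 ≤ lam := le_trans (div_nonneg (by linarith) hμg.le) hlam
  have h2lf : 2 * lf1 ≤ lam * μg := (div_le_iff₀ hμg).mp hlam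
  set Y := ylam lam x with hY
  -- the gradient of the Lagrangian vanishes at Y
  have hmin : IsMinOn (fun u => f x u + lam * (g x u - g x (ystar x))) Set.univ Y :=
    hylam lam x hlam
  have hloc : IsLocalMin (fun u => f x u + lam * (g x u - g x (ystar x))) Y :=
    hmin.isLocalMin univ_mem
  have hgradL : HasGradientAt (fun u => f x u + lam * (g x u - g x (ystar x)))
      (gradient (f x) Y + lam • gradient (g x) Y) Y := by
    have h2 : HasGradientAt (fun u => g x u - g x (ystar x)) (gradient (g x) Y - 0) Y :=
      aux_grad_sub (hGggrad Y) (hasGradientAt_const _ _)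
    have h4 := aux_grad_add (hGfgrad Y) (aux_grad_const_mul lam h2)
    simpa using h4
  have hzero : gradient (f x) Y + lam • gradient (g x) Y = 0 := by
    have h5 := hloc.hasFDerivAt_eq_zero hgradL.hasFDerivAt
    have h6 := congrArg (InnerProductSpace.toDual ℝ H).symm h5
    simpa [gradient] using h6
  set m := lam * μg - lf1 with hm
  have hm0 : 0 ≤ m := by rw [hm]; linarith
  set K := lf1 + lam * lg1 + m with hK
  have hK0 : 0 ≤ K := by
    rw [hK]
    have := mul_nonneg hlam0 hlg0
    linarith
  clear_value Y m K
  -- the auxiliary convex function Φ := f + λ g - (m/2)‖·‖² and its gradient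
  have hΦdiff : ∀ u : H, HasGradientAt (fun v => f x v + lam * g x v - m / 2 * ‖v‖ ^ 2)
      (gradient (f x) u + lam • gradient (g x) u - m • u) u := by
    intro u
    have h1 := aux_grad_add (hGfgrad u) (aux_grad_const_mul lam (hGggrad u))
    have h2 := aux_grad_const_mul (m / 2) (aux_grad_normsq u)
    have h3 := aux_grad_sub h1 h2
    have he : (m / 2) • ((2:ℝ) • u) = m • u := by
      rw [smul_smul]
      norm_num
    rw [he] at h3
    exact h3
  have hΦmono : ∀ p q : H, 0 ≤ ⟪(gradient (f x) p + lam • gradient (g x) p - m • p)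
      - (gradient (f x) q + lam • gradient (g x) q - m • q), p - q⟫_ℝ := by
    intro p q
    have he : (gradient (f x) p + lam • gradient (g x) p - m • p)
        - (gradient (f x) q + lam • gradient (g x) q - m • q)
        = (gradient (f x) p - gradient (f x) q)
          + (lam • (gradient (g x) p - gradient (g x) q) - m • (p - q)) := by module
    have hfull : ⟪(gradient (f x) p + lam • gradient (g x) p - m • p)
        - (gradient (f x) q + lam • gradient (g x) q - m • q), p - q⟫_ℝ
        = ⟪gradient (f x) p - gradient (f x) q, p - q⟫_ℝ
          + lam * ⟪gradient (g x) p - gradient (g x) q, p - q⟫_ℝ - m * ‖p - q‖ ^ 2 := by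
      have hq : (‖p - q‖:ℝ) ^ 2 = ⟪p, p - q⟫_ℝ - ⟪q, p - q⟫_ℝ := by
        rw [← inner_sub_left]; exact (real_inner_self_eq_norm_sq _).symm
      simp only [inner_sub_left, inner_add_left, real_inner_smul_left, hq]
      ring
    rw [hfull]
    have h1 : |⟪gradient (f x) p - gradient (f x) q, p - q⟫_ℝ| ≤ (lf1 * ‖p - q‖) * ‖p - q‖ :=
      le_trans (abs_real_inner_le_norm _ _)
        (mul_le_mul_of_nonneg_right (hGf_lip p q) (norm_nonneg _))
    have h3 := abs_le.mp h1
    have h4 : lam * (μg * ‖p - q‖ ^ 2)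
        ≤ lam * ⟪gradient (g x) p - gradient (g x) q, p - q⟫_ℝ :=
      mul_le_mul_of_nonneg_left (hGgmono p q) hlam0
    have h5 : ‖p - q‖ ^ 2 = ‖p - q‖ * ‖p - q‖ := pow_two _
    rw [hm]
    nlinarith [h3.1, h4]
  have hΦlip : ∀ p q : H, ‖(gradient (f x) p + lam • gradient (g x) p - m • p)
      - (gradient (f x) q + lam • gradient (g x) q - m • q)‖ ≤ K * ‖p - q‖ := by
    intro p q
    have he : (gradient (f x) p + lam • gradient (g x) p - m • p)
        - (gradient (f x) q + lam • gradient (g x) q - m • q)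
        = (gradient (f x) p - gradient (f x) q)
          + (lam • (gradient (g x) p - gradient (g x) q) - m • (p - q)) := by module
    rw [he]
    have t1 := norm_add_le (gradient (f x) p - gradient (f x) q)
      (lam • (gradient (g x) p - gradient (g x) q) - m • (p - q))
    have t2 := norm_sub_le (lam • (gradient (g x) p - gradient (g x) q)) (m • (p - q))
    have t3 : ‖lam • (gradient (g x) p - gradient (g x) q)‖
        = lam * ‖gradient (g x) p - gradient (g x) q‖ := by
      rw [norm_smul, Real.norm_eq_abs, abs_of_nonneg hlam0]
    have t4 : ‖m • (p - q)‖ = m * ‖p - q‖ := by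
      rw [norm_smul, Real.norm_eq_abs, abs_of_nonneg hm0]
    have t5 := hGf_lip p q
    have t6 := mul_le_mul_of_nonneg_left (hGg_lip p q) hlam0
    rw [hK]
    linarith only [t1, t2, t3, t4, t5, t6]
  -- cocoercivity and monotonicity at the two points of interest
  set s := y - Y with hs
  set D := gradient (f x) y + lam • gradient (g x) y - m • s with hD
  clear_value s D
  have hPhiD : (gradient (f x) y + lam • gradient (g x) y - m • y)
      - (gradient (f x) Y + lam • gradient (g x) Y - m • Y) = D := by
    rw [hzero, hD, hs]
    module
  have hDs : (0:ℝ) ≤ ⟪D, s⟫_ℝ := by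
    have h := hΦmono y Y
    rw [hPhiD, ← hs] at h
    exact h
  have hcoco : ‖D‖ ^ 2 ≤ 2 * K * ⟪D, s⟫_ℝ := by
    have h := aux_coco (F := fun v => f x v + lam * g x v - m / 2 * ‖v‖ ^ 2)
      (G := fun u => gradient (f x) u + lam • gradient (g x) u - m • u)
      hK0 hΦdiff hΦmono hΦlip Y y
    rw [hPhiD, ← hs] at h
    exact h
  -- step-size arithmetic
  have hαm_le : α * m ≤ 1 / 4 := by
    have h1 : α * lam * μg ≤ α * lam * lg1 :=
      mul_le_mul_of_nonneg_left hμlg (mul_nonneg hα.le hlam0)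
    have h2 : 0 ≤ α * lf1 := mul_nonneg hα.le hlf0
    rw [hm]
    linarith only [h1, h2, hstep]
  have hαm0 : 0 ≤ α * m := mul_nonneg hα.le hm0
  have hαK : α * m + α * K ≤ 3 / 4 := by
    have h2 : 0 ≤ α * lf1 := mul_nonneg hα.le hlf0
    rw [hK]
    linarith only [hαm_le, hstep, h2]
  have hPle : lam * α * μg ≤ 2 * (α * m) := by
    rw [hm]
    linarith only [mul_le_mul_of_nonneg_left h2lf hα.le]
  have hP0 : 0 ≤ lam * α * μg := mul_nonneg (mul_nonneg hlam0 hα.le) hμg.le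
  -- deterministic contraction
  set u := y - α • (gradient (f x) y + lam • gradient (g x) y) - Y with hu
  clear_value u
  have hu2 : u = (1 - α * m) • s - α • D := by
    rw [hu, hD, hs]
    module
  have hnormu : ‖u‖ ^ 2
      = (1 - α * m) ^ 2 * ‖s‖ ^ 2 - 2 * ((1 - α * m) * (α * ⟪s, D⟫_ℝ)) + α ^ 2 * ‖D‖ ^ 2 := by
    rw [hu2, norm_sub_sq_real, real_inner_smul_left, real_inner_smul_right]
    simp only [norm_smul, Real.norm_eq_abs, mul_pow, sq_abs]
    try ring
  have hfac : (1 - α * m) ^ 2 ≤ 1 - 3 * μg * (lam * α) / 4 := by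
    have hsq : (α * m) * (α * m) ≤ (1/4) * (α * m) := mul_le_mul_of_nonneg_right hαm_le hαm0
    linarith only [hsq, hPle, hαm0]
  have hmid : 0 ≤ (1 - α * m) * α - α ^ 2 * K := by
    have h := mul_nonneg hα.le (show (0:ℝ) ≤ 1 - (α * m + α * K) by linarith only [hαK])
    linarith only [h]
  have hdet : ‖u‖ ^ 2 ≤ (1 - 3 * μg * (lam * α) / 4) * ‖s‖ ^ 2 := by
    rw [hnormu]
    have h1 : α ^ 2 * ‖D‖ ^ 2 ≤ α ^ 2 * (2 * K * ⟪D, s⟫_ℝ) :=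
      mul_le_mul_of_nonneg_left hcoco (sq_nonneg α)
    have h2 : ⟪s, D⟫_ℝ = ⟪D, s⟫_ℝ := real_inner_comm _ _
    have h3 := mul_le_mul_of_nonneg_right hfac (sq_nonneg ‖s‖)
    rw [h2]
    linarith only [mul_nonneg hmid hDs, h1, h3]
  -- probabilistic expansion
  have hptv : ∀ ω, y - α • (gradient (f x) y + ζf ω + lam • (gradient (g x) y + ζg ω)) - Y
      = u - (α • ζf ω + (lam * α) • ζg ω) := by
    intro ω
    rw [hu]
    module
  have hpt : ∀ ω, ‖y - α • (gradient (f x) y + ζf ω + lam • (gradient (g x) y + ζg ω)) - Y‖ ^ 2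
      = (‖u‖ ^ 2 - 2 * α * ⟪u, ζf ω⟫_ℝ - 2 * (lam * α) * ⟪u, ζg ω⟫_ℝ)
        + (α ^ 2 * ‖ζf ω‖ ^ 2 + (2 * (α * (lam * α))) * ⟪ζf ω, ζg ω⟫_ℝ
            + (lam * α) ^ 2 * ‖ζg ω‖ ^ 2) := by
    intro ω
    rw [hptv ω, norm_sub_sq_real, norm_add_sq_real]
    simp only [inner_add_right, real_inner_smul_left, real_inner_smul_right, norm_smul,
      Real.norm_eq_abs, mul_pow, sq_abs]
    ring
  have Ia : Integrable (fun ω => ⟪u, ζf ω⟫_ℝ) P := hζf_int.const_inner u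
  have Ib : Integrable (fun ω => ⟪u, ζg ω⟫_ℝ) P := hζg_int.const_inner u
  have Icross : Integrable (fun ω => ⟪ζf ω, ζg ω⟫_ℝ) P := by
    have hms : AEStronglyMeasurable (fun ω => ⟪ζf ω, ζg ω⟫_ℝ) P :=
      hζf_int.aestronglyMeasurable.inner hζg_int.aestronglyMeasurable
    refine ((hζf_sq_int.add hζg_sq_int).const_mul (1 / 2)).mono' hms ?_
    filter_upwards with ω
    have h1 := abs_real_inner_le_norm (ζf ω) (ζg ω)
    show |⟪ζf ω, ζg ω⟫_ℝ| ≤ 1 / 2 * (‖ζf ω‖ ^ 2 + ‖ζg ω‖ ^ 2)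
    nlinarith [sq_nonneg (‖ζf ω‖ - ‖ζg ω‖), abs_nonneg ⟪ζf ω, ζg ω⟫_ℝ]
  have Ia2 : Integrable (fun ω => 2 * α * ⟪u, ζf ω⟫_ℝ) P := Ia.const_mul _
  have Ib2 : Integrable (fun ω => 2 * (lam * α) * ⟪u, ζg ω⟫_ℝ) P := Ib.const_mul _
  have Ic2 : Integrable (fun ω => (2 * (α * (lam * α))) * ⟪ζf ω, ζg ω⟫_ℝ) P :=
    Icross.const_mul _
  have If2 : Integrable (fun ω => α ^ 2 * ‖ζf ω‖ ^ 2) P := hζf_sq_int.const_mul _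
  have Ig2 : Integrable (fun ω => (lam * α) ^ 2 * ‖ζg ω‖ ^ 2) P := hζg_sq_int.const_mul _
  have Iconst : Integrable (fun _ : Ω => ‖u‖ ^ 2) P := integrable_const _
  have Isub1 : Integrable (fun ω => ‖u‖ ^ 2 - 2 * α * ⟪u, ζf ω⟫_ℝ) P := Iconst.sub Ia2
  have I1 : Integrable (fun ω => ‖u‖ ^ 2 - 2 * α * ⟪u, ζf ω⟫_ℝ
      - 2 * (lam * α) * ⟪u, ζg ω⟫_ℝ) P := Isub1.sub Ib2
  have Iadd1 : Integrable (fun ω => α ^ 2 * ‖ζf ω‖ ^ 2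
      + (2 * (α * (lam * α))) * ⟪ζf ω, ζg ω⟫_ℝ) P := If2.add Ic2
  have I2 : Integrable (fun ω => α ^ 2 * ‖ζf ω‖ ^ 2
      + (2 * (α * (lam * α))) * ⟪ζf ω, ζg ω⟫_ℝ + (lam * α) ^ 2 * ‖ζg ω‖ ^ 2) P :=
    Iadd1.add Ig2
  have hEf : ∫ ω, ⟪u, ζf ω⟫_ℝ ∂P = 0 := by
    rw [integral_inner hζf_int, hζf_mean, inner_zero_right]
  have hEg : ∫ ω, ⟪u, ζg ω⟫_ℝ ∂P = 0 := by
    rw [integral_inner hζg_int, hζg_mean, inner_zero_right]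
  have hEc : ∫ ω, ⟪ζf ω, ζg ω⟫_ℝ ∂P = 0 := by
    classical
    set b := stdOrthonormalBasis ℝ H with hb
    have hrw : ∀ ω, ⟪ζf ω, ζg ω⟫_ℝ = ∑ i, ⟪b i, ζf ω⟫_ℝ * ⟪b i, ζg ω⟫_ℝ := by
      intro ω
      rw [← OrthonormalBasis.sum_inner_mul_inner b (ζf ω) (ζg ω)]
      exact Finset.sum_congr rfl fun i _ => by rw [real_inner_comm (ζf ω) (b i)]
    have hmeasi : ∀ i, Measurable (fun v : H => ⟪b i, v⟫_ℝ) := fun i =>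
      (Continuous.inner continuous_const continuous_id).measurable
    have hint : ∀ i, Integrable (fun ω => ⟪b i, ζf ω⟫_ℝ * ⟪b i, ζg ω⟫_ℝ) P := fun i =>
      (hindep.comp (hmeasi i) (hmeasi i)).integrable_mul
        (hζf_int.const_inner _) (hζg_int.const_inner _)
    calc ∫ ω, ⟪ζf ω, ζg ω⟫_ℝ ∂P
        = ∫ ω, ∑ i, ⟪b i, ζf ω⟫_ℝ * ⟪b i, ζg ω⟫_ℝ ∂P := integral_congr_ae (ae_of_all _ hrw)
      _ = ∑ i, ∫ ω, ⟪b i, ζf ω⟫_ℝ * ⟪b i, ζg ω⟫_ℝ ∂P :=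
          integral_finset_sum _ fun i _ => hint i
      _ = ∑ i, (∫ ω, ⟪b i, ζf ω⟫_ℝ ∂P) * ∫ ω, ⟪b i, ζg ω⟫_ℝ ∂P :=
          Finset.sum_congr rfl fun i _ =>
            ProbabilityTheory.IndepFun.integral_fun_mul_eq_mul_integral
              (hindep.comp (hmeasi i) (hmeasi i))
              (hζf_int.const_inner _).aestronglyMeasurable
              (hζg_int.const_inner _).aestronglyMeasurable
      _ = 0 := by
          refine Finset.sum_eq_zero fun i _ => ?_
          rw [integral_inner hζf_int, hζf_mean, inner_zero_right, zero_mul]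
  calc ∫ ω, ‖y - α • (gradient (f x) y + ζf ω + lam • (gradient (g x) y + ζg ω)) - Y‖ ^ 2 ∂P
      = ∫ ω, ((‖u‖ ^ 2 - 2 * α * ⟪u, ζf ω⟫_ℝ - 2 * (lam * α) * ⟪u, ζg ω⟫_ℝ)
          + (α ^ 2 * ‖ζf ω‖ ^ 2 + (2 * (α * (lam * α))) * ⟪ζf ω, ζg ω⟫_ℝ
              + (lam * α) ^ 2 * ‖ζg ω‖ ^ 2)) ∂P :=
        integral_congr_ae (ae_of_all _ fun ω => hpt ω)
    _ = ((∫ _, (‖u‖ ^ 2 : ℝ) ∂P) - 2 * α * ∫ ω, ⟪u, ζf ω⟫_ℝ ∂P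
          - 2 * (lam * α) * ∫ ω, ⟪u, ζg ω⟫_ℝ ∂P)
        + (α ^ 2 * ∫ ω, ‖ζf ω‖ ^ 2 ∂P
            + (2 * (α * (lam * α))) * ∫ ω, ⟪ζf ω, ζg ω⟫_ℝ ∂P
            + (lam * α) ^ 2 * ∫ ω, ‖ζg ω‖ ^ 2 ∂P) := by
        rw [integral_add I1 I2, integral_sub Isub1 Ib2, integral_sub Iconst Ia2,
          integral_add Iadd1 Ig2, integral_add If2 Ic2,
          integral_const_mul, integral_const_mul, integral_const_mul, integral_const_mul,
          integral_const_mul]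
    _ = ‖u‖ ^ 2 + (α ^ 2 * ∫ ω, ‖ζf ω‖ ^ 2 ∂P + (lam * α) ^ 2 * ∫ ω, ‖ζg ω‖ ^ 2 ∂P) := by
        rw [hEf, hEg, hEc, integral_const, probReal_univ]
        simp
    _ ≤ (1 - 3 * μg * (lam * α) / 4) * ‖s‖ ^ 2 + α ^ 2 * σf ^ 2 + (lam * α) ^ 2 * σg ^ 2 := by
        have b1 := mul_le_mul_of_nonneg_left hζf_var (sq_nonneg α)
        have b2 := mul_le_mul_of_nonneg_left hζg_var (sq_nonneg (lam * α))
        linarith [hdet]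
end
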